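/- arXiv:2301.01992 — 6 statements merged into one kernel-verified Lean document; each statement's English description precedes it below -/
import Mathlib

section
/- Let p > 2 with Hölder conjugate p' = p/(p−1). Let V satisfy (H1) with constants 0 < A < B and E* = V(0), assume V''(w) > 0 for all w ∈ (0,B), and assume V'(w)² − p'·V(w)·V''(w) > 0 for all w ∈ (0,A) ∪ (A,B). Then the minimal-period function E ↦ T(E) is strictly increasing on (0, E*). -/
open Set MeasureTheory intervalIntegral

/-- Approximate an interval integral from inside by integrals over compact subintervals. -/
lemma CW_exists_compact_approx {f : ℝ → ℝ} {α β : ℝ} (hαβ : α < β)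
    (hf : IntervalIntegrable f volume α β) {ε : ℝ} (hε : 0 < ε) :
    ∃ a b : ℝ, α < a ∧ a < b ∧ b < β ∧ (∫ x in α..β, f x) - ε < ∫ x in a..b, f x := by
  have hβα : 0 < β - α := sub_pos.2 hαβ
  set d : ℕ → ℝ := fun n => (β - α) / (n + 3) with hd
  have hdpos : ∀ n : ℕ, 0 < d n := fun n => div_pos hβα (by positivity)
  have hdanti : ∀ m n : ℕ, m ≤ n → d n ≤ d m := by
    intro m n hmn
    apply div_le_div_of_nonneg_left hβα.le (by positivity)
    have : (m : ℝ) ≤ n := Nat.cast_le.2 hmn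
    linarith
  set s : ℕ → Set ℝ := fun n => Icc (α + d n) (β - d n) with hs
  have hmeas : ∀ n, MeasurableSet (s n) := fun n => measurableSet_Icc
  have hmono : Monotone s := by
    intro m n hmn
    exact Icc_subset_Icc (by linarith [hdanti m n hmn]) (by linarith [hdanti m n hmn])
  have hunion : (⋃ n, s n) = Ioo α β := by
    apply Subset.antisymm
    · refine iUnion_subset fun n => ?_
      intro x hx
      exact ⟨lt_of_lt_of_le (by linarith [hdpos n]) hx.1,
        lt_of_le_of_lt hx.2 (by linarith [hdpos n])⟩
    · intro x hx
      obtain ⟨n, hn⟩ := exists_nat_gt ((β - α) / min (x - α) (β - x))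
      have hmin : 0 < min (x - α) (β - x) := lt_min (by linarith [hx.1]) (by linarith [hx.2])
      have hdn : d n < min (x - α) (β - x) := by
        rw [hd]
        rw [div_lt_iff₀ (by positivity)]
        rw [div_lt_iff₀ hmin] at hn
        nlinarith [hmin, hn]
      refine mem_iUnion.2 ⟨n, ?_⟩
      constructor
      · have := lt_min_iff.1 hdn
        linarith [this.1]
      · have := lt_min_iff.1 hdn
        linarith [this.2]
  have hfi : IntegrableOn f (⋃ n, s n) volume := by
    rw [hunion]
    exact ((intervalIntegrable_iff_integrableOn_Ioc_of_le hαβ.le).1 hf).mono_set Ioo_subset_Ioc_self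
  have htend := tendsto_setIntegral_of_monotone hmeas hmono hfi
  have hval : (∫ x in ⋃ n, s n, f x) = ∫ x in α..β, f x := by
    rw [hunion, intervalIntegral.integral_of_le hαβ.le, integral_Ioc_eq_integral_Ioo]
  rw [hval] at htend
  have hev1 : ∀ᶠ n : ℕ in Filter.atTop, |(∫ x in s n, f x) - ∫ x in α..β, f x| < ε := by
    have := Metric.tendsto_nhds.1 htend ε hε
    simpa [Real.dist_eq] using this
  have hev2 : ∀ᶠ n : ℕ in Filter.atTop, d n < (β - α) / 2 := by
    obtain ⟨N, hN⟩ := exists_nat_gt ((β - α) / ((β - α) / 2))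
    refine Filter.eventually_atTop.2 ⟨N, fun n hn => ?_⟩
    have h1 : d n ≤ d N := hdanti N n hn
    have h2 : d N < (β - α) / 2 := by
      rw [hd, div_lt_iff₀ (by positivity)]
      rw [div_lt_iff₀ (by positivity)] at hN
      nlinarith
    linarith
  obtain ⟨n, h1, h2⟩ := (hev1.and hev2).exists
  have hab : α + d n < β - d n := by linarith [h2]
  refine ⟨α + d n, β - d n, by linarith [hdpos n], hab, by linarith [hdpos n], ?_⟩
  have : (∫ x in s n, f x) = ∫ x in (α + d n)..(β - d n), f x := by
    rw [intervalIntegral.integral_of_le hab.le, hs]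
    simp only []
    rw [← integral_Icc_eq_integral_Ioc]
  rw [← this]
  have := abs_lt.1 h1
  linarith [this.1]

/-- Integrability with an endpoint singularity at the right endpoint, by rpow domination. -/
lemma CW_integrable_right {f : ℝ → ℝ} {a b C r : ℝ} (hab : a < b) (hr : -1 < r)
    (hcont : ContinuousOn f (Ico a b)) (hbound : ∀ x ∈ Ico a b, |f x| ≤ C * (b - x) ^ r) :
    IntervalIntegrable f volume a b := by
  rw [intervalIntegrable_iff_integrableOn_Ioo_of_le hab.le]
  have hg : IntervalIntegrable (fun x => C * (b - x) ^ r) volume a b := by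
    have h0 : IntervalIntegrable (fun x : ℝ => x ^ r) volume (b - a) (b - b) :=
      intervalIntegrable_rpow' hr
    have h1 := h0.comp_sub_left b
    simp only [sub_sub_cancel] at h1
    exact h1.const_mul C
  have hgi : IntegrableOn (fun x => C * (b - x) ^ r) (Ioo a b) volume :=
    ((intervalIntegrable_iff_integrableOn_Ioc_of_le hab.le).1 hg).mono_set Ioo_subset_Ioc_self
  have hmeas : AEStronglyMeasurable f (volume.restrict (Ioo a b)) :=
    (hcont.mono Ioo_subset_Ico_self).aestronglyMeasurable measurableSet_Ioo
  refine hgi.integrable.mono' hmeas ?_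
  rw [ae_restrict_iff' measurableSet_Ioo]
  exact ae_of_all _ fun x hx => by
    simpa [Real.norm_eq_abs] using hbound x (Ioo_subset_Ico_self hx)

/-- Integrability with an endpoint singularity at the left endpoint, by rpow domination. -/
lemma CW_integrable_left {f : ℝ → ℝ} {a b C r : ℝ} (hab : a < b) (hr : -1 < r)
    (hcont : ContinuousOn f (Ioc a b)) (hbound : ∀ x ∈ Ioc a b, |f x| ≤ C * (x - a) ^ r) :
    IntervalIntegrable f volume a b := by
  rw [intervalIntegrable_iff_integrableOn_Ioo_of_le hab.le]
  have hg : IntervalIntegrable (fun x => C * (x - a) ^ r) volume a b := by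
    have h0 : IntervalIntegrable (fun x : ℝ => x ^ r) volume (a - a) (b - a) :=
      intervalIntegrable_rpow' hr
    have h1 := h0.comp_sub_right a
    simp only [sub_add_cancel] at h1
    exact h1.const_mul C
  have hgi : IntegrableOn (fun x => C * (x - a) ^ r) (Ioo a b) volume :=
    ((intervalIntegrable_iff_integrableOn_Ioc_of_le hab.le).1 hg).mono_set Ioo_subset_Ioc_self
  have hmeas : AEStronglyMeasurable f (volume.restrict (Ioo a b)) :=
    (hcont.mono Ioo_subset_Ioc_self).aestronglyMeasurable measurableSet_Ioo
  refine hgi.integrable.mono' hmeas ?_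
  rw [ae_restrict_iff' measurableSet_Ioo]
  exact ae_of_all _ fun x hx => by
    simpa [Real.norm_eq_abs] using hbound x (Ioo_subset_Ioc_self hx)

/-- Comparison of two singular integrals through a sliding change of variables. -/
lemma CW_compare {F F' ψ ψd : ℝ → ℝ} {α β α' β' : ℝ}
    (hαβ : α < β) (hαβ' : α' < β')
    (hFint : IntervalIntegrable F volume α β)
    (hF'int : IntervalIntegrable F' volume α' β')
    (hFcont : ContinuousOn F (Ioo α β))
    (hF'cont : ContinuousOn F' (Ioo α' β'))
    (hFnn : ∀ x ∈ Ioo α β, 0 ≤ F x)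
    (hF'nn : ∀ x ∈ Icc α' β', 0 ≤ F' x)
    (hψmem : ∀ w ∈ Ioo α β, ψ w ∈ Ioo α' β')
    (hψmono : StrictMonoOn ψ (Ioo α β))
    (hψd : ∀ w ∈ Ioo α β, HasDerivAt ψ (ψd w) w)
    (hψdcont : ContinuousOn ψd (Ioo α β))
    (hcomp : ∀ w ∈ Ioo α β, F w < ψd w * F' (ψ w)) :
    (∫ x in α..β, F x) < ∫ x in α'..β', F' x := by
  set G : ℝ → ℝ := fun w => ψd w * F' (ψ w) with hG
  have hψcont : ContinuousOn ψ (Ioo α β) :=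
    fun w hw => (hψd w hw).continuousAt.continuousWithinAt
  have hGcont : ContinuousOn G (Ioo α β) := by
    apply hψdcont.mul
    exact hF'cont.comp hψcont fun w hw => hψmem w hw
  set a₀ : ℝ := α + (β - α) / 3 with ha₀
  set b₀ : ℝ := α + 2 * (β - α) / 3 with hb₀
  have hαa₀ : α < a₀ := by rw [ha₀]; linarith
  have ha₀b₀ : a₀ < b₀ := by rw [ha₀, hb₀]; linarith
  have hb₀β : b₀ < β := by rw [hb₀]; linarith
  have hIccsub : Icc a₀ b₀ ⊆ Ioo α β := fun x hx => ⟨lt_of_lt_of_le hαa₀ hx.1,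
    lt_of_le_of_lt hx.2 hb₀β⟩
  set δ : ℝ := ∫ x in a₀..b₀, (G x - F x) with hδdef
  have hδpos : 0 < δ := by
    apply intervalIntegral_pos_of_pos_on
    · apply ContinuousOn.intervalIntegrable
      rw [uIcc_of_le ha₀b₀.le]
      exact (hGcont.sub hFcont).mono hIccsub
    · intro x hx
      have hx' : x ∈ Ioo α β := hIccsub (Ioo_subset_Icc_self hx)
      have := hcomp x hx'
      simpa [hG] using sub_pos.2 this
    · exact ha₀b₀
  -- key estimate for compact subintervals containing [a₀, b₀]
  have key : ∀ a b : ℝ, α < a → a ≤ a₀ → b₀ ≤ b → b < β →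
      (∫ x in a..b, F x) + δ ≤ ∫ x in α'..β', F' x := by
    intro a b hαa haa₀ hb₀b hbβ
    have hab : a < b := lt_of_le_of_lt haa₀ (lt_of_lt_of_le ha₀b₀ hb₀b)
    have habs : Icc a b ⊆ Ioo α β := fun x hx => ⟨lt_of_lt_of_le hαa hx.1,
      lt_of_le_of_lt hx.2 hbβ⟩
    have hsubIcc : ∀ u v : ℝ, a ≤ u → u ≤ v → v ≤ b → Icc u v ⊆ Ioo α β := by
      intro u v h1 h2 h3
      exact (Icc_subset_Icc h1 h3).trans habs
    -- integrability of pieces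
    have hFi : ∀ u v : ℝ, a ≤ u → u ≤ v → v ≤ b → IntervalIntegrable F volume u v := by
      intro u v h1 h2 h3
      apply ContinuousOn.intervalIntegrable
      rw [uIcc_of_le h2]
      exact hFcont.mono (hsubIcc u v h1 h2 h3)
    have hGi : ∀ u v : ℝ, a ≤ u → u ≤ v → v ≤ b → IntervalIntegrable G volume u v := by
      intro u v h1 h2 h3
      apply ContinuousOn.intervalIntegrable
      rw [uIcc_of_le h2]
      exact hGcont.mono (hsubIcc u v h1 h2 h3)
    -- step 1 : substitution
    have hsub : (∫ x in a..b, G x) = ∫ u in (ψ a)..(ψ b), F' u := by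
      have := intervalIntegral.integral_comp_smul_deriv' (f := ψ) (f' := ψd) (g := F')
        (a := a) (b := b) ?_ ?_ ?_
      · simpa [hG, smul_eq_mul, Function.comp] using this
      · intro x hx
        rw [uIcc_of_le hab.le] at hx
        exact hψd x (habs hx)
      · rw [uIcc_of_le hab.le]
        exact hψdcont.mono habs
      · intro y hy
        obtain ⟨x, hx, rfl⟩ := hy
        rw [uIcc_of_le hab.le] at hx
        exact (hF'cont (ψ x) (hψmem x (habs hx))).mono (image_subset_iff.2 fun z hz => by
          rw [uIcc_of_le hab.le] at hz
          exact mem_preimage.2 (hψmem z (habs hz)))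
    -- step 2 : pointwise comparison on [a,b]
    have hstep2 : (∫ x in a..b, F x) + δ ≤ ∫ x in a..b, G x := by
      have hsplitF : (∫ x in a..b, F x) =
          (∫ x in a..a₀, F x) + (∫ x in a₀..b₀, F x) + ∫ x in b₀..b, F x := by
        rw [integral_add_adjacent_intervals (hFi a a₀ le_rfl haa₀ (by linarith))
          (hFi a₀ b₀ haa₀ ha₀b₀.le hb₀b),
          integral_add_adjacent_intervals (hFi a b₀ le_rfl (by linarith) hb₀b)
          (hFi b₀ b (by linarith) hb₀b le_rfl)]
      have hsplitG : (∫ x in a..b, G x) =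
          (∫ x in a..a₀, G x) + (∫ x in a₀..b₀, G x) + ∫ x in b₀..b, G x := by
        rw [integral_add_adjacent_intervals (hGi a a₀ le_rfl haa₀ (by linarith))
          (hGi a₀ b₀ haa₀ ha₀b₀.le hb₀b),
          integral_add_adjacent_intervals (hGi a b₀ le_rfl (by linarith) hb₀b)
          (hGi b₀ b (by linarith) hb₀b le_rfl)]
      have hm1 : (∫ x in a..a₀, F x) ≤ ∫ x in a..a₀, G x := by
        apply intervalIntegral.integral_mono_on haa₀ (hFi a a₀ le_rfl haa₀ (by linarith))
          (hGi a a₀ le_rfl haa₀ (by linarith))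
        intro x hx
        exact (hcomp x (hsubIcc a a₀ le_rfl haa₀ (by linarith) hx)).le
      have hm3 : (∫ x in b₀..b, F x) ≤ ∫ x in b₀..b, G x := by
        apply intervalIntegral.integral_mono_on hb₀b (hFi b₀ b (by linarith) hb₀b le_rfl)
          (hGi b₀ b (by linarith) hb₀b le_rfl)
        intro x hx
        exact (hcomp x (hsubIcc b₀ b (by linarith) hb₀b le_rfl hx)).le
      have hm2 : (∫ x in a₀..b₀, F x) + δ = ∫ x in a₀..b₀, G x := by
        rw [hδdef, intervalIntegral.integral_sub
          (hGi a₀ b₀ haa₀ ha₀b₀.le hb₀b) (hFi a₀ b₀ haa₀ ha₀b₀.le hb₀b)]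
        ring
      rw [hsplitF, hsplitG]
      linarith
    -- step 3 : the image interval sits inside [α', β']
    have hψa : ψ a ∈ Ioo α' β' := hψmem a (habs ⟨le_rfl, hab.le⟩)
    have hψb : ψ b ∈ Ioo α' β' := hψmem b (habs ⟨hab.le, le_rfl⟩)
    have hψab : ψ a < ψ b := hψmono (habs ⟨le_rfl, hab.le⟩) (habs ⟨hab.le, le_rfl⟩) hab
    have hF'i : ∀ u v : ℝ, α' ≤ u → u ≤ v → v ≤ β' → IntervalIntegrable F' volume u v := by
      intro u v h1 h2 h3
      apply hF'int.mono_set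
      rw [uIcc_of_le h2, uIcc_of_le hαβ'.le]
      exact Icc_subset_Icc h1 h3
    have hstep3 : (∫ u in (ψ a)..(ψ b), F' u) ≤ ∫ x in α'..β', F' x := by
      have hsplit : (∫ x in α'..β', F' x) =
          (∫ x in α'..(ψ a), F' x) + (∫ x in (ψ a)..(ψ b), F' x) + ∫ x in (ψ b)..β', F' x := by
        rw [integral_add_adjacent_intervals
          (hF'i α' (ψ a) le_rfl hψa.1.le (by linarith [hψa.2, hψab]))
          (hF'i (ψ a) (ψ b) hψa.1.le hψab.le hψb.2.le),
          integral_add_adjacent_intervals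
          (hF'i α' (ψ b) le_rfl (by linarith [hψa.1, hψab]) hψb.2.le)
          (hF'i (ψ b) β' (by linarith [hψa.1, hψab]) hψb.2.le le_rfl)]
      have h1 : 0 ≤ ∫ x in α'..(ψ a), F' x :=
        intervalIntegral.integral_nonneg hψa.1.le fun u hu =>
          hF'nn u ⟨hu.1, le_trans hu.2 hψa.2.le⟩
      have h2 : 0 ≤ ∫ x in (ψ b)..β', F' x :=
        intervalIntegral.integral_nonneg hψb.2.le fun u hu =>
          hF'nn u ⟨le_trans hψb.1.le hu.1, hu.2⟩
      rw [hsplit]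
      linarith
    linarith [hstep2, hsub ▸ hstep2, hstep3, hsub]
  -- conclude via the approximation lemma
  obtain ⟨a, b, hαa, hab, hbβ, happ⟩ := CW_exists_compact_approx hαβ hFint hδpos
  set a' : ℝ := min a a₀ with ha'
  set b' : ℝ := max b b₀ with hb'
  have hαa' : α < a' := lt_min hαa hαa₀
  have ha'a : a' ≤ a := min_le_left _ _
  have ha'a₀ : a' ≤ a₀ := min_le_right _ _
  have hbb' : b ≤ b' := le_max_left _ _
  have hb₀b' : b₀ ≤ b' := le_max_right _ _
  have hb'β : b' < β := max_lt hbβ hb₀β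
  have ha'b' : a' < b' := lt_of_le_of_lt ha'a₀ (lt_of_lt_of_le ha₀b₀ hb₀b')
  have hFi' : ∀ u v : ℝ, a' ≤ u → u ≤ v → v ≤ b' → IntervalIntegrable F volume u v := by
    intro u v h1 h2 h3
    apply ContinuousOn.intervalIntegrable
    rw [uIcc_of_le h2]
    exact hFcont.mono fun x hx => ⟨lt_of_lt_of_le hαa' (le_trans h1 hx.1),
      lt_of_le_of_lt (le_trans hx.2 h3) hb'β⟩
  have hmono2 : (∫ x in a..b, F x) ≤ ∫ x in a'..b', F x := by
    have hab' : a ≤ b := hab.le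
    have hsplit : (∫ x in a'..b', F x) =
        (∫ x in a'..a, F x) + (∫ x in a..b, F x) + ∫ x in b..b', F x := by
      rw [integral_add_adjacent_intervals (hFi' a' a le_rfl ha'a (by linarith))
        (hFi' a b ha'a hab' hbb'),
        integral_add_adjacent_intervals (hFi' a' b le_rfl (by linarith) hbb')
        (hFi' b b' (by linarith) hbb' le_rfl)]
    have h1 : 0 ≤ ∫ x in a'..a, F x :=
      intervalIntegral.integral_nonneg ha'a fun u hu =>
        hFnn u ⟨lt_of_lt_of_le hαa' hu.1, lt_of_le_of_lt (le_trans hu.2 hab.le) (by linarith)⟩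
    have h2 : 0 ≤ ∫ x in b..b', F x :=
      intervalIntegral.integral_nonneg hbb' fun u hu =>
        hFnn u ⟨lt_of_lt_of_le hαa (lt_of_lt_of_le hab hu.1).le, lt_of_le_of_lt hu.2 hb'β⟩
    rw [hsplit]
    linarith
  have hkey := key a' b' hαa' ha'a₀ hb₀b' hb'β
  linarith

set_option maxHeartbeats 1600000 in
/-- p-Laplacian version of Chow–Wang (Theorem 1.1).
Under (H1), `V'' > 0` on `(0,B)` and positivity of `R(w) = V'(w)^2 - p' V(w) V''(w)`
on `(0,A) ∪ (A,B)`, the minimal-period function `T` is strictly increasing on `(0,E*)`. -/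
theorem period_strictMono_of_chowWang
    (p : ℝ) (hp : 2 < p)
    (V : ℝ → ℝ) (A B Estar : ℝ)
    (hA : 0 < A) (hAB : A < B) (hEstar : 0 < Estar)
    (hVreg : ContDiffOn ℝ 2 V (Set.Ici 0))
    (hV0 : V 0 = Estar) (hVB : V B = Estar)
    (hV'0 : deriv V 0 = 0) (hVA : V A = 0) (hV'A : deriv V A = 0)
    (hV''A : deriv (deriv V) A ≠ 0)
    (hVrange : ∀ w ∈ Set.Ioo 0 A ∪ Set.Ioo A B, 0 < V w ∧ V w < Estar)
    (hV''pos : ∀ w ∈ Set.Ioo 0 B, 0 < deriv (deriv V) w)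
    (hR : ∀ w ∈ Set.Ioo 0 A ∪ Set.Ioo A B,
      0 < (deriv V w) ^ 2 - (p / (p - 1)) * V w * deriv (deriv V) w)
    (w1 w2 : ℝ → ℝ)
    (hw1 : ∀ E ∈ Set.Ioo 0 Estar, w1 E ∈ Set.Ioo 0 A ∧ V (w1 E) = E)
    (hw2 : ∀ E ∈ Set.Ioo 0 Estar, w2 E ∈ Set.Ioo A B ∧ V (w2 E) = E)
    (T : ℝ → ℝ)
    (hT : ∀ E ∈ Set.Ioo 0 Estar,
      T E = 2 * (p / (p - 1)) ^ (-(1 / p)) *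
        ∫ w in (w1 E)..(w2 E), (E - V w) ^ (-(1 / p))) :
    StrictMonoOn T (Set.Ioo 0 Estar) := by
  have hp0 : (0 : ℝ) < p := by linarith
  have hp1 : (1 : ℝ) < p := by linarith
  have hq0 : (0 : ℝ) < 1 / p := by positivity
  have hq1 : 1 / p < 1 := by rw [div_lt_one hp0]; linarith
  have hc0 : (0 : ℝ) < 1 - 1 / p := by linarith
  -- basic facts on V and its derivatives on (0,∞)
  have hVIoi : ContDiffOn ℝ 2 V (Ioi 0) := hVreg.mono Ioi_subset_Ici_self
  have h2 : ContDiffOn ℝ (1 + 1) V (Ioi 0) := by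
    simpa [one_add_one_eq_two] using hVIoi
  obtain ⟨hVdiff, -, hV'cd⟩ := (contDiffOn_succ_iff_deriv_of_isOpen isOpen_Ioi).1 h2
  have hVderiv : ∀ w : ℝ, 0 < w → HasDerivAt V (deriv V w) w := fun w hw =>
    (hVdiff.differentiableAt (Ioi_mem_nhds hw)).hasDerivAt
  have hV'diff : DifferentiableOn ℝ (deriv V) (Ioi 0) := hV'cd.differentiableOn one_ne_zero
  have hV'deriv : ∀ w : ℝ, 0 < w → HasDerivAt (deriv V) (deriv (deriv V) w) w := fun w hw =>
    (hV'diff.differentiableAt (Ioi_mem_nhds hw)).hasDerivAt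
  have hV'cont : ContinuousOn (deriv V) (Ioi 0) := hV'diff.continuousOn
  have hVcont : ContinuousOn V (Ici 0) := hVreg.continuousOn
  -- V' is strictly increasing on (0,B), negative on (0,A), positive on (A,B)
  have hV'mono : StrictMonoOn (deriv V) (Ioo 0 B) := by
    apply strictMonoOn_of_deriv_pos (convex_Ioo 0 B)
    · exact hV'cont.mono fun x hx => hx.1
    · intro x hx
      rw [interior_Ioo] at hx
      exact hV''pos x hx
  have hAmem : A ∈ Ioo (0:ℝ) B := ⟨hA, hAB⟩
  have hV'neg : ∀ w ∈ Ioo (0:ℝ) A, deriv V w < 0 := by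
    intro w hw
    have : deriv V w < deriv V A := hV'mono ⟨hw.1, lt_trans hw.2 hAB⟩ hAmem hw.2
    rwa [hV'A] at this
  have hV'pos : ∀ w ∈ Ioo A B, 0 < deriv V w := by
    intro w hw
    have : deriv V A < deriv V w := hV'mono hAmem ⟨lt_trans hA hw.1, hw.2⟩ hw.1
    rwa [hV'A] at this
  -- V is strictly decreasing on [0,A], strictly increasing on [A,B]
  have hVanti : StrictAntiOn V (Icc 0 A) := by
    apply strictAntiOn_of_deriv_neg (convex_Icc 0 A) (hVcont.mono Icc_subset_Ici_self)
    intro x hx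
    rw [interior_Icc] at hx
    exact hV'neg x hx
  have hIccAB : Icc A B ⊆ Ici (0:ℝ) := fun x hx => le_trans hA.le hx.1
  have hVmono : StrictMonoOn V (Icc A B) := by
    apply strictMonoOn_of_deriv_pos (convex_Icc A B) (hVcont.mono hIccAB)
    intro x hx
    rw [interior_Icc] at hx
    exact hV'pos x hx
  -- w1, w2 facts
  have hw2mem : ∀ E ∈ Ioo 0 Estar, w2 E ∈ Ioo A B := fun E hE => (hw2 E hE).1
  have hw2val : ∀ E ∈ Ioo 0 Estar, V (w2 E) = E := fun E hE => (hw2 E hE).2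
  have hw1mem : ∀ E ∈ Ioo 0 Estar, w1 E ∈ Ioo 0 A := fun E hE => (hw1 E hE).1
  have hw1val : ∀ E ∈ Ioo 0 Estar, V (w1 E) = E := fun E hE => (hw1 E hE).2
  have hw2lt : ∀ s ∈ Ioo 0 Estar, ∀ s' ∈ Ioo 0 Estar, s < s' → w2 s < w2 s' := by
    intro s hs s' hs' hss'
    have h1 := hw2mem s hs
    have h2 := hw2mem s' hs'
    have : V (w2 s) < V (w2 s') := by rw [hw2val s hs, hw2val s' hs']; exact hss'
    exact (hVmono.lt_iff_lt ⟨h1.1.le, h1.2.le⟩ ⟨h2.1.le, h2.2.le⟩).1 this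
  have hw1gt : ∀ s ∈ Ioo 0 Estar, ∀ s' ∈ Ioo 0 Estar, s < s' → w1 s' < w1 s := by
    intro s hs s' hs' hss'
    have h1 := hw1mem s hs
    have h2 := hw1mem s' hs'
    have hV : V (w1 s) < V (w1 s') := by rw [hw1val s hs, hw1val s' hs']; exact hss'
    by_contra hcon
    push_neg at hcon
    rcases eq_or_lt_of_le hcon with h | h
    · rw [h] at hV; exact lt_irrefl _ hV
    · have := hVanti ⟨h1.1.le, h1.2.le⟩ ⟨h2.1.le, h2.2.le⟩ h
      linarith
  -- continuity of w2 on (0, Estar)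
  have hw2cont : ∀ s ∈ Ioo 0 Estar, ContinuousAt w2 s := by
    intro s₀ hs₀
    have hw₀ := hw2mem s₀ hs₀
    rw [ContinuousAt]
    apply tendsto_order.2
    constructor
    · intro l' hl'
      set l : ℝ := max l' ((A + w2 s₀) / 2) with hl
      have hlA : A < l := lt_max_of_lt_right (by linarith [hw₀.1])
      have hlw : l < w2 s₀ := max_lt hl' (by linarith [hw₀.1])
      have hVl : V l < s₀ := by
        rw [← hw2val s₀ hs₀]
        exact hVmono ⟨hlA.le, (lt_trans hlw hw₀.2).le⟩ ⟨hw₀.1.le, hw₀.2.le⟩ hlw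
      have hVl0 : 0 < V l := (hVrange l (Or.inr ⟨hlA, lt_trans hlw hw₀.2⟩)).1
      have hev : Ioo (V l) Estar ∈ nhds s₀ := Ioo_mem_nhds hVl hs₀.2
      refine Filter.eventually_of_mem hev fun s hs => ?_
      have hsmem : s ∈ Ioo 0 Estar := ⟨lt_trans hVl0 hs.1, hs.2⟩
      have hwmem := hw2mem s hsmem
      have : V l < V (w2 s) := by rw [hw2val s hsmem]; exact hs.1
      have hlws : l < w2 s :=
        (hVmono.lt_iff_lt ⟨hlA.le, (lt_trans hlw hw₀.2).le⟩ ⟨hwmem.1.le, hwmem.2.le⟩).1 this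
      exact lt_of_le_of_lt (le_max_left _ _) hlws
    · intro u' hu'
      set u : ℝ := min u' ((w2 s₀ + B) / 2) with hu
      have huB : u < B := min_lt_of_right_lt (by linarith [hw₀.2])
      have hwu : w2 s₀ < u := lt_min hu' (by linarith [hw₀.2])
      have hVu : s₀ < V u := by
        rw [← hw2val s₀ hs₀]
        exact hVmono ⟨hw₀.1.le, hw₀.2.le⟩ ⟨(lt_trans hw₀.1 hwu).le, huB.le⟩ hwu
      have hev : Ioo (0:ℝ) (V u) ∈ nhds s₀ := Ioo_mem_nhds hs₀.1 hVu
      refine Filter.eventually_of_mem hev fun s hs => ?_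
      have hVuE : V u < Estar := (hVrange u (Or.inr ⟨lt_trans hw₀.1 hwu, huB⟩)).2
      have hsmem : s ∈ Ioo 0 Estar := ⟨hs.1, lt_trans hs.2 hVuE⟩
      have hwmem := hw2mem s hsmem
      have : V (w2 s) < V u := by rw [hw2val s hsmem]; exact hs.2
      have : w2 s < u :=
        (hVmono.lt_iff_lt ⟨hwmem.1.le, hwmem.2.le⟩ ⟨(lt_trans hw₀.1 hwu).le, huB.le⟩).1 this
      exact lt_of_lt_of_le this (min_le_left _ _)
  -- continuity of w1 on (0, Estar)
  have hw1cont : ∀ s ∈ Ioo 0 Estar, ContinuousAt w1 s := by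
    intro s₀ hs₀
    have hw₀ := hw1mem s₀ hs₀
    rw [ContinuousAt]
    apply tendsto_order.2
    constructor
    · intro l' hl'
      set l : ℝ := max l' (w1 s₀ / 2) with hl
      have hl0 : 0 < l := lt_max_of_lt_right (by linarith [hw₀.1])
      have hlw : l < w1 s₀ := max_lt hl' (by linarith [hw₀.1])
      have hVl : s₀ < V l := by
        rw [← hw1val s₀ hs₀]
        exact hVanti ⟨hl0.le, (lt_trans hlw hw₀.2).le⟩ ⟨hw₀.1.le, hw₀.2.le⟩ hlw
      have hVlE : V l < Estar := (hVrange l (Or.inl ⟨hl0, lt_trans hlw hw₀.2⟩)).2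
      have hev : Ioo (0:ℝ) (V l) ∈ nhds s₀ := Ioo_mem_nhds hs₀.1 hVl
      refine Filter.eventually_of_mem hev fun s hs => ?_
      have hsmem : s ∈ Ioo 0 Estar := ⟨hs.1, lt_trans hs.2 hVlE⟩
      have hwmem := hw1mem s hsmem
      have hVv : V (w1 s) < V l := by rw [hw1val s hsmem]; exact hs.2
      have hlws : l < w1 s := by
        by_contra hcon
        push_neg at hcon
        rcases eq_or_lt_of_le hcon with h | h
        · rw [h] at hVv; exact lt_irrefl _ hVv
        · have := hVanti ⟨hwmem.1.le, hwmem.2.le⟩ ⟨hl0.le, (lt_trans hlw hw₀.2).le⟩ h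
          linarith
      exact lt_of_le_of_lt (le_max_left _ _) hlws
    · intro u' hu'
      set u : ℝ := min u' ((w1 s₀ + A) / 2) with hu
      have huA : u < A := min_lt_of_right_lt (by linarith [hw₀.2])
      have hwu : w1 s₀ < u := lt_min hu' (by linarith [hw₀.2])
      have hVu : V u < s₀ := by
        rw [← hw1val s₀ hs₀]
        exact hVanti ⟨hw₀.1.le, hw₀.2.le⟩ ⟨(lt_trans hw₀.1 hwu).le, huA.le⟩ hwu
      have hVu0 : 0 < V u := (hVrange u (Or.inl ⟨lt_trans hw₀.1 hwu, huA⟩)).1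
      have hev : Ioo (V u) Estar ∈ nhds s₀ := Ioo_mem_nhds hVu hs₀.2
      refine Filter.eventually_of_mem hev fun s hs => ?_
      have hsmem : s ∈ Ioo 0 Estar := ⟨lt_trans hVu0 hs.1, hs.2⟩
      have hwmem := hw1mem s hsmem
      have hVv : V u < V (w1 s) := by rw [hw1val s hsmem]; exact hs.1
      have : w1 s < u := by
        by_contra hcon
        push_neg at hcon
        rcases eq_or_lt_of_le hcon with h | h
        · rw [← h] at hVv; exact lt_irrefl _ hVv
        · have := hVanti ⟨(lt_trans hw₀.1 hwu).le, huA.le⟩ ⟨hwmem.1.le, hwmem.2.le⟩ h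
          linarith
      exact lt_of_lt_of_le this (min_le_left _ _)
  -- derivatives of w1, w2
  have hw2deriv : ∀ s ∈ Ioo 0 Estar, HasDerivAt w2 (deriv V (w2 s))⁻¹ s := by
    intro s hs
    have hwm := hw2mem s hs
    apply HasDerivAt.of_local_left_inverse (hw2cont s hs)
      (hVderiv (w2 s) (lt_trans hA hwm.1)) (ne_of_gt (hV'pos (w2 s) hwm))
    exact Filter.eventually_of_mem (Ioo_mem_nhds hs.1 hs.2) fun y hy => hw2val y hy
  have hw1deriv : ∀ s ∈ Ioo 0 Estar, HasDerivAt w1 (deriv V (w1 s))⁻¹ s := by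
    intro s hs
    have hwm := hw1mem s hs
    apply HasDerivAt.of_local_left_inverse (hw1cont s hs)
      (hVderiv (w1 s) hwm.1) (ne_of_lt (hV'neg (w1 s) hwm))
    exact Filter.eventually_of_mem (Ioo_mem_nhds hs.1 hs.2) fun y hy => hw1val y hy
  -- the function K = V^c / V' is strictly increasing on each branch
  set c : ℝ := 1 - 1 / p with hcdef
  set K : ℝ → ℝ := fun w => V w ^ c / deriv V w with hKdef
  have hpne : p ≠ 0 := ne_of_gt hp0
  have hp1ne : p - 1 ≠ 0 := by intro h; rw [sub_eq_zero] at h; linarith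
  have hcp' : c * (p / (p - 1)) = 1 := by
    rw [hcdef]; field_simp
  have hKderiv : ∀ w ∈ Ioo 0 A ∪ Ioo A B,
      HasDerivAt K ((deriv V w * c * V w ^ (c - 1) * deriv V w
        - V w ^ c * deriv (deriv V) w) / deriv V w ^ 2) w ∧
      0 < (deriv V w * c * V w ^ (c - 1) * deriv V w
        - V w ^ c * deriv (deriv V) w) / deriv V w ^ 2 := by
    intro w hw
    have hw0 : 0 < w := by
      rcases hw with h | h
      · exact h.1
      · exact lt_trans hA h.1
    have hVw0 : 0 < V w := (hVrange w hw).1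
    have hV'ne : deriv V w ≠ 0 := by
      rcases hw with h | h
      · exact ne_of_lt (hV'neg w h)
      · exact ne_of_gt (hV'pos w h)
    have hu : HasDerivAt (fun y => V y ^ c) (deriv V w * c * V w ^ (c - 1)) w :=
      (hVderiv w hw0).rpow_const (Or.inl (ne_of_gt hVw0))
    refine ⟨hu.div (hV'deriv w hw0) hV'ne, ?_⟩
    apply div_pos ?_ (by positivity)
    have hsplit : V w ^ c = V w ^ (c - 1) * V w := by
      nth_rewrite 1 [show c = c - 1 + 1 by ring]
      rw [Real.rpow_add_one (ne_of_gt hVw0)]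
    have hnum : deriv V w * c * V w ^ (c - 1) * deriv V w - V w ^ c * deriv (deriv V) w
        = V w ^ (c - 1) * (c * deriv V w ^ 2 - V w * deriv (deriv V) w) := by
      rw [hsplit]; ring
    rw [hnum]
    apply mul_pos (Real.rpow_pos_of_pos hVw0 _)
    have hRw := hR w hw
    have hkey : c * deriv V w ^ 2 - V w * deriv (deriv V) w
        = c * (deriv V w ^ 2 - p / (p - 1) * V w * deriv (deriv V) w) := by
      linear_combination (V w * deriv (deriv V) w) * hcp'
    rw [hkey]
    exact mul_pos hc0 hRw
  have hKmono2 : StrictMonoOn K (Ioo A B) := by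
    apply strictMonoOn_of_deriv_pos (convex_Ioo A B)
    · intro w hw
      exact ((hKderiv w (Or.inr hw)).1).continuousAt.continuousWithinAt
    · intro w hw
      rw [interior_Ioo] at hw
      rw [(hKderiv w (Or.inr hw)).1.deriv]
      exact (hKderiv w (Or.inr hw)).2
  have hKmono1 : StrictMonoOn K (Ioo 0 A) := by
    apply strictMonoOn_of_deriv_pos (convex_Ioo 0 A)
    · intro w hw
      exact ((hKderiv w (Or.inl hw)).1).continuousAt.continuousWithinAt
    · intro w hw
      rw [interior_Ioo] at hw
      rw [(hKderiv w (Or.inl hw)).1.deriv]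
      exact (hKderiv w (Or.inl hw)).2
  -- bounds on V along the intervals
  have hVle : ∀ e ∈ Ioo 0 Estar, ∀ x ∈ Icc (w1 e) (w2 e), V x ≤ e := by
    intro e he x hx
    have h1 := hw1mem e he
    have h2 := hw2mem e he
    rcases le_total x A with hxA | hxA
    · rcases eq_or_lt_of_le hx.1 with h | h
      · rw [← h, hw1val e he]
      · have := hVanti ⟨h1.1.le, h1.2.le⟩ ⟨(lt_trans h1.1 h).le, hxA⟩ h
        rw [hw1val e he] at this
        exact this.le
    · rcases eq_or_lt_of_le hx.2 with h | h
      · rw [h, hw2val e he]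
      · have := hVmono ⟨hxA, (lt_trans h h2.2).le⟩ ⟨h2.1.le, h2.2.le⟩ h
        rw [hw2val e he] at this
        exact this.le
  have hVlt2 : ∀ e ∈ Ioo 0 Estar, ∀ x ∈ Ico A (w2 e), V x < e := by
    intro e he x hx
    have h2 := hw2mem e he
    have := hVmono ⟨hx.1, (lt_trans hx.2 h2.2).le⟩ ⟨h2.1.le, h2.2.le⟩ hx.2
    rwa [hw2val e he] at this
  have hVlt1 : ∀ e ∈ Ioo 0 Estar, ∀ x ∈ Ioc (w1 e) A, V x < e := by
    intro e he x hx
    have h1 := hw1mem e he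
    have := hVanti ⟨h1.1.le, h1.2.le⟩ ⟨(lt_trans h1.1 hx.1).le, hx.2⟩ hx.1
    rwa [hw1val e he] at this
  -- continuity of the integrand away from the singularity
  have hfcont : ∀ (e : ℝ) (s : Set ℝ), s ⊆ Ici 0 → (∀ x ∈ s, V x < e) →
      ContinuousOn (fun w => (e - V w) ^ (-(1 / p))) s := by
    intro e s hs hlt
    apply ContinuousOn.rpow_const (continuousOn_const.sub (hVcont.mono hs))
    intro x hx
    exact Or.inl (ne_of_gt (sub_pos.2 (hlt x hx)))
  have hrneg : (-1 : ℝ) < -(1 / p) := by linarith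
  -- integrability of the integrand on the right branch
  have hint2 : ∀ e ∈ Ioo 0 Estar,
      IntervalIntegrable (fun w => (e - V w) ^ (-(1 / p))) volume A (w2 e) := by
    intro e he
    have h2 := hw2mem e he
    set β := w2 e with hβ
    set x0 : ℝ := (A + β) / 2 with hx0
    have hAx0 : A < x0 := by rw [hx0]; linarith [h2.1]
    have hx0β : x0 < β := by rw [hx0]; linarith [h2.1]
    have hx0B : x0 < B := lt_trans hx0β h2.2
    have hpiece1 : IntervalIntegrable (fun w => (e - V w) ^ (-(1 / p))) volume A x0 := by
      apply ContinuousOn.intervalIntegrable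
      rw [uIcc_of_le hAx0.le]
      apply hfcont e _ (fun x hx => le_trans hA.le hx.1)
      intro x hx
      exact hVlt2 e he x ⟨hx.1, lt_of_le_of_lt hx.2 hx0β⟩
    have hpiece2 : IntervalIntegrable (fun w => (e - V w) ^ (-(1 / p))) volume x0 β := by
      obtain ⟨ξm, hξm, hmin⟩ := isCompact_Icc.exists_isMinOn (nonempty_Icc.2 hx0β.le)
        (hV'cont.mono fun x hx => lt_trans hA (lt_of_lt_of_le hAx0 hx.1))
      set m : ℝ := deriv V ξm with hm
      have hm0 : 0 < m := hV'pos ξm ⟨lt_of_lt_of_le hAx0 hξm.1, lt_of_le_of_lt hξm.2 h2.2⟩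
      apply CW_integrable_right hx0β hrneg
      · apply hfcont e _ (fun x hx => le_trans hA.le (le_trans hAx0.le hx.1))
        intro x hx
        exact hVlt2 e he x ⟨le_trans hAx0.le hx.1, hx.2⟩
      · intro x hx
        have hxβ : x < β := hx.2
        obtain ⟨ξ, hξ, hslope⟩ := exists_hasDerivAt_eq_slope V (deriv V) hxβ
          (hVcont.mono fun y hy =>
            le_trans hA.le (le_trans hAx0.le (le_trans hx.1 hy.1)))
          (fun y hy => hVderiv y (lt_trans hA (lt_of_lt_of_le hAx0 (le_trans hx.1 hy.1.le))))
        have hmle : m ≤ deriv V ξ := hmin ⟨le_trans hx.1 hξ.1.le, hξ.2.le⟩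
        have hVβ : V β = e := hw2val e he
        have hlow : m * (β - x) ≤ e - V x := by
          have hslope' : V β - V x = deriv V ξ * (β - x) := by
            rw [hslope, div_mul_cancel₀ _ (ne_of_gt (sub_pos.2 hxβ))]
          rw [← hVβ]
          rw [hslope']
          apply mul_le_mul_of_nonneg_right hmle (by linarith)
        have hpos : 0 < m * (β - x) := mul_pos hm0 (by linarith)
        have hnn : (0:ℝ) ≤ (e - V x) ^ (-(1 / p)) :=
          Real.rpow_nonneg (by linarith) _
        rw [abs_of_nonneg hnn]
        calc (e - V x) ^ (-(1 / p)) ≤ (m * (β - x)) ^ (-(1 / p)) :=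
              Real.rpow_le_rpow_of_nonpos hpos hlow (by linarith)
          _ = m ^ (-(1 / p)) * (β - x) ^ (-(1 / p)) :=
              Real.mul_rpow hm0.le (by linarith)
    exact hpiece1.trans hpiece2
  -- integrability of the integrand on the left branch
  have hint1 : ∀ e ∈ Ioo 0 Estar,
      IntervalIntegrable (fun w => (e - V w) ^ (-(1 / p))) volume (w1 e) A := by
    intro e he
    have h1 := hw1mem e he
    set α := w1 e with hα
    set x1 : ℝ := (α + A) / 2 with hx1
    have hαx1 : α < x1 := by rw [hx1]; linarith [h1.2]
    have hx1A : x1 < A := by rw [hx1]; linarith [h1.2]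
    have hx10 : 0 < x1 := lt_trans h1.1 hαx1
    have hpiece2 : IntervalIntegrable (fun w => (e - V w) ^ (-(1 / p))) volume x1 A := by
      apply ContinuousOn.intervalIntegrable
      rw [uIcc_of_le hx1A.le]
      apply hfcont e _ (fun x hx => le_trans hx10.le hx.1)
      intro x hx
      exact hVlt1 e he x ⟨lt_of_lt_of_le hαx1 hx.1, hx.2⟩
    have hpiece1 : IntervalIntegrable (fun w => (e - V w) ^ (-(1 / p))) volume α x1 := by
      obtain ⟨ξM, hξM, hmax⟩ := isCompact_Icc.exists_isMaxOn (nonempty_Icc.2 hαx1.le)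
        (hV'cont.mono fun x hx => lt_of_lt_of_le h1.1 hx.1)
      set M : ℝ := deriv V ξM with hM
      have hM0 : M < 0 := hV'neg ξM ⟨lt_of_lt_of_le h1.1 hξM.1, lt_of_le_of_lt hξM.2 hx1A⟩
      apply CW_integrable_left hαx1 hrneg
      · apply hfcont e _ (fun x hx => le_trans h1.1.le hx.1.le)
        intro x hx
        exact hVlt1 e he x ⟨hx.1, le_trans hx.2 hx1A.le⟩
      · intro x hx
        have hαx : α < x := hx.1
        obtain ⟨ξ, hξ, hslope⟩ := exists_hasDerivAt_eq_slope V (deriv V) hαx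
          (hVcont.mono fun y hy => le_trans h1.1.le hy.1)
          (fun y hy => hVderiv y (lt_of_lt_of_le h1.1 hy.1.le))
        have hMge : deriv V ξ ≤ M := hmax ⟨hξ.1.le, le_trans hξ.2.le hx.2⟩
        have hVα : V α = e := hw1val e he
        have hlow : (-M) * (x - α) ≤ e - V x := by
          have hslope' : V x - V α = deriv V ξ * (x - α) := by
            rw [hslope, div_mul_cancel₀ _ (ne_of_gt (sub_pos.2 hαx))]
          rw [← hVα]
          nlinarith [mul_le_mul_of_nonneg_right hMge (by linarith : (0:ℝ) ≤ x - α)]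
        have hpos : 0 < (-M) * (x - α) := mul_pos (by linarith) (by linarith)
        have hnn : (0:ℝ) ≤ (e - V x) ^ (-(1 / p)) :=
          Real.rpow_nonneg (by linarith) _
        rw [abs_of_nonneg hnn]
        calc (e - V x) ^ (-(1 / p)) ≤ ((-M) * (x - α)) ^ (-(1 / p)) :=
              Real.rpow_le_rpow_of_nonpos hpos hlow (by linarith)
          _ = (-M) ^ (-(1 / p)) * (x - α) ^ (-(1 / p)) :=
              Real.mul_rpow (by linarith) (by linarith)
    exact hpiece1.trans hpiece2
  -- nonnegativity of the integrand
  have hfnn : ∀ e ∈ Ioo 0 Estar, ∀ x ∈ Icc (w1 e) (w2 e), (0:ℝ) ≤ (e - V x) ^ (-(1 / p)) := by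
    intro e he x hx
    exact Real.rpow_nonneg (sub_nonneg.2 (hVle e he x hx)) _
  -- now the main comparison
  intro E hE E' hE' hEE'
  set r : ℝ := E' / E with hrdef
  have hr1 : 1 < r := (one_lt_div hE.1).2 hEE'
  have hr0 : 0 < r := lt_trans one_pos hr1
  have hrE : r * E = E' := div_mul_cancel₀ E' (ne_of_gt hE.1)
  have hw2E := hw2mem E hE
  have hw1E := hw1mem E hE
  have hw2E' := hw2mem E' hE'
  have hw1E' := hw1mem E' hE'
  -- common facts for points in the open branch-2 interval
  have hmem2 : ∀ w ∈ Ioo A (w2 E), w ∈ Ioo A B ∧ 0 < V w ∧ V w < E ∧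
      r * V w ∈ Ioo 0 Estar ∧ r * V w < E' := by
    intro w hw
    have hwB : w < B := lt_trans hw.2 hw2E.2
    have hVw0 : 0 < V w := (hVrange w (Or.inr ⟨hw.1, hwB⟩)).1
    have hVwE : V w < E := hVlt2 E hE w ⟨hw.1.le, hw.2⟩
    have h5 : r * V w < E' := by
      rw [← hrE]
      exact mul_lt_mul_of_pos_left hVwE hr0
    exact ⟨⟨hw.1, hwB⟩, hVw0, hVwE,
      ⟨mul_pos hr0 hVw0, lt_trans h5 hE'.2⟩, h5⟩
  -- common facts for points in the open branch-1 interval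
  have hmem1 : ∀ w ∈ Ioo (w1 E) A, w ∈ Ioo 0 A ∧ 0 < V w ∧ V w < E ∧
      r * V w ∈ Ioo 0 Estar ∧ r * V w < E' := by
    intro w hw
    have hw0 : 0 < w := lt_trans hw1E.1 hw.1
    have hVw0 : 0 < V w := (hVrange w (Or.inl ⟨hw0, hw.2⟩)).1
    have hVwE : V w < E := hVlt1 E hE w ⟨hw.1, hw.2.le⟩
    have h5 : r * V w < E' := by
      rw [← hrE]
      exact mul_lt_mul_of_pos_left hVwE hr0
    exact ⟨⟨hw0, hw.2⟩, hVw0, hVwE,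
      ⟨mul_pos hr0 hVw0, lt_trans h5 hE'.2⟩, h5⟩
  have hrc : r * r ^ (-(1 / p)) = r ^ c := by
    have h := Real.rpow_add hr0 1 (-(1 / p))
    rw [Real.rpow_one] at h
    have he : (1 : ℝ) + -(1 / p) = c := by rw [hcdef]; ring
    rw [he] at h
    exact h.symm
  -- branch 2 comparison
  have hbranch2 : (∫ x in A..(w2 E), (E - V x) ^ (-(1 / p)))
      < ∫ x in A..(w2 E'), (E' - V x) ^ (-(1 / p)) := by
    apply CW_compare (ψ := fun w => w2 (r * V w))
      (ψd := fun w => (deriv V (w2 (r * V w)))⁻¹ * (r * deriv V w))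
      hw2E.1 hw2E'.1 (hint2 E hE) (hint2 E' hE')
    · apply hfcont E _ (fun x hx => le_trans hA.le hx.1.le)
      intro x hx
      exact hVlt2 E hE x ⟨hx.1.le, hx.2⟩
    · apply hfcont E' _ (fun x hx => le_trans hA.le hx.1.le)
      intro x hx
      exact hVlt2 E' hE' x ⟨hx.1.le, hx.2⟩
    · intro x hx
      exact hfnn E hE x ⟨le_trans hw1E.2.le hx.1.le, hx.2.le⟩
    · intro x hx
      exact hfnn E' hE' x ⟨le_trans hw1E'.2.le hx.1, hx.2⟩
    · intro w hw
      obtain ⟨hwAB, hVw0, hVwE, hrs, hrsE'⟩ := hmem2 w hw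
      have hwh := hw2mem _ hrs
      refine ⟨hwh.1, ?_⟩
      have := hw2lt _ hrs E' hE' hrsE'
      exact this
    · intro w hw w' hw' hww'
      obtain ⟨hwAB, hVw0, hVwE, hrs, hrsE'⟩ := hmem2 w hw
      obtain ⟨hwAB', hVw0', hVwE', hrs', hrsE''⟩ := hmem2 w' hw'
      apply hw2lt _ hrs _ hrs'
      have : V w < V w' := hVmono ⟨hwAB.1.le, hwAB.2.le⟩ ⟨hwAB'.1.le, hwAB'.2.le⟩ hww'
      exact mul_lt_mul_of_pos_left this hr0
    · intro w hw
      obtain ⟨hwAB, hVw0, hVwE, hrs, hrsE'⟩ := hmem2 w hw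
      have h1 := hw2deriv _ hrs
      have h2 := (hVderiv w (lt_trans hA hwAB.1)).const_mul r
      have := h1.comp w h2
      exact this
    · intro w hw
      obtain ⟨hwAB, hVw0, hVwE, hrs, hrsE'⟩ := hmem2 w hw
      have hψw := hw2mem _ hrs
      have hc1 : ContinuousWithinAt (fun x => r * V x) (Ioo A (w2 E)) w :=
        (continuousOn_const.mul (hVcont.mono fun x hx => le_trans hA.le hx.1.le)) w hw
      have hc2 := (hw2cont _ hrs).comp_continuousWithinAt (f := fun x => r * V x) hc1
      have hc3 := (hV'cont.continuousAt
        (Ioi_mem_nhds (lt_trans hA hψw.1))).comp_continuousWithinAt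
        (f := w2 ∘ fun x => r * V x) hc2
      exact (hc3.inv₀ (ne_of_gt (hV'pos _ hψw))).mul
        ((continuousOn_const.mul (hV'cont.mono fun x hx => lt_trans hA hx.1)) w hw)
    · intro w hw
      obtain ⟨hwAB, hVw0, hVwE, hrs, hrsE'⟩ := hmem2 w hw
      set s : ℝ := V w with hsdef
      set wh : ℝ := w2 (r * s) with hwhdef
      have hwhAB : wh ∈ Ioo A B := hw2mem _ hrs
      have hVwh : V wh = r * s := hw2val _ hrs
      have hwwh : w < wh := by
        apply (hVmono.lt_iff_lt ⟨hwAB.1.le, hwAB.2.le⟩ ⟨hwhAB.1.le, hwhAB.2.le⟩).1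
        rw [hVwh]
        exact (lt_mul_iff_one_lt_left hVw0).2 hr1
      have hKlt : K w < K wh := hKmono2 hwAB hwhAB hwwh
      set X : ℝ := deriv V w with hXdef
      set Y : ℝ := deriv V wh with hYdef
      have hX0 : 0 < X := hV'pos w hwAB
      have hY0 : 0 < Y := hV'pos wh hwhAB
      have hsc0 : 0 < s ^ c := Real.rpow_pos_of_pos hVw0 _
      have hK' : s ^ c * Y < r ^ c * s ^ c * X := by
        have : V w ^ c / X < V wh ^ c / Y := hKlt
        rw [hVwh, ← hsdef, Real.mul_rpow hr0.le hVw0.le, div_lt_div_iff₀ hX0 hY0] at this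
        linarith
      have hYX : Y < r ^ c * X := by
        by_contra hcon
        push_neg at hcon
        have : r ^ c * s ^ c * X ≤ s ^ c * Y := by
          nlinarith [mul_le_mul_of_nonneg_left hcon hsc0.le]
        linarith
      have hEs0 : 0 < E - s := sub_pos.2 hVwE
      have hfE'wh : (E' - V wh) ^ (-(1 / p)) = r ^ (-(1 / p)) * (E - s) ^ (-(1 / p)) := by
        rw [hVwh]
        have : E' - r * s = r * (E - s) := by rw [← hrE]; ring
        rw [this, Real.mul_rpow hr0.le hEs0.le]
      rw [hfE'wh]
      have ht0 : 0 < (E - s) ^ (-(1 / p)) := Real.rpow_pos_of_pos hEs0 _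
      have h1 : 1 < Y⁻¹ * (r * X) * r ^ (-(1 / p)) := by
        have heq : Y⁻¹ * (r * X) * r ^ (-(1 / p)) = (r ^ c * X) / Y := by
          rw [← hrc]; field_simp
        rw [heq]
        exact (one_lt_div hY0).2 hYX
      calc (E - s) ^ (-(1 / p)) = 1 * (E - s) ^ (-(1 / p)) := by ring
        _ < Y⁻¹ * (r * X) * r ^ (-(1 / p)) * (E - s) ^ (-(1 / p)) :=
            mul_lt_mul_of_pos_right h1 ht0
        _ = Y⁻¹ * (r * X) * (r ^ (-(1 / p)) * (E - s) ^ (-(1 / p))) := by ring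
  -- branch 1 comparison
  have hbranch1 : (∫ x in (w1 E)..A, (E - V x) ^ (-(1 / p)))
      < ∫ x in (w1 E')..A, (E' - V x) ^ (-(1 / p)) := by
    apply CW_compare (ψ := fun w => w1 (r * V w))
      (ψd := fun w => (deriv V (w1 (r * V w)))⁻¹ * (r * deriv V w))
      hw1E.2 hw1E'.2 (hint1 E hE) (hint1 E' hE')
    · apply hfcont E _ (fun x hx => (lt_trans hw1E.1 hx.1).le)
      intro x hx
      exact hVlt1 E hE x ⟨hx.1, hx.2.le⟩
    · apply hfcont E' _ (fun x hx => (lt_trans hw1E'.1 hx.1).le)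
      intro x hx
      exact hVlt1 E' hE' x ⟨hx.1, hx.2.le⟩
    · intro x hx
      exact hfnn E hE x ⟨hx.1.le, le_trans hx.2.le hw2E.1.le⟩
    · intro x hx
      exact hfnn E' hE' x ⟨hx.1, le_trans hx.2 hw2E'.1.le⟩
    · intro w hw
      obtain ⟨hw0A, hVw0, hVwE, hrs, hrsE'⟩ := hmem1 w hw
      have hwh := hw1mem _ hrs
      exact ⟨hw1gt _ hrs E' hE' hrsE', hwh.2⟩
    · intro w hw w' hw' hww'
      obtain ⟨hw0A, hVw0, hVwE, hrs, hrsE'⟩ := hmem1 w hw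
      obtain ⟨hw0A', hVw0', hVwE', hrs', hrsE''⟩ := hmem1 w' hw'
      apply hw1gt _ hrs' _ hrs
      have : V w' < V w := hVanti ⟨hw0A.1.le, hw0A.2.le⟩ ⟨hw0A'.1.le, hw0A'.2.le⟩ hww'
      exact mul_lt_mul_of_pos_left this hr0
    · intro w hw
      obtain ⟨hw0A, hVw0, hVwE, hrs, hrsE'⟩ := hmem1 w hw
      have h1 := hw1deriv _ hrs
      have h2 := (hVderiv w hw0A.1).const_mul r
      have := h1.comp w h2
      exact this
    · intro w hw
      obtain ⟨hw0A, hVw0, hVwE, hrs, hrsE'⟩ := hmem1 w hw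
      have hψw := hw1mem _ hrs
      have hc1 : ContinuousWithinAt (fun x => r * V x) (Ioo (w1 E) A) w :=
        (continuousOn_const.mul (hVcont.mono fun x hx => (lt_trans hw1E.1 hx.1).le)) w hw
      have hc2 := (hw1cont _ hrs).comp_continuousWithinAt (f := fun x => r * V x) hc1
      have hc3 := (hV'cont.continuousAt
        (Ioi_mem_nhds hψw.1)).comp_continuousWithinAt (f := w1 ∘ fun x => r * V x) hc2
      exact (hc3.inv₀ (ne_of_lt (hV'neg _ hψw))).mul
        ((continuousOn_const.mul (hV'cont.mono fun x hx => lt_trans hw1E.1 hx.1)) w hw)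
    · intro w hw
      obtain ⟨hw0A, hVw0, hVwE, hrs, hrsE'⟩ := hmem1 w hw
      set s : ℝ := V w with hsdef
      set wh : ℝ := w1 (r * s) with hwhdef
      have hwh0A : wh ∈ Ioo 0 A := hw1mem _ hrs
      have hVwh : V wh = r * s := hw1val _ hrs
      have hwhw : wh < w := by
        by_contra hcon
        push_neg at hcon
        rcases eq_or_lt_of_le hcon with h | h
        · have : V w = r * s := by rw [← h] at hVwh; exact hVwh
          rw [← hsdef] at this
          nlinarith
        · have := hVanti ⟨hw0A.1.le, hw0A.2.le⟩ ⟨hwh0A.1.le, hwh0A.2.le⟩ h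
          rw [hVwh, ← hsdef] at this
          nlinarith
      have hKlt : K wh < K w := hKmono1 hwh0A hw0A hwhw
      set X : ℝ := deriv V w with hXdef
      set Y : ℝ := deriv V wh with hYdef
      have hX0 : X < 0 := hV'neg w hw0A
      have hY0 : Y < 0 := hV'neg wh hwh0A
      have hsc0 : 0 < s ^ c := Real.rpow_pos_of_pos hVw0 _
      have hYne : Y ≠ 0 := ne_of_lt hY0
      have hXne : X ≠ 0 := ne_of_lt hX0
      have hK' : r ^ c * s ^ c * X < s ^ c * Y := by
        have h : V wh ^ c / Y < V w ^ c / X := hKlt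
        rw [hVwh, ← hsdef, Real.mul_rpow hr0.le hVw0.le] at h
        have hXY : 0 < X * Y := mul_pos_of_neg_of_neg hX0 hY0
        have h3 := mul_lt_mul_of_pos_right h hXY
        have e1 : r ^ c * s ^ c / Y * (X * Y) = r ^ c * s ^ c * X := by
          field_simp
        have e2 : s ^ c / X * (X * Y) = s ^ c * Y := by
          field_simp
        rw [e1, e2] at h3
        exact h3
      have hYX : r ^ c * X < Y := by
        have h4 : s ^ c * (r ^ c * X) < s ^ c * Y := by linarith [hK']
        exact (mul_lt_mul_iff_right₀ hsc0).1 h4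
      have hEs0 : 0 < E - s := sub_pos.2 hVwE
      have hfE'wh : (E' - V wh) ^ (-(1 / p)) = r ^ (-(1 / p)) * (E - s) ^ (-(1 / p)) := by
        rw [hVwh]
        have : E' - r * s = r * (E - s) := by rw [← hrE]; ring
        rw [this, Real.mul_rpow hr0.le hEs0.le]
      rw [hfE'wh]
      have ht0 : 0 < (E - s) ^ (-(1 / p)) := Real.rpow_pos_of_pos hEs0 _
      have h1 : 1 < Y⁻¹ * (r * X) * r ^ (-(1 / p)) := by
        have heq : Y⁻¹ * (r * X) * r ^ (-(1 / p)) = (r ^ c * X) / Y := by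
          rw [← hrc]; field_simp
        rw [heq]
        have heq2 : (r ^ c * X) / Y = 1 + (r ^ c * X - Y) / Y := by
          field_simp
          ring
        have hpos : 0 < (r ^ c * X - Y) / Y :=
          div_pos_iff.2 (Or.inr ⟨by linarith, hY0⟩)
        rw [heq2]
        linarith
      calc (E - s) ^ (-(1 / p)) = 1 * (E - s) ^ (-(1 / p)) := by ring
        _ < Y⁻¹ * (r * X) * r ^ (-(1 / p)) * (E - s) ^ (-(1 / p)) :=
            mul_lt_mul_of_pos_right h1 ht0
        _ = Y⁻¹ * (r * X) * (r ^ (-(1 / p)) * (E - s) ^ (-(1 / p))) := by ring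
  -- assemble
  have hIE : (∫ x in (w1 E)..(w2 E), (E - V x) ^ (-(1 / p)))
      = (∫ x in (w1 E)..A, (E - V x) ^ (-(1 / p)))
        + ∫ x in A..(w2 E), (E - V x) ^ (-(1 / p)) :=
    (integral_add_adjacent_intervals (hint1 E hE) (hint2 E hE)).symm
  have hIE' : (∫ x in (w1 E')..(w2 E'), (E' - V x) ^ (-(1 / p)))
      = (∫ x in (w1 E')..A, (E' - V x) ^ (-(1 / p)))
        + ∫ x in A..(w2 E'), (E' - V x) ^ (-(1 / p)) :=
    (integral_add_adjacent_intervals (hint1 E' hE') (hint2 E' hE')).symm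
  rw [hT E hE, hT E' hE']
  have hC0 : 0 < 2 * (p / (p - 1)) ^ (-(1 / p)) := by
    have : (0:ℝ) < p / (p - 1) := div_pos hp0 (by linarith)
    positivity
  apply mul_lt_mul_of_pos_left _ hC0
  rw [hIE, hIE']
  linarith
end

section
/- Let p > 2 with Hölder conjugate p' = p/(p−1). Let V be three times continuously differentiable on [0,∞), satisfy (H1) with constants 0 < A < B and E* = V(0), and satisfy (H3). If the function w ↦ V(w)/V'(w)² (extended by continuity at w = A by the value 1/(2V''(A))) is convex on (0,B), then the minimal-period function E ↦ T(E) is strictly increasing on (0, E*). -/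
open Set

open MeasureTheory Filter Topology intervalIntegral

section helpers


/-- derivative of a convex function is monotone (at points where it exists) -/
lemma convexOn_deriv_mono' {s : Set ℝ} {f : ℝ → ℝ} (hf : ConvexOn ℝ s f)
    {a b fa fb : ℝ} (ha : a ∈ s) (hb : b ∈ s) (hab : a < b)
    (hfa : HasDerivAt f fa a) (hfb : HasDerivAt f fb b) : fa ≤ fb := by
  have hsub : Icc a b ⊆ s := hf.1.ordConnected.out ha hb
  have h1 : fa ≤ (f b - f a) / (b - a) := by
    have ht : Tendsto (slope f a) (𝓝[>] a) (𝓝 fa) :=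
      (hasDerivAt_iff_tendsto_slope.1 hfa).mono_left
        (nhdsWithin_mono a fun x hx => ne_of_gt hx)
    refine le_of_tendsto ht ?_
    filter_upwards [Ioo_mem_nhdsGT_of_mem ⟨le_refl a, hab⟩] with x hx
    rw [slope_def_field]
    exact hf.secant_mono ha (hsub ⟨hx.1.le, hx.2.le⟩) hb (ne_of_gt hx.1) (ne_of_gt hab) hx.2.le
  have h2 : (f b - f a) / (b - a) ≤ fb := by
    have ht : Tendsto (slope f b) (𝓝[<] b) (𝓝 fb) :=
      (hasDerivAt_iff_tendsto_slope.1 hfb).mono_left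
        (nhdsWithin_mono b fun x hx => ne_of_lt hx)
    refine ge_of_tendsto ht ?_
    filter_upwards [Ioo_mem_nhdsLT_of_mem ⟨hab, le_refl b⟩] with x hx
    rw [slope_def_field]
    have key : (f a - f b) / (a - b) ≤ (f x - f b) / (x - b) :=
      hf.secant_mono hb ha (hsub ⟨hx.1.le, hx.2.le⟩) (ne_of_lt hab) (ne_of_lt hx.2) hx.1.le
    have : (f a - f b) / (a - b) = (f b - f a) / (b - a) := by
      rw [← neg_sub (f b) (f a), ← neg_sub b a, neg_div_neg_eq]
    linarith
  linarith

/-- continuity of the inverse of a strictly monotone function along a branch -/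
lemma branch_continuousAt {f w : ℝ → ℝ} {c d : ℝ}
    (hmono : StrictMonoOn f (Icc c d))
    (hw : ∀ u ∈ Ioo (f c) (f d), w u ∈ Ioo c d ∧ f (w u) = u)
    {u₀ : ℝ} (hu₀ : u₀ ∈ Ioo (f c) (f d)) : ContinuousAt w u₀ := by
  have hS : IsOpen (Ioo (f c) (f d)) := isOpen_Ioo
  have ha₀ := (hw u₀ hu₀).1
  rw [ContinuousAt, tendsto_order]
  constructor
  · intro b hb
    rcases le_or_gt b c with hbc | hbc
    · filter_upwards [hS.eventually_mem hu₀] with u hu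
      exact lt_of_le_of_lt hbc (hw u hu).1.1
    · -- c < b < w u₀
      have hbd : b ∈ Ioo c d := ⟨hbc, hb.trans ha₀.2⟩
      have hcd : c ≤ d := (hbd.1.trans hbd.2).le
      have hfb : f b ∈ Ioo (f c) (f d) :=
        ⟨hmono ⟨le_refl c, hcd⟩ ⟨hbd.1.le, hbd.2.le⟩ hbd.1,
         hmono ⟨hbd.1.le, hbd.2.le⟩ ⟨hcd, le_refl d⟩ hbd.2⟩
      have hfbu : f b < u₀ := by
        have := hmono ⟨hbd.1.le, hbd.2.le⟩ ⟨ha₀.1.le, ha₀.2.le⟩ hb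
        rwa [(hw u₀ hu₀).2] at this
      filter_upwards [hS.eventually_mem hu₀, eventually_gt_nhds hfbu] with u hu hub
      by_contra hc
      push_neg at hc
      have := hmono ⟨(hw u hu).1.1.le, (hw u hu).1.2.le⟩ ⟨hbd.1.le, hbd.2.le⟩
      rcases eq_or_lt_of_le hc with he | hl
      · rw [← he, (hw u hu).2] at hub; exact lt_irrefl _ hub
      · have := this hl; rw [(hw u hu).2] at this; linarith
  · intro b hb
    rcases le_or_gt d b with hdb | hdb
    · filter_upwards [hS.eventually_mem hu₀] with u hu
      exact lt_of_lt_of_le (hw u hu).1.2 hdb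
    · have hbd : b ∈ Ioo c d := ⟨ha₀.1.trans hb, hdb⟩
      have hfbu : u₀ < f b := by
        have := hmono ⟨ha₀.1.le, ha₀.2.le⟩ ⟨hbd.1.le, hbd.2.le⟩ hb
        rwa [(hw u₀ hu₀).2] at this
      filter_upwards [hS.eventually_mem hu₀, eventually_lt_nhds hfbu] with u hu hub
      by_contra hc
      push_neg at hc
      have := hmono ⟨hbd.1.le, hbd.2.le⟩ ⟨(hw u hu).1.1.le, (hw u hu).1.2.le⟩
      rcases eq_or_lt_of_le hc with he | hl
      · rw [he, (hw u hu).2] at hub; exact lt_irrefl _ hub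
      · have := this hl; rw [(hw u hu).2] at this; linarith

lemma kernel_integrableOn {E qq : ℝ} (hE : 0 < E) (hq1 : -1 < qq) (hq0 : qq ≤ 0) :
    IntegrableOn (fun u => (E - u) ^ qq * (Real.sqrt u)⁻¹) (Ioo 0 E) volume := by
  have hE2 : 0 < E / 2 := by linarith
  have hsub : Ioo 0 E ⊆ Ioc 0 (E / 2) ∪ Ioo (E / 2) E := by
    intro u hu
    rcases le_or_gt u (E / 2) with h | h
    · exact Or.inl ⟨hu.1, h⟩
    · exact Or.inr ⟨h, hu.2⟩
  refine IntegrableOn.mono_set ?_ hsub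
  refine IntegrableOn.union ?_ ?_
  · -- piece 1 : near 0
    have hint : IntegrableOn (fun u : ℝ => (E / 2) ^ qq * u ^ (-(1 / 2) : ℝ)) (Ioc 0 (E / 2)) volume := by
      have := (intervalIntegrable_rpow' (a := 0) (b := E / 2) (r := -(1/2)) (by norm_num))
      rw [intervalIntegrable_iff, uIoc_of_le hE2.le] at this
      exact this.const_mul _
    refine Integrable.mono' hint ?_ ?_
    · -- measurability
      apply ContinuousOn.aestronglyMeasurable ?_ measurableSet_Ioc
      apply ContinuousOn.mul
      · apply ContinuousOn.rpow_const (continuous_const.sub continuous_id).continuousOn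
        intro x hx
        exact Or.inl (by simp only [Pi.sub_apply, id]; intro h; nlinarith [hx.2])
      · exact Real.continuous_sqrt.continuousOn.inv₀ fun x hx =>
          ne_of_gt (Real.sqrt_pos.2 hx.1)
    · refine (ae_restrict_iff' measurableSet_Ioc).2 (ae_of_all _ fun u hu => ?_)
      have h1 : (0:ℝ) < E - u := by nlinarith [hu.2]
      have h2 : (E - u) ^ qq ≤ (E / 2) ^ qq :=
        Real.rpow_le_rpow_of_nonpos hE2 (by linarith [hu.2]) hq0
      have h3 : (Real.sqrt u)⁻¹ = u ^ (-(1/2) : ℝ) := by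
        rw [Real.rpow_neg hu.1.le, Real.sqrt_eq_rpow]
      rw [Real.norm_eq_abs, abs_mul, abs_of_nonneg (Real.rpow_nonneg h1.le _),
        abs_of_nonneg (inv_nonneg.2 (Real.sqrt_nonneg u)), h3]
      exact mul_le_mul_of_nonneg_right h2 (Real.rpow_nonneg hu.1.le _)
  · -- piece 2 : near E
    have hint : IntegrableOn (fun u : ℝ => (E - u) ^ qq * (Real.sqrt (E / 2))⁻¹)
        (Ioo (E / 2) E) volume := by
      have h0 : IntervalIntegrable (fun x : ℝ => x ^ qq) volume 0 (E / 2) :=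
        intervalIntegrable_rpow' hq1
      have h1 := (h0.comp_sub_left E).symm
      rw [intervalIntegrable_iff] at h1
      have he : Set.uIoc (E - E / 2) (E - 0) = Ioc (E / 2) E := by
        rw [sub_zero, uIoc_of_le (by linarith : E - E / 2 ≤ E)]
        ring_nf
      rw [he] at h1
      exact (h1.mono_set Ioo_subset_Ioc_self).mul_const _
    refine Integrable.mono' hint ?_ ?_
    · apply ContinuousOn.aestronglyMeasurable ?_ measurableSet_Ioo
      apply ContinuousOn.mul
      · apply ContinuousOn.rpow_const (continuous_const.sub continuous_id).continuousOn
        intro x hx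
        exact Or.inl (by simp only [Pi.sub_apply, id]; intro h; nlinarith [hx.2])
      · exact Real.continuous_sqrt.continuousOn.inv₀ fun x hx =>
          ne_of_gt (Real.sqrt_pos.2 (hE2.trans hx.1))
    · refine (ae_restrict_iff' measurableSet_Ioo).2 (ae_of_all _ fun u hu => ?_)
      have h1 : (0:ℝ) < E - u := by linarith [hu.2]
      have h2 : (Real.sqrt u)⁻¹ ≤ (Real.sqrt (E / 2))⁻¹ := by
        apply inv_anti₀ (Real.sqrt_pos.2 hE2)
        exact Real.sqrt_le_sqrt hu.1.le
      rw [Real.norm_eq_abs, abs_mul, abs_of_nonneg (Real.rpow_nonneg h1.le _),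
        abs_of_nonneg (inv_nonneg.2 (Real.sqrt_nonneg u))]
      exact mul_le_mul_of_nonneg_left h2 (Real.rpow_nonneg h1.le _)
end helpers

/-- p-Laplacian version of Chicone's criterion (Theorem 1.2).
If `V` is `C³`, satisfies (H1) and (H3), and `V/(V')²` (extended by continuity at `A`
with value `1/(2V''(A))`) is convex on `(0,B)`, then the minimal-period function `T`
is strictly increasing on `(0,E*)`. -/
theorem period_strictMono_of_chicone
    (p : ℝ) (hp : 2 < p)
    (V : ℝ → ℝ) (A B Estar : ℝ)
    (hA : 0 < A) (hAB : A < B) (hEstar : 0 < Estar)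
    (hVreg : ContDiffOn ℝ 3 V (Set.Ici 0))
    (hV0 : V 0 = Estar) (hVB : V B = Estar)
    (hV'0 : deriv V 0 = 0) (hVA : V A = 0) (hV'A : deriv V A = 0)
    (hV''A : deriv (deriv V) A ≠ 0)
    (hVrange : ∀ w ∈ Set.Ioo 0 A ∪ Set.Ioo A B, 0 < V w ∧ V w < Estar)
    (hH3 : ∀ w ∈ Set.Ioo 0 A ∪ Set.Ioo A B, 0 < (w - A) * deriv V w)
    (g : ℝ → ℝ)
    (hg : ∀ w ∈ Set.Ioo 0 B, w ≠ A → g w = V w / (deriv V w) ^ 2)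
    (hgA : g A = 1 / (2 * deriv (deriv V) A))
    (hgconv : ConvexOn ℝ (Set.Ioo 0 B) g)
    (w1 w2 : ℝ → ℝ)
    (hw1 : ∀ E ∈ Set.Ioo 0 Estar, w1 E ∈ Set.Ioo 0 A ∧ V (w1 E) = E)
    (hw2 : ∀ E ∈ Set.Ioo 0 Estar, w2 E ∈ Set.Ioo A B ∧ V (w2 E) = E)
    (T : ℝ → ℝ)
    (hT : ∀ E ∈ Set.Ioo 0 Estar,
      T E = 2 * (p / (p - 1)) ^ (-(1 / p)) *
        ∫ w in (w1 E)..(w2 E), (E - V w) ^ (-(1 / p))) :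
    StrictMonoOn T (Set.Ioo 0 Estar) := by
  classical
  have hp0 : (0:ℝ) < p := by linarith
  set q : ℝ := -(1/p) with hqdef
  have hq0 : q ≤ 0 := by
    rw [hqdef]
    exact neg_nonpos.2 (by positivity)
  have hq1 : (-1:ℝ) < q := by
    rw [hqdef]
    have h1 : 1/p < 1 := by
      rw [div_lt_one hp0]; linarith
    linarith
  have hqhalf : (0:ℝ) < 1 + q + -(1/2) := by
    rw [hqdef]
    have := one_div_lt_one_div_of_lt (by norm_num : (0:ℝ) < 2) hp
    linarith
  -- smoothness facts
  have hVcont : ContinuousOn V (Ici 0) := hVreg.continuousOn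
  have hV3 : ContDiffOn ℝ 3 V (Ioi 0) := hVreg.mono Ioi_subset_Ici_self
  have hVdiff : ∀ x : ℝ, 0 < x → HasDerivAt V (deriv V x) x := by
    intro x hx
    have h1 : DifferentiableOn ℝ V (Ioi 0) := hV3.differentiableOn (by norm_num)
    exact ((h1 x hx).differentiableAt (isOpen_Ioi.mem_nhds hx)).hasDerivAt
  have hdV2 : ContDiffOn ℝ 2 (deriv V) (Ioi 0) :=
    hV3.deriv_of_isOpen isOpen_Ioi (by norm_num)
  have hdVcont : ∀ x : ℝ, 0 < x → ContinuousAt (deriv V) x := fun x hx =>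
    hdV2.continuousOn.continuousAt (isOpen_Ioi.mem_nhds hx)
  have hdVdiff : ∀ x : ℝ, 0 < x → HasDerivAt (deriv V) (deriv (deriv V) x) x := by
    intro x hx
    have h1 : DifferentiableOn ℝ (deriv V) (Ioi 0) := hdV2.differentiableOn (by norm_num)
    exact ((h1 x hx).differentiableAt (isOpen_Ioi.mem_nhds hx)).hasDerivAt
  -- signs of the derivative
  have hV'neg : ∀ x ∈ Ioo 0 A, deriv V x < 0 := by
    intro x hx
    nlinarith [hH3 x (Or.inl hx), hx.2]
  have hV'pos : ∀ x ∈ Ioo A B, 0 < deriv V x := by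
    intro x hx
    nlinarith [hH3 x (Or.inr hx), hx.1]
  -- monotonicity of V on the two branches
  have hVanti : StrictAntiOn V (Icc 0 A) := by
    apply strictAntiOn_of_deriv_neg (convex_Icc 0 A) (hVcont.mono Icc_subset_Ici_self)
    intro x hx; rw [interior_Icc] at hx; exact hV'neg x hx
  have hVmono : StrictMonoOn V (Icc A B) := by
    apply strictMonoOn_of_deriv_pos (convex_Icc A B)
      (hVcont.mono (fun x hx => le_trans hA.le hx.1))
    intro x hx; rw [interior_Icc] at hx; exact hV'pos x hx
  -- w1 w2 basics
  have hw1m : ∀ u ∈ Ioo 0 Estar, w1 u ∈ Ioo 0 A := fun u hu => (hw1 u hu).1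
  have hw1V : ∀ u ∈ Ioo 0 Estar, V (w1 u) = u := fun u hu => (hw1 u hu).2
  have hw2m : ∀ u ∈ Ioo 0 Estar, w2 u ∈ Ioo A B := fun u hu => (hw2 u hu).1
  have hw2V : ∀ u ∈ Ioo 0 Estar, V (w2 u) = u := fun u hu => (hw2 u hu).2
  have hV'w1 : ∀ u ∈ Ioo 0 Estar, deriv V (w1 u) < 0 := fun u hu => hV'neg _ (hw1m u hu)
  have hV'w2 : ∀ u ∈ Ioo 0 Estar, 0 < deriv V (w2 u) := fun u hu => hV'pos _ (hw2m u hu)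
  -- continuity of w1 (via reflection) and w2
  have hw1cont : ∀ u ∈ Ioo 0 Estar, ContinuousAt w1 u := by
    intro u hu
    have hfm : StrictMonoOn (fun x => V (-x)) (Icc (-A) 0) := by
      intro x hx y hy hxy
      have h1 : -y < -x := by linarith
      exact hVanti ⟨neg_nonneg.2 hy.2, by linarith [hy.1]⟩
        ⟨neg_nonneg.2 hx.2, by linarith [hx.1]⟩ h1
    have hfc : V (-(-A)) = 0 := by rw [neg_neg]; exact hVA
    have hf0 : V (-(0:ℝ)) = Estar := by rw [neg_zero]; exact hV0
    have key : ContinuousAt (fun v => -(w1 v)) u := by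
      apply branch_continuousAt hfm ?_ ?_
      · intro v hv
        rw [hfc, hf0] at hv
        refine ⟨⟨by linarith [(hw1m v hv).2], by linarith [(hw1m v hv).1]⟩, ?_⟩
        rw [neg_neg]; exact hw1V v hv
      · rw [hfc, hf0]; exact hu
    have h2 : ContinuousAt (fun v => -(-(w1 v))) u := key.neg
    simpa using h2
  have hw2cont : ∀ u ∈ Ioo 0 Estar, ContinuousAt w2 u := by
    intro u hu
    apply branch_continuousAt hVmono ?_ ?_
    · intro v hv
      rw [hVA, hVB] at hv
      exact ⟨hw2m v hv, hw2V v hv⟩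
    · rw [hVA, hVB]; exact hu
  -- derivatives of w1 and w2
  have hw1d : ∀ u ∈ Ioo 0 Estar, HasDerivAt w1 ((deriv V (w1 u))⁻¹) u := by
    intro u hu
    apply HasDerivAt.of_local_left_inverse (hw1cont u hu) (hVdiff _ (hw1m u hu).1)
      (ne_of_lt (hV'w1 u hu))
    filter_upwards [isOpen_Ioo.eventually_mem hu] with y hy
    exact hw1V y hy
  have hw2d : ∀ u ∈ Ioo 0 Estar, HasDerivAt w2 ((deriv V (w2 u))⁻¹) u := by
    intro u hu
    apply HasDerivAt.of_local_left_inverse (hw2cont u hu)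
      (hVdiff _ (lt_trans hA (hw2m u hu).1)) (ne_of_gt (hV'w2 u hu))
    filter_upwards [isOpen_Ioo.eventually_mem hu] with y hy
    exact hw2V y hy
  -- facts about g
  have hgval : ∀ x, x ∈ Ioo 0 A ∪ Ioo A B → g x = V x / (deriv V x) ^ 2 := by
    intro x hx
    rcases hx with hx | hx
    · exact hg x ⟨hx.1, hx.2.trans hAB⟩ (ne_of_lt hx.2)
    · exact hg x ⟨hA.trans hx.1, hx.2⟩ (ne_of_gt hx.1)
  have hdVne : ∀ x, x ∈ Ioo 0 A ∪ Ioo A B → deriv V x ≠ 0 := by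
    intro x hx
    rcases hx with hx | hx
    · exact ne_of_lt (hV'neg x hx)
    · exact ne_of_gt (hV'pos x hx)
  have hgpos : ∀ x, x ∈ Ioo 0 A ∪ Ioo A B → 0 < g x := by
    intro x hx
    rw [hgval x hx]
    exact div_pos (hVrange x hx).1
      (lt_of_le_of_ne (sq_nonneg _) (Ne.symm (pow_ne_zero 2 (hdVne x hx))))
  have hxpos' : ∀ x, x ∈ Ioo 0 A ∪ Ioo A B → 0 < x := by
    intro x hx
    rcases hx with hx | hx
    · exact hx.1
    · exact hA.trans hx.1
  have hgdiff : ∀ x, x ∈ Ioo 0 A ∪ Ioo A B → DifferentiableAt ℝ g x := by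
    intro x hx
    have hxpos : 0 < x := hxpos' x hx
    have hU : ∃ U : Set ℝ, IsOpen U ∧ x ∈ U ∧ U ⊆ Ioo 0 A ∪ Ioo A B := by
      rcases hx with hx | hx
      · exact ⟨Ioo 0 A, isOpen_Ioo, hx, subset_union_left⟩
      · exact ⟨Ioo A B, isOpen_Ioo, hx, subset_union_right⟩
    obtain ⟨U, hUo, hxU, hUsub⟩ := hU
    have hev : g =ᶠ[nhds x] fun w => V w / (deriv V w) ^ 2 := by
      filter_upwards [hUo.eventually_mem hxU] with y hy
      exact hgval y (hUsub hy)
    have hder := (hVdiff x hxpos).div ((hdVdiff x hxpos).pow 2)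
      (pow_ne_zero 2 (hdVne x hx))
    exact (hev.hasDerivAt_iff.2 hder).differentiableAt
  have hgderiv : ∀ x, x ∈ Ioo 0 A ∪ Ioo A B → HasDerivAt g (deriv g x) x :=
    fun x hx => (hgdiff x hx).hasDerivAt
  -- the two key identities
  have hid1 : ∀ u ∈ Ioo 0 Estar,
      Real.sqrt (g (w1 u)) = Real.sqrt u * (-(deriv V (w1 u)))⁻¹ := by
    intro u hu
    have hd := hV'w1 u hu
    have hdn : deriv V (w1 u) ≠ 0 := ne_of_lt hd
    have h1 : g (w1 u) = (Real.sqrt u * (-(deriv V (w1 u)))⁻¹) ^ 2 := by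
      rw [hgval _ (Or.inl (hw1m u hu)), hw1V u hu, mul_pow, Real.sq_sqrt hu.1.le,
        inv_pow, neg_pow]
      field_simp
    rw [h1, Real.sqrt_sq (mul_nonneg (Real.sqrt_nonneg u)
      (inv_nonneg.2 (by linarith)))]
  have hid2 : ∀ u ∈ Ioo 0 Estar,
      Real.sqrt (g (w2 u)) = Real.sqrt u * (deriv V (w2 u))⁻¹ := by
    intro u hu
    have hd := hV'w2 u hu
    have h1 : g (w2 u) = (Real.sqrt u * (deriv V (w2 u))⁻¹) ^ 2 := by
      rw [hgval _ (Or.inr (hw2m u hu)), hw2V u hu, mul_pow, Real.sq_sqrt hu.1.le,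
        inv_pow]
      field_simp
    rw [h1, Real.sqrt_sq (mul_nonneg (Real.sqrt_nonneg u)
      (inv_nonneg.2 hd.le))]
  -- the function F
  set F : ℝ → ℝ := fun u => Real.sqrt (g (w1 u)) + Real.sqrt (g (w2 u)) with hFdef
  have hFpos : ∀ u ∈ Ioo 0 Estar, 0 < F u := fun u hu =>
    add_pos (Real.sqrt_pos.2 (hgpos _ (Or.inl (hw1m u hu))))
      (Real.sqrt_pos.2 (hgpos _ (Or.inr (hw2m u hu))))
  have hFd : ∀ u ∈ Ioo 0 Estar,
      HasDerivAt F ((deriv g (w2 u) - deriv g (w1 u)) / (2 * Real.sqrt u)) u := by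
    intro u hu
    have hmem1 : w1 u ∈ Ioo 0 A ∪ Ioo A B := Or.inl (hw1m u hu)
    have hmem2 : w2 u ∈ Ioo 0 A ∪ Ioo A B := Or.inr (hw2m u hu)
    have hg1 : g (w1 u) ≠ 0 := ne_of_gt (hgpos _ hmem1)
    have hg2 : g (w2 u) ≠ 0 := ne_of_gt (hgpos _ hmem2)
    have c1 : HasDerivAt (fun v => Real.sqrt (g (w1 v)))
        (1 / (2 * Real.sqrt (g (w1 u))) * (deriv g (w1 u) * (deriv V (w1 u))⁻¹)) u := by
      have hc : HasDerivAt (fun v => g (w1 v)) (deriv g (w1 u) * (deriv V (w1 u))⁻¹) u :=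
        (hgderiv _ hmem1).comp u (hw1d u hu)
      exact (Real.hasDerivAt_sqrt hg1).comp u hc
    have c2 : HasDerivAt (fun v => Real.sqrt (g (w2 v)))
        (1 / (2 * Real.sqrt (g (w2 u))) * (deriv g (w2 u) * (deriv V (w2 u))⁻¹)) u := by
      have hc : HasDerivAt (fun v => g (w2 v)) (deriv g (w2 u) * (deriv V (w2 u))⁻¹) u :=
        (hgderiv _ hmem2).comp u (hw2d u hu)
      exact (Real.hasDerivAt_sqrt hg2).comp u hc
    have hsum := c1.add c2
    refine hsum.congr_deriv ?_
    have hd1 := hV'w1 u hu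
    have hd2 := hV'w2 u hu
    have hd1n : deriv V (w1 u) ≠ 0 := ne_of_lt hd1
    have hd2n : deriv V (w2 u) ≠ 0 := ne_of_gt hd2
    have hsu : Real.sqrt u ≠ 0 := ne_of_gt (Real.sqrt_pos.2 hu.1)
    rw [hid1 u hu, hid2 u hu]
    field_simp
    ring
  have hFmono : MonotoneOn F (Ioo 0 Estar) := by
    apply monotoneOn_of_deriv_nonneg (convex_Ioo 0 Estar)
    · intro x hx; exact (hFd x hx).continuousAt.continuousWithinAt
    · intro x hx; rw [interior_Ioo] at hx
      exact (hFd x hx).differentiableAt.differentiableWithinAt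
    · intro x hx; rw [interior_Ioo] at hx
      rw [(hFd x hx).deriv]
      have hlt : w1 x < w2 x := lt_trans (hw1m x hx).2 (hw2m x hx).1
      have hm1 : w1 x ∈ Ioo 0 B := ⟨(hw1m x hx).1, lt_trans (hw1m x hx).2 hAB⟩
      have hm2 : w2 x ∈ Ioo 0 B := ⟨hA.trans (hw2m x hx).1, (hw2m x hx).2⟩
      have := convexOn_deriv_mono' hgconv hm1 hm2 hlt
        (hgderiv _ (Or.inl (hw1m x hx))) (hgderiv _ (Or.inr (hw2m x hx)))
      have h2 : (0:ℝ) < 2 * Real.sqrt x := by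
        have := Real.sqrt_pos.2 hx.1; linarith
      exact div_nonneg (by linarith) h2.le
  -- the function h
  set h : ℝ → ℝ := fun u => (deriv V (w2 u))⁻¹ - (deriv V (w1 u))⁻¹ with hhdef
  have hhF : ∀ u ∈ Ioo 0 Estar, h u = F u / Real.sqrt u := by
    intro u hu
    have hsu : Real.sqrt u ≠ 0 := ne_of_gt (Real.sqrt_pos.2 hu.1)
    have hd1n : deriv V (w1 u) ≠ 0 := ne_of_lt (hV'w1 u hu)
    have hd2n : deriv V (w2 u) ≠ 0 := ne_of_gt (hV'w2 u hu)
    simp only [hhdef, hFdef, hid1 u hu, hid2 u hu]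
    rw [inv_neg, eq_div_iff hsu]
    ring
  have hhpos : ∀ u ∈ Ioo 0 Estar, 0 < h u := by
    intro u hu
    have h1 : (deriv V (w2 u))⁻¹ > 0 := inv_pos.2 (hV'w2 u hu)
    have h2 : (deriv V (w1 u))⁻¹ < 0 := inv_lt_zero.2 (hV'w1 u hu)
    simp only [hhdef]; linarith
  -- integrability of the two branch integrands in the u variable
  have hIIL : ∀ E ∈ Ioo 0 Estar,
      IntegrableOn (fun u => (E - u) ^ q * (-(deriv V (w1 u))⁻¹)) (Ioo 0 E) volume := by
    intro E hE
    have hker := (kernel_integrableOn hE.1 hq1 hq0).const_mul (F E)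
    refine Integrable.mono' hker ?_ ?_
    · apply ContinuousOn.aestronglyMeasurable ?_ measurableSet_Ioo
      intro u hu
      have huS : u ∈ Ioo 0 Estar := ⟨hu.1, hu.2.trans hE.2⟩
      have c1 : ContinuousAt (fun u : ℝ => (E - u) ^ q) u := by
        apply ContinuousAt.rpow_const (continuous_const.sub continuous_id).continuousAt
        exact Or.inl (ne_of_gt (by simp only [Pi.sub_apply, id]; linarith [hu.2]))
      have c2 : ContinuousAt (fun u => -(deriv V (w1 u))⁻¹) u :=
        ((((hdVcont _ (hw1m u huS).1).comp (hw1cont u huS))).inv₀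
          (ne_of_lt (hV'w1 u huS))).neg
      exact (c1.mul c2).continuousWithinAt
    · refine (ae_restrict_iff' measurableSet_Ioo).2 (ae_of_all _ fun u hu => ?_)
      have huS : u ∈ Ioo 0 Estar := ⟨hu.1, hu.2.trans hE.2⟩
      have hEu : 0 < E - u := by linarith [hu.2]
      have hd1 := hV'w1 u huS
      have hnn : 0 ≤ -(deriv V (w1 u))⁻¹ := by
        have := inv_lt_zero.2 hd1; linarith
      have hb1 : -(deriv V (w1 u))⁻¹ = Real.sqrt (g (w1 u)) * (Real.sqrt u)⁻¹ := by
        have hsu : Real.sqrt u ≠ 0 := ne_of_gt (Real.sqrt_pos.2 hu.1)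
        rw [hid1 u huS, inv_neg, mul_comm (Real.sqrt u), mul_assoc,
          mul_inv_cancel₀ hsu, mul_one]
      rw [Real.norm_eq_abs, abs_mul, abs_of_nonneg (Real.rpow_nonneg hEu.le _),
        abs_of_nonneg hnn, hb1]
      have hsg : Real.sqrt (g (w1 u)) ≤ F E := by
        have h1 : Real.sqrt (g (w1 u)) ≤ F u :=
          le_add_of_nonneg_right (Real.sqrt_nonneg _)
        exact h1.trans (hFmono huS hE hu.2.le)
      calc (E - u) ^ q * (Real.sqrt (g (w1 u)) * (Real.sqrt u)⁻¹)
          = (Real.sqrt (g (w1 u))) * ((E - u) ^ q * (Real.sqrt u)⁻¹) := by ring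
        _ ≤ F E * ((E - u) ^ q * (Real.sqrt u)⁻¹) := by
            apply mul_le_mul_of_nonneg_right hsg
            exact mul_nonneg (Real.rpow_nonneg hEu.le _) (inv_nonneg.2 (Real.sqrt_nonneg _))
  have hIIR : ∀ E ∈ Ioo 0 Estar,
      IntegrableOn (fun u => (E - u) ^ q * (deriv V (w2 u))⁻¹) (Ioo 0 E) volume := by
    intro E hE
    have hker := (kernel_integrableOn hE.1 hq1 hq0).const_mul (F E)
    refine Integrable.mono' hker ?_ ?_
    · apply ContinuousOn.aestronglyMeasurable ?_ measurableSet_Ioo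
      intro u hu
      have huS : u ∈ Ioo 0 Estar := ⟨hu.1, hu.2.trans hE.2⟩
      have c1 : ContinuousAt (fun u : ℝ => (E - u) ^ q) u := by
        apply ContinuousAt.rpow_const (continuous_const.sub continuous_id).continuousAt
        exact Or.inl (ne_of_gt (by simp only [Pi.sub_apply, id]; linarith [hu.2]))
      have c2 : ContinuousAt (fun u => (deriv V (w2 u))⁻¹) u :=
        (((hdVcont _ (hA.trans (hw2m u huS).1)).comp (hw2cont u huS))).inv₀
          (ne_of_gt (hV'w2 u huS))
      exact (c1.mul c2).continuousWithinAt
    · refine (ae_restrict_iff' measurableSet_Ioo).2 (ae_of_all _ fun u hu => ?_)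
      have huS : u ∈ Ioo 0 Estar := ⟨hu.1, hu.2.trans hE.2⟩
      have hEu : 0 < E - u := by linarith [hu.2]
      have hd2 := hV'w2 u huS
      have hb2 : (deriv V (w2 u))⁻¹ = Real.sqrt (g (w2 u)) * (Real.sqrt u)⁻¹ := by
        have hsu : Real.sqrt u ≠ 0 := ne_of_gt (Real.sqrt_pos.2 hu.1)
        rw [hid2 u huS, mul_comm (Real.sqrt u), mul_assoc,
          mul_inv_cancel₀ hsu, mul_one]
      rw [Real.norm_eq_abs, abs_mul, abs_of_nonneg (Real.rpow_nonneg hEu.le _),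
        abs_of_nonneg (inv_nonneg.2 hd2.le), hb2]
      have hsg : Real.sqrt (g (w2 u)) ≤ F E := by
        have h1 : Real.sqrt (g (w2 u)) ≤ F u :=
          le_add_of_nonneg_left (Real.sqrt_nonneg _)
        exact h1.trans (hFmono huS hE hu.2.le)
      calc (E - u) ^ q * (Real.sqrt (g (w2 u)) * (Real.sqrt u)⁻¹)
          = (Real.sqrt (g (w2 u))) * ((E - u) ^ q * (Real.sqrt u)⁻¹) := by ring
        _ ≤ F E * ((E - u) ^ q * (Real.sqrt u)⁻¹) := by
            apply mul_le_mul_of_nonneg_right hsg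
            exact mul_nonneg (Real.rpow_nonneg hEu.le _) (inv_nonneg.2 (Real.sqrt_nonneg _))
  have hIIh : ∀ E ∈ Ioo 0 Estar,
      IntegrableOn (fun u => (E - u) ^ q * h u) (Ioo 0 E) volume := by
    intro E hE
    have h1 : IntegrableOn (fun u => (E - u) ^ q * (deriv V (w2 u))⁻¹ +
        (E - u) ^ q * (-(deriv V (w1 u))⁻¹)) (Ioo 0 E) volume :=
      (hIIR E hE).add (hIIL E hE)
    refine h1.congr_fun (fun u _ => ?_) measurableSet_Ioo
    simp only [hhdef]; ring
  -- change of variables : left branch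
  have himg1 : ∀ E ∈ Ioo 0 Estar, V '' (Ioo (w1 E) A) = Ioo 0 E := by
    intro E hE
    apply Subset.antisymm
    · rintro _ ⟨x, hx, rfl⟩
      have hxm : x ∈ Icc 0 A := ⟨le_of_lt (lt_trans (hw1m E hE).1 hx.1), hx.2.le⟩
      constructor
      · rw [← hVA]
        exact hVanti hxm (right_mem_Icc.2 hA.le) hx.2
      · rw [← hw1V E hE]
        exact hVanti ⟨(hw1m E hE).1.le, (hw1m E hE).2.le⟩ hxm hx.1
    · have hsub : Icc (w1 E) A ⊆ Ici 0 := fun x hx => le_trans (hw1m E hE).1.le hx.1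
      have := intermediate_value_Ioo' (le_of_lt (hw1m E hE).2) (hVcont.mono hsub)
      rw [hVA, hw1V E hE] at this
      exact this
  have himg2 : ∀ E ∈ Ioo 0 Estar, V '' (Ioo A (w2 E)) = Ioo 0 E := by
    intro E hE
    apply Subset.antisymm
    · rintro _ ⟨x, hx, rfl⟩
      have hxm : x ∈ Icc A B := ⟨hx.1.le, hx.2.le.trans (hw2m E hE).2.le⟩
      constructor
      · rw [← hVA]
        exact hVmono (left_mem_Icc.2 hAB.le) hxm hx.1
      · rw [← hw2V E hE]
        exact hVmono hxm ⟨(hw2m E hE).1.le, (hw2m E hE).2.le⟩ hx.2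
    · have hsub : Icc A (w2 E) ⊆ Ici 0 := fun x hx => le_trans hA.le hx.1
      have := intermediate_value_Ioo (le_of_lt (hw2m E hE).1) (hVcont.mono hsub)
      rw [hVA, hw2V E hE] at this
      exact this
  have hderL : ∀ E, E ∈ Ioo 0 Estar → ∀ x ∈ Ioo (w1 E) A,
      HasDerivWithinAt V (deriv V x) (Ioo (w1 E) A) x := fun E hE x hx =>
    (hVdiff x (lt_trans (hw1m E hE).1 hx.1)).hasDerivWithinAt
  have hinjL : ∀ E, E ∈ Ioo 0 Estar → InjOn V (Ioo (w1 E) A) := by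
    intro E hE
    have hsub : Ioo (w1 E) A ⊆ Icc 0 A := fun x hx =>
      ⟨le_of_lt (lt_trans (hw1m E hE).1 hx.1), hx.2.le⟩
    exact hVanti.injOn.mono hsub
  have hderR : ∀ E, E ∈ Ioo 0 Estar → ∀ x ∈ Ioo A (w2 E),
      HasDerivWithinAt V (deriv V x) (Ioo A (w2 E)) x := fun E hE x hx =>
    (hVdiff x (hA.trans hx.1)).hasDerivWithinAt
  have hinjR : ∀ E, E ∈ Ioo 0 Estar → InjOn V (Ioo A (w2 E)) := by
    intro E hE
    have hsub : Ioo A (w2 E) ⊆ Icc A B := fun x hx =>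
      ⟨hx.1.le, hx.2.le.trans (hw2m E hE).2.le⟩
    exact hVmono.injOn.mono hsub
  have hw1Vx : ∀ x ∈ Ioo 0 A, w1 (V x) = x := by
    intro x hx
    have hVx : V x ∈ Ioo 0 Estar := ⟨(hVrange x (Or.inl hx)).1, (hVrange x (Or.inl hx)).2⟩
    have h1 : V (w1 (V x)) = V x := hw1V _ hVx
    have hm1 : w1 (V x) ∈ Icc 0 A := ⟨(hw1m _ hVx).1.le, (hw1m _ hVx).2.le⟩
    have hm2 : x ∈ Icc 0 A := ⟨hx.1.le, hx.2.le⟩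
    exact hVanti.injOn hm1 hm2 h1
  have hw2Vx : ∀ x ∈ Ioo A B, w2 (V x) = x := by
    intro x hx
    have hVx : V x ∈ Ioo 0 Estar := ⟨(hVrange x (Or.inr hx)).1, (hVrange x (Or.inr hx)).2⟩
    have h1 : V (w2 (V x)) = V x := hw2V _ hVx
    have hm1 : w2 (V x) ∈ Icc A B := ⟨(hw2m _ hVx).1.le, (hw2m _ hVx).2.le⟩
    have hm2 : x ∈ Icc A B := ⟨hx.1.le, hx.2.le⟩
    exact hVmono.injOn hm1 hm2 h1
  have hchgL : ∀ E ∈ Ioo 0 Estar,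
      (∫ u in Ioo 0 E, (E - u) ^ q * (-(deriv V (w1 u))⁻¹)) =
        ∫ x in Ioo (w1 E) A, (E - V x) ^ q := by
    intro E hE
    rw [← himg1 E hE,
      integral_image_eq_integral_abs_deriv_smul measurableSet_Ioo (hderL E hE) (hinjL E hE)]
    apply setIntegral_congr_fun measurableSet_Ioo
    intro x hx
    have hxIoo : x ∈ Ioo 0 A := ⟨lt_trans (hw1m E hE).1 hx.1, hx.2⟩
    have hd : deriv V x < 0 := hV'neg x hxIoo
    simp only [smul_eq_mul]
    rw [hw1Vx x hxIoo, abs_of_neg hd,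
      show -deriv V x * ((E - V x) ^ q * -(deriv V x)⁻¹) =
        (E - V x) ^ q * (deriv V x * (deriv V x)⁻¹) from by ring,
      mul_inv_cancel₀ (ne_of_lt hd), mul_one]
  have hchgR : ∀ E ∈ Ioo 0 Estar,
      (∫ u in Ioo 0 E, (E - u) ^ q * (deriv V (w2 u))⁻¹) =
        ∫ x in Ioo A (w2 E), (E - V x) ^ q := by
    intro E hE
    rw [← himg2 E hE,
      integral_image_eq_integral_abs_deriv_smul measurableSet_Ioo (hderR E hE) (hinjR E hE)]
    apply setIntegral_congr_fun measurableSet_Ioo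
    intro x hx
    have hxIoo : x ∈ Ioo A B := ⟨hx.1, lt_of_lt_of_le hx.2 (hw2m E hE).2.le⟩
    have hd : 0 < deriv V x := hV'pos x hxIoo
    simp only [smul_eq_mul]
    rw [hw2Vx x hxIoo, abs_of_pos hd,
      show deriv V x * ((E - V x) ^ q * (deriv V x)⁻¹) =
        (E - V x) ^ q * (deriv V x * (deriv V x)⁻¹) from by ring,
      mul_inv_cancel₀ (ne_of_gt hd), mul_one]
  -- interval integrability in the w variable
  have hintL : ∀ E ∈ Ioo 0 Estar,
      IntervalIntegrable (fun w => (E - V w) ^ q) volume (w1 E) A := by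
    intro E hE
    have h0 := (integrableOn_image_iff_integrableOn_abs_deriv_smul measurableSet_Ioo
      (hderL E hE) (hinjL E hE) (fun u => (E - u) ^ q * (-(deriv V (w1 u))⁻¹)))
    rw [himg1 E hE] at h0
    have h1 := h0.1 (hIIL E hE)
    have h2 : IntegrableOn (fun x => (E - V x) ^ q) (Ioo (w1 E) A) volume := by
      refine h1.congr_fun (fun x hx => ?_) measurableSet_Ioo
      have hxIoo : x ∈ Ioo 0 A := ⟨lt_trans (hw1m E hE).1 hx.1, hx.2⟩
      have hd : deriv V x < 0 := hV'neg x hxIoo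
      simp only [smul_eq_mul]
      rw [hw1Vx x hxIoo, abs_of_neg hd,
        show -deriv V x * ((E - V x) ^ q * -(deriv V x)⁻¹) =
          (E - V x) ^ q * (deriv V x * (deriv V x)⁻¹) from by ring,
        mul_inv_cancel₀ (ne_of_lt hd), mul_one]
    rw [intervalIntegrable_iff, uIoc_of_le (hw1m E hE).2.le]
    exact h2.congr_set_ae Ioo_ae_eq_Ioc.symm
  have hintR : ∀ E ∈ Ioo 0 Estar,
      IntervalIntegrable (fun w => (E - V w) ^ q) volume A (w2 E) := by
    intro E hE
    have h0 := (integrableOn_image_iff_integrableOn_abs_deriv_smul measurableSet_Ioo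
      (hderR E hE) (hinjR E hE) (fun u => (E - u) ^ q * (deriv V (w2 u))⁻¹))
    rw [himg2 E hE] at h0
    have h1 := h0.1 (hIIR E hE)
    have h2 : IntegrableOn (fun x => (E - V x) ^ q) (Ioo A (w2 E)) volume := by
      refine h1.congr_fun (fun x hx => ?_) measurableSet_Ioo
      have hxIoo : x ∈ Ioo A B := ⟨hx.1, lt_of_lt_of_le hx.2 (hw2m E hE).2.le⟩
      have hd : 0 < deriv V x := hV'pos x hxIoo
      simp only [smul_eq_mul]
      rw [hw2Vx x hxIoo, abs_of_pos hd,
        show deriv V x * ((E - V x) ^ q * (deriv V x)⁻¹) =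
          (E - V x) ^ q * (deriv V x * (deriv V x)⁻¹) from by ring,
        mul_inv_cancel₀ (ne_of_gt hd), mul_one]
    rw [intervalIntegrable_iff, uIoc_of_le (hw2m E hE).1.le]
    exact h2.congr_set_ae Ioo_ae_eq_Ioc.symm
  -- Lemma A : the period integral in the u variable
  have hLemA : ∀ E ∈ Ioo 0 Estar,
      (∫ w in (w1 E)..(w2 E), (E - V w) ^ q) =
        ∫ u in Ioo 0 E, (E - u) ^ q * h u := by
    intro E hE
    rw [← integral_add_adjacent_intervals (hintL E hE) (hintR E hE),
      integral_of_le (hw1m E hE).2.le, integral_of_le (hw2m E hE).1.le,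
      integral_Ioc_eq_integral_Ioo, integral_Ioc_eq_integral_Ioo,
      ← hchgL E hE, ← hchgR E hE, ← integral_add (hIIL E hE) (hIIR E hE)]
    apply setIntegral_congr_fun measurableSet_Ioo
    intro u _
    simp only [hhdef]; ring
  -- positivity
  have hΦpos : ∀ E ∈ Ioo 0 Estar, 0 < ∫ u in Ioo 0 E, (E - u) ^ q * h u := by
    intro E hE
    have hnn : 0 ≤ᶠ[ae (volume.restrict (Ioo 0 E))] fun u => (E - u) ^ q * h u := by
      refine (ae_restrict_iff' measurableSet_Ioo).2 (ae_of_all _ fun u hu => ?_)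
      have huS : u ∈ Ioo 0 Estar := ⟨hu.1, hu.2.trans hE.2⟩
      exact le_of_lt (mul_pos (Real.rpow_pos_of_pos (by linarith [hu.2]) _) (hhpos u huS))
    rw [setIntegral_pos_iff_support_of_nonneg_ae hnn (hIIh E hE)]
    have hsub : Ioo 0 E ⊆ Function.support (fun u => (E - u) ^ q * h u) := by
      intro u hu
      have huS : u ∈ Ioo 0 Estar := ⟨hu.1, hu.2.trans hE.2⟩
      exact ne_of_gt (mul_pos (Real.rpow_pos_of_pos (by linarith [hu.2]) _) (hhpos u huS))
    have h1 : volume (Ioo (0:ℝ) E) ≤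
        volume (Function.support (fun u => (E - u) ^ q * h u) ∩ Ioo 0 E) :=
      measure_mono (subset_inter hsub Subset.rfl)
    have h2 : 0 < volume (Ioo (0:ℝ) E) := by
      rw [Real.volume_Ioo]
      exact ENNReal.ofReal_pos.2 (by linarith [hE.1])
    exact lt_of_lt_of_le h2 h1
  -- the key comparison
  have hkey : ∀ E ∈ Ioo 0 Estar, ∀ E' ∈ Ioo 0 Estar, E < E' →
      (∫ u in Ioo 0 E, (E - u) ^ q * h u) < ∫ u in Ioo 0 E', (E' - u) ^ q * h u := by
    intro E hE E' hE' hEE'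
    set k : ℝ := E' / E with hkdef
    have hk1 : 1 < k := (one_lt_div hE.1).2 hEE'
    have hkpos : (0:ℝ) < k := lt_trans one_pos hk1
    have hkE : k * E = E' := by
      rw [hkdef]
      exact div_mul_cancel₀ E' (ne_of_gt hE.1)
    have himg : (fun v => k * v) '' (Ioo 0 E) = Ioo 0 E' := by
      rw [image_mul_left_Ioo hkpos, mul_zero, hkE]
    have hderk : ∀ x ∈ Ioo (0:ℝ) E, HasDerivWithinAt (fun v => k * v) k (Ioo 0 E) x := by
      intro x _
      simpa using ((hasDerivAt_id x).const_mul k).hasDerivWithinAt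
    have hinjk : InjOn (fun v => k * v) (Ioo 0 E) :=
      fun a _ b _ hab => mul_left_cancel₀ (ne_of_gt hkpos) hab
    have hchg : (∫ u in Ioo 0 E', (E' - u) ^ q * h u) =
        ∫ v in Ioo 0 E, |k| • ((E' - k * v) ^ q * h (k * v)) := by
      rw [← himg]
      exact integral_image_eq_integral_abs_deriv_smul measurableSet_Ioo hderk hinjk _
    have heq : ∀ v ∈ Ioo (0:ℝ) E,
        |k| • ((E' - k * v) ^ q * h (k * v)) = (k * k ^ q) * ((E - v) ^ q * h (k * v)) := by
      intro v hv
      have h1 : E' - k * v = k * (E - v) := by rw [← hkE]; ring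
      rw [h1, Real.mul_rpow hkpos.le (by linarith [hv.2] : (0:ℝ) ≤ E - v),
        smul_eq_mul, abs_of_pos hkpos]
      ring
    have hIk : IntegrableOn (fun v => (E - v) ^ q * h (k * v)) (Ioo 0 E) volume := by
      have h0 := hIIh E' hE'
      rw [← himg] at h0
      rw [integrableOn_image_iff_integrableOn_abs_deriv_smul measurableSet_Ioo
        hderk hinjk] at h0
      have h2 : IntegrableOn (fun v => (k * k ^ q) * ((E - v) ^ q * h (k * v)))
          (Ioo 0 E) volume := h0.congr_fun (fun v hv => heq v hv) measurableSet_Ioo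
      have hkq : k * k ^ q ≠ 0 :=
        ne_of_gt (mul_pos hkpos (Real.rpow_pos_of_pos hkpos _))
      have h3 : IntegrableOn (fun v => (k * k ^ q)⁻¹ *
          ((k * k ^ q) * ((E - v) ^ q * h (k * v)))) (Ioo 0 E) volume :=
        h2.const_mul _
      refine h3.congr_fun (fun v _ => ?_) measurableSet_Ioo
      beta_reduce; rw [← mul_assoc, inv_mul_cancel₀ hkq, one_mul]
    have hmono2 : (∫ v in Ioo 0 E, (Real.sqrt k)⁻¹ * ((E - v) ^ q * h v)) ≤
        ∫ v in Ioo 0 E, (E - v) ^ q * h (k * v) := by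
      apply setIntegral_mono_on ((hIIh E hE).const_mul _) hIk measurableSet_Ioo
      intro v hv
      have hvS : v ∈ Ioo 0 Estar := ⟨hv.1, lt_trans (hv.2.trans_le (le_of_lt hEE')) hE'.2⟩
      have hkvS : k * v ∈ Ioo 0 Estar := by
        constructor
        · exact mul_pos hkpos hv.1
        · have : k * v < k * E := by nlinarith [hv.2]
          rw [hkE] at this
          exact this.trans hE'.2
      have hFle : F v ≤ F (k * v) := hFmono hvS hkvS (by nlinarith [hv.1])
      rw [hhF v hvS, hhF (k * v) hkvS, Real.sqrt_mul hkpos.le]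
      have hsv : 0 < Real.sqrt v := Real.sqrt_pos.2 hv.1
      have hsk : 0 < Real.sqrt k := Real.sqrt_pos.2 hkpos
      have hrw : (Real.sqrt k)⁻¹ * ((E - v) ^ q * (F v / Real.sqrt v)) =
          ((E - v) ^ q * F v) / (Real.sqrt k * Real.sqrt v) := by
        rw [div_eq_mul_inv, div_eq_mul_inv, mul_inv]
        ring
      have hrw2 : (E - v) ^ q * (F (k * v) / (Real.sqrt k * Real.sqrt v)) =
          ((E - v) ^ q * F (k * v)) / (Real.sqrt k * Real.sqrt v) := by
        ring
      rw [hrw, hrw2]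
      have hXnn : (0:ℝ) ≤ (E - v) ^ q := Real.rpow_nonneg (by linarith [hv.2]) _
      exact (div_le_div_iff_of_pos_right (mul_pos hsk hsv)).mpr
        (mul_le_mul_of_nonneg_left hFle hXnn)
    have e0 : (∫ v in Ioo 0 E, |k| • ((E' - k * v) ^ q * h (k * v))) =
        ∫ v in Ioo 0 E, (k * k ^ q) * ((E - v) ^ q * h (k * v)) :=
      setIntegral_congr_fun measurableSet_Ioo (fun v hv => heq v hv)
    have e1 : (∫ u in Ioo 0 E', (E' - u) ^ q * h u) =
        (k * k ^ q) * ∫ v in Ioo 0 E, (E - v) ^ q * h (k * v) := by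
      rw [hchg, e0, MeasureTheory.integral_const_mul]
    have e2 : (∫ v in Ioo 0 E, (Real.sqrt k)⁻¹ * ((E - v) ^ q * h v)) =
        (Real.sqrt k)⁻¹ * ∫ v in Ioo 0 E, (E - v) ^ q * h v := integral_const_mul _ _
    have hc1 : 1 < k * k ^ q * (Real.sqrt k)⁻¹ := by
      have hrw3 : k * k ^ q * (Real.sqrt k)⁻¹ = k ^ (1 + q + -(1/2) : ℝ) := by
        rw [Real.sqrt_eq_rpow, Real.rpow_add hkpos, Real.rpow_add hkpos,
          Real.rpow_one, Real.rpow_neg hkpos.le, Real.rpow_neg hkpos.le]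
      rw [hrw3]
      exact (Real.one_lt_rpow_iff_of_pos hkpos).2 (Or.inl ⟨hk1, hqhalf⟩)
    have hΦE := hΦpos E hE
    calc (∫ u in Ioo 0 E, (E - u) ^ q * h u)
        = 1 * ∫ u in Ioo 0 E, (E - u) ^ q * h u := (one_mul _).symm
      _ < (k * k ^ q * (Real.sqrt k)⁻¹) * ∫ u in Ioo 0 E, (E - u) ^ q * h u :=
          mul_lt_mul_of_pos_right hc1 hΦE
      _ = (k * k ^ q) * ((Real.sqrt k)⁻¹ * ∫ u in Ioo 0 E, (E - u) ^ q * h u) := by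
          ring
      _ = (k * k ^ q) * ∫ v in Ioo 0 E, (Real.sqrt k)⁻¹ * ((E - v) ^ q * h v) := by
          rw [e2]
      _ ≤ (k * k ^ q) * ∫ v in Ioo 0 E, (E - v) ^ q * h (k * v) := by
          apply mul_le_mul_of_nonneg_left hmono2
          exact (mul_pos hkpos (Real.rpow_pos_of_pos hkpos q)).le
      _ = ∫ u in Ioo 0 E', (E' - u) ^ q * h u := e1.symm
  -- conclusion
  intro E hE E' hE' hEE'
  rw [hT E hE, hT E' hE', hLemA E hE, hLemA E' hE']
  have hc : (0:ℝ) < 2 * (p / (p - 1)) ^ q := by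
    have h1 : 0 < p / (p - 1) := div_pos hp0 (by linarith)
    have h2 : 0 < (p / (p - 1)) ^ q := Real.rpow_pos_of_pos h1 q
    linarith
  exact mul_lt_mul_of_pos_left (hkey E hE E' hE' hEE') hc
end

section
/- Let p > 1 with Hölder conjugate p' = p/(p−1), and let V satisfy (H1) and (H3) with constants 0 < A < B and E* = V(0). Define h(w) = sign(w−A)·√(V(w)) for w ∈ (0,B), with h(A) = 0, so that h is a strictly increasing bijection from (w₁(E), w₂(E)) onto (−√E, √E) for each E ∈ (0,E*). Then for every E ∈ (0,E*): T(E) = 2·E^{1/2 − 1/p}·(p')^{−1/p} · ∫_{−π/2}^{π/2} (cos θ)^{1−2/p} / h'(h^{−1}(√E · sin θ)) dθ, where h^{−1} denotes the inverse of h on (0,B). -/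
open Set Real MeasureTheory

/-- under (H1) and (H3), with `h(w) = sign(w−A)√(V(w))`, the minimal
period can be written as
`T(E) = 2 E^{1/2−1/p} (p')^{−1/p} ∫_{−π/2}^{π/2} (cos θ)^{1−2/p} / h'(h⁻¹(√E sin θ)) dθ`. -/
theorem period_reparametrization
    (p : ℝ) (hp : 1 < p)
    (V : ℝ → ℝ) (A B Estar : ℝ)
    (hA : 0 < A) (hAB : A < B) (hEstar : 0 < Estar)
    (hVreg : ContDiffOn ℝ 2 V (Set.Ici 0))
    (hV0 : V 0 = Estar) (hVB : V B = Estar)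
    (hV'0 : deriv V 0 = 0) (hVA : V A = 0) (hV'A : deriv V A = 0)
    (hV''A : deriv (deriv V) A ≠ 0)
    (hVrange : ∀ w ∈ Set.Ioo 0 A ∪ Set.Ioo A B, 0 < V w ∧ V w < Estar)
    (hH3 : ∀ w ∈ Set.Ioo 0 A ∪ Set.Ioo A B, 0 < (w - A) * deriv V w)
    (w1 w2 : ℝ → ℝ)
    (hw1 : ∀ E ∈ Set.Ioo 0 Estar, w1 E ∈ Set.Ioo 0 A ∧ V (w1 E) = E)
    (hw2 : ∀ E ∈ Set.Ioo 0 Estar, w2 E ∈ Set.Ioo A B ∧ V (w2 E) = E)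
    (T : ℝ → ℝ)
    (hT : ∀ E ∈ Set.Ioo 0 Estar,
      T E = 2 * (p / (p - 1)) ^ (-(1 / p)) *
        ∫ w in (w1 E)..(w2 E), (E - V w) ^ (-(1 / p)))
    (h hinv : ℝ → ℝ)
    (hh : ∀ w ∈ Set.Ioo 0 B, h w = Real.sign (w - A) * Real.sqrt (V w))
    (hhA : h A = 0)
    (hmono : StrictMonoOn h (Set.Ioo 0 B))
    (hbij : ∀ E ∈ Set.Ioo 0 Estar,
      Set.BijOn h (Set.Ioo (w1 E) (w2 E))
        (Set.Ioo (-Real.sqrt E) (Real.sqrt E)))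
    (hinvh : ∀ w ∈ Set.Ioo 0 B, hinv (h w) = w) :
    ∀ E ∈ Set.Ioo 0 Estar,
      T E = 2 * E ^ (1 / 2 - 1 / p) * (p / (p - 1)) ^ (-(1 / p)) *
        ∫ θ in (-(Real.pi / 2))..(Real.pi / 2),
          (Real.cos θ) ^ (1 - 2 / p) /
            deriv h (hinv (Real.sqrt E * Real.sin θ)) := by
  intro E hE
  obtain ⟨hE0, hEs⟩ := hE
  have hsE : (0:ℝ) < Real.sqrt E := Real.sqrt_pos.2 hE0
  obtain ⟨ha, hVa⟩ := hw1 E ⟨hE0, hEs⟩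
  obtain ⟨hb, hVb⟩ := hw2 E ⟨hE0, hEs⟩
  set sE := Real.sqrt E with hsEdef
  set a := w1 E with hadef
  set b := w2 E with hbdef
  have hab : a < b := ha.2.trans hb.1
  have hsub : Set.Ioo a b ⊆ Set.Ioo 0 B := fun w hw => ⟨ha.1.trans hw.1, hw.2.trans hb.2⟩
  have hbijE := hbij E ⟨hE0, hEs⟩
  have hAmem : A ∈ Set.Ioo 0 B := ⟨hA, hAB⟩
  -- membership in the union for points ≠ A
  have hmemU : ∀ w ∈ Set.Ioo 0 B, w ≠ A → w ∈ Set.Ioo 0 A ∪ Set.Ioo A B := by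
    intro w hw hwA
    rcases lt_or_gt_of_ne hwA with hlt | hgt
    · exact Or.inl ⟨hw.1, hlt⟩
    · exact Or.inr ⟨hgt, hw.2⟩
  -- (h w)^2 = V w on (0,B)
  have hsq : ∀ w ∈ Set.Ioo 0 B, h w ^ 2 = V w := by
    intro w hw
    rcases eq_or_ne w A with rfl | hwA
    · rw [hhA, hVA]; ring
    · have hVpos : 0 < V w := (hVrange w (hmemU w hw hwA)).1
      rw [hh w hw]
      rcases lt_or_gt_of_ne hwA with hlt | hgt
      · rw [Real.sign_of_neg (by linarith : w - A < 0)]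
        rw [mul_pow, Real.sq_sqrt hVpos.le]; ring
      · rw [Real.sign_of_pos (by linarith : 0 < w - A)]
        rw [mul_pow, Real.sq_sqrt hVpos.le]; ring
  -- the substitution map
  set F : ℝ → ℝ := fun θ => hinv (sE * Real.sin θ) with hFdef
  set I : Set ℝ := Set.Ioo (-(Real.pi/2)) (Real.pi/2) with hIdef
  have hsin : ∀ θ ∈ I, sE * Real.sin θ ∈ Set.Ioo (-sE) sE := by
    intro θ hθ
    have h1 : Real.sin θ < 1 := by
      have := Real.strictMonoOn_sin (Set.mem_Icc.2 ⟨hθ.1.le, hθ.2.le⟩)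
        (Set.mem_Icc.2 ⟨by linarith [hθ.1, hθ.2, Real.pi_pos], le_refl (Real.pi/2)⟩) hθ.2
      simpa using this
    have h2 : -1 < Real.sin θ := by
      have := Real.strictMonoOn_sin
        (Set.mem_Icc.2 ⟨le_refl (-(Real.pi/2)), by linarith [hθ.1, hθ.2, Real.pi_pos]⟩)
        (Set.mem_Icc.2 ⟨hθ.1.le, hθ.2.le⟩) hθ.1
      simpa using this
    constructor
    · nlinarith
    · nlinarith
  have hF : ∀ θ ∈ I, F θ ∈ Set.Ioo a b ∧ h (F θ) = sE * Real.sin θ := by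
    intro θ hθ
    obtain ⟨w, hw, hweq⟩ := hbijE.surjOn (hsin θ hθ)
    have : F θ = w := by rw [hFdef]; simp only [← hweq]; exact hinvh w (hsub hw)
    rw [this]; exact ⟨hw, hweq⟩
  have hFA : ∀ θ ∈ I, θ ≠ 0 → F θ ≠ A := by
    intro θ hθ hθ0 hcon
    have hsin0 : Real.sin θ ≠ 0 := fun hs => hθ0
      ((Real.sin_eq_zero_iff_of_lt_of_lt
        (by linarith [hθ.1, Real.pi_pos] : -Real.pi < θ)
        (by linarith [hθ.2, Real.pi_pos] : θ < Real.pi)).1 hs)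
    have heq := (hF θ hθ).2
    rw [hcon, hhA] at heq
    rcases mul_eq_zero.1 heq.symm with h' | h'
    · exact hsE.ne' h'
    · exact hsin0 h'
  -- derivative of h away from A
  have hderiv : ∀ w ∈ Set.Ioo a b, w ≠ A →
      HasDerivAt h (deriv h w) w ∧ 0 < deriv h w := by
    intro w hw hwA
    have hw' : w ∈ Set.Ioo 0 B := hsub hw
    have hU := hmemU w hw' hwA
    have hVpos : 0 < V w := (hVrange w hU).1
    have hVd : HasDerivAt V (deriv V w) w := by
      have hct : ContDiffAt ℝ 2 V w := hVreg.contDiffAt (Ici_mem_nhds hw'.1)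
      exact (hct.differentiableAt (by norm_num)).hasDerivAt
    have hsqrt : HasDerivAt (fun u => Real.sqrt (V u))
        (deriv V w / (2 * Real.sqrt (V w))) w := hVd.sqrt hVpos.ne'
    have hsqrtpos : 0 < Real.sqrt (V w) := Real.sqrt_pos.2 hVpos
    rcases hU with hlt | hgt
    · -- w < A : h = -√V near w
      have hV'neg : deriv V w < 0 := by
        have := hH3 w (Or.inl hlt)
        nlinarith [hlt.2]
      have heq : h =ᶠ[nhds w] (fun u => -Real.sqrt (V u)) := by
        filter_upwards [isOpen_Ioo.mem_nhds hlt] with u hu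
        have hu' : u ∈ Set.Ioo 0 B := ⟨hu.1, hu.2.trans hAB⟩
        rw [hh u hu', Real.sign_of_neg (by linarith [hu.2] : u - A < 0)]
        ring
      have hd : HasDerivAt h (-(deriv V w / (2 * Real.sqrt (V w)))) w :=
        hsqrt.neg.congr_of_eventuallyEq heq
      have hpos : 0 < -(deriv V w / (2 * Real.sqrt (V w))) := by
        rw [neg_pos]
        exact div_neg_of_neg_of_pos hV'neg (by positivity)
      rw [hd.deriv]; exact ⟨hd, hpos⟩
    · -- A < w : h = √V near w
      have hV'pos : 0 < deriv V w := by
        have := hH3 w (Or.inr hgt)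
        nlinarith [hgt.1]
      have heq : h =ᶠ[nhds w] (fun u => Real.sqrt (V u)) := by
        filter_upwards [isOpen_Ioo.mem_nhds hgt] with u hu
        have hu' : u ∈ Set.Ioo 0 B := ⟨hA.trans hu.1, hu.2⟩
        rw [hh u hu', Real.sign_of_pos (by linarith [hu.1] : 0 < u - A), one_mul]
      have hd : HasDerivAt h (deriv V w / (2 * Real.sqrt (V w))) w :=
        hsqrt.congr_of_eventuallyEq heq
      have hpos : 0 < deriv V w / (2 * Real.sqrt (V w)) := by positivity
      rw [hd.deriv]; exact ⟨hd, hpos⟩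
  -- hinv on (-sE, sE)
  have himg : ∀ y ∈ Set.Ioo (-sE) sE, hinv y ∈ Set.Ioo a b ∧ h (hinv y) = y := by
    intro y hy
    obtain ⟨w, hw, hweq⟩ := hbijE.surjOn hy
    have : hinv y = w := by rw [← hweq]; exact hinvh w (hsub hw)
    rw [this]; exact ⟨hw, hweq⟩
  have hinvmono : StrictMonoOn hinv (Set.Ioo (-sE) sE) := by
    intro y1 h1 y2 h2 h12
    have hm1 := himg y1 h1
    have hm2 := himg y2 h2
    rw [← (hmono.lt_iff_lt (hsub hm1.1) (hsub hm2.1)), hm1.2, hm2.2]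
    exact h12
  have himgset : hinv '' (Set.Ioo (-sE) sE) = Set.Ioo a b := by
    ext w
    constructor
    · rintro ⟨y, hy, rfl⟩
      exact (himg y hy).1
    · intro hw
      exact ⟨h w, hbijE.mapsTo hw, hinvh w (hsub hw)⟩
  have hinvcont : ∀ y ∈ Set.Ioo (-sE) sE, ContinuousAt hinv y := by
    intro y hy
    refine hinvmono.continuousAt_of_image_mem_nhds (isOpen_Ioo.mem_nhds hy) ?_
    rw [himgset]
    exact isOpen_Ioo.mem_nhds (himg y hy).1
  -- derivative of F on s = I \ {0}
  set s : Set ℝ := I \ {0} with hsdef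
  set F' : ℝ → ℝ := fun θ => sE * Real.cos θ / deriv h (F θ) with hF'def
  have hFmem : ∀ θ ∈ s, F θ ∈ Set.Ioo a b ∧ F θ ≠ A ∧ 0 < deriv h (F θ) ∧
      HasDerivAt h (deriv h (F θ)) (F θ) := by
    intro θ hθ
    have h1 := hF θ hθ.1
    have h2 := hFA θ hθ.1 (by simpa using hθ.2)
    have h3 := hderiv (F θ) h1.1 h2
    exact ⟨h1.1, h2, h3.2, h3.1⟩
  have hFderiv : ∀ θ ∈ s, HasDerivAt F (F' θ) θ := by
    intro θ hθ
    have hy : sE * Real.sin θ ∈ Set.Ioo (-sE) sE := hsin θ hθ.1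
    obtain ⟨hFw, hFA', hdpos, hdh⟩ := hFmem θ hθ
    have hhF : h (F θ) = sE * Real.sin θ := (hF θ hθ.1).2
    have hinvd : HasDerivAt hinv (deriv h (F θ))⁻¹ (sE * Real.sin θ) :=
      HasDerivAt.of_local_left_inverse (hinvcont _ hy) hdh hdpos.ne'
        (by filter_upwards [isOpen_Ioo.mem_nhds hy] with z hz
            exact (himg z hz).2)
    have hgd : HasDerivAt (fun θ => sE * Real.sin θ) (sE * Real.cos θ) θ :=
      (Real.hasDerivAt_sin θ).const_mul sE
    have := hinvd.comp θ hgd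
    refine this.congr_deriv ?_
    rw [hF'def]
    ring
  have hFinj : Set.InjOn F s := by
    intro θ1 h1 θ2 h2 heq
    have e1 := (hF θ1 h1.1).2
    have e2 := (hF θ2 h2.1).2
    have : sE * Real.sin θ1 = sE * Real.sin θ2 := by rw [← e1, ← e2, heq]
    have hss : Real.sin θ1 = Real.sin θ2 := mul_left_cancel₀ hsE.ne' this
    exact Real.strictMonoOn_sin.injOn
      (Set.mem_Icc.2 ⟨h1.1.1.le, h1.1.2.le⟩)
      (Set.mem_Icc.2 ⟨h2.1.1.le, h2.1.2.le⟩) hss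
  have hFimgset : F '' s = Set.Ioo a b \ {A} := by
    ext w
    constructor
    · rintro ⟨θ, hθ, rfl⟩
      exact ⟨(hF θ hθ.1).1, by simpa using hFA θ hθ.1 (by simpa using hθ.2)⟩
    · rintro ⟨hw, hwA⟩
      have hwA' : w ≠ A := by simpa using hwA
      have hy : h w ∈ Set.Ioo (-sE) sE := hbijE.mapsTo hw
      have hy0 : h w ≠ 0 := by
        intro hcon
        exact hwA' (hmono.injOn (hsub hw) hAmem (by rw [hcon, hhA]))
      set x := h w / sE with hxdef
      have hx1 : -1 < x := by
        rw [hxdef]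
        rw [neg_lt, ← neg_div]
        exact (div_lt_one hsE).2 (by linarith [hy.1])
      have hx2 : x < 1 := (div_lt_one hsE).2 hy.2
      refine ⟨Real.arcsin x, ⟨⟨?_, ?_⟩, ?_⟩, ?_⟩
      · exact Real.neg_pi_div_two_lt_arcsin.2 hx1
      · exact Real.arcsin_lt_pi_div_two.2 hx2
      · simp only [Set.mem_singleton_iff]
        rw [Real.arcsin_eq_zero_iff]
        intro hcon
        rw [hxdef, div_eq_zero_iff] at hcon
        rcases hcon with hcon | hcon
        · exact hy0 hcon
        · exact hsE.ne' hcon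
      · rw [hFdef]
        simp only
        rw [Real.sin_arcsin hx1.le hx2.le, hxdef, mul_div_cancel₀ _ hsE.ne']
        exact hinvh w (hsub hw)
  have hs_meas : MeasurableSet s := measurableSet_Ioo.diff (measurableSet_singleton 0)
  -- change of variables
  have key := integral_image_eq_integral_abs_deriv_smul hs_meas
    (fun θ hθ => (hFderiv θ hθ).hasDerivWithinAt) hFinj
    (fun w => (E - V w) ^ (-(1/p)) : ℝ → ℝ)
  rw [hFimgset] at key
  have hnullA : (Set.Ioo a b \ {A} : Set ℝ) =ᵐ[volume] Set.Ioo a b :=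
    MeasureTheory.diff_ae_eq_self.2
      (measure_mono_null Set.inter_subset_right (measure_singleton A))
  have hnull0 : s =ᵐ[volume] I :=
    MeasureTheory.diff_ae_eq_self.2
      (measure_mono_null Set.inter_subset_right (measure_singleton 0))
  rw [setIntegral_congr_set hnullA] at key
  have hptwise : Set.EqOn (fun θ => |F' θ| • (E - V (F θ)) ^ (-(1/p)))
      (fun θ => E ^ (1/2 - 1/p) * ((Real.cos θ) ^ (1 - 2/p) / deriv h (F θ))) s := by
    intro θ hθ
    obtain ⟨hFw, hFA', hdpos, _⟩ := hFmem θ hθ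
    have hc : 0 < Real.cos θ := Real.cos_pos_of_mem_Ioo hθ.1
    have hVF : V (F θ) = E * Real.sin θ ^ 2 := by
      rw [← hsq (F θ) (hsub hFw), (hF θ hθ.1).2, mul_pow, hsEdef, Real.sq_sqrt hE0.le]
    have hEV : E - V (F θ) = E * Real.cos θ ^ 2 := by
      rw [hVF, Real.cos_sq']; ring
    have hFpos : 0 < F' θ := by
      rw [hF'def]; positivity
    simp only [smul_eq_mul]
    rw [abs_of_pos hFpos, hEV, Real.mul_rpow hE0.le (by positivity), hF'def]
    have h1 : (Real.cos θ ^ 2 : ℝ) ^ (-(1/p)) = Real.cos θ ^ (-(2/p)) := by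
      rw [← Real.rpow_natCast (Real.cos θ) 2, ← Real.rpow_mul hc.le]
      congr 1
      push_cast
      ring
    have h2 : sE = E ^ ((1:ℝ)/2) := by rw [hsEdef, Real.sqrt_eq_rpow]
    have e1 : E ^ ((1:ℝ)/2) * E ^ (-(1/p)) = E ^ (1/2 - 1/p) := by
      rw [← Real.rpow_add hE0]; ring_nf
    have e2 : Real.cos θ * Real.cos θ ^ (-(2/p)) = Real.cos θ ^ (1 - 2/p) := by
      nth_rewrite 1 [← Real.rpow_one (Real.cos θ)]
      rw [← Real.rpow_add hc]; ring_nf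
    rw [h1, h2]
    simp only
    rw [← e1, ← e2]
    ring
  rw [setIntegral_congr_fun hs_meas hptwise] at key
  rw [MeasureTheory.integral_const_mul] at key
  rw [setIntegral_congr_set hnull0] at key
  rw [hT E ⟨hE0, hEs⟩]
  have hIoc1 : ∫ w in a..b, (E - V w) ^ (-(1/p)) = ∫ w in Set.Ioo a b, (E - V w) ^ (-(1/p)) := by
    rw [intervalIntegral.integral_of_le hab.le, MeasureTheory.integral_Ioc_eq_integral_Ioo]
  have hIoc2 : (∫ θ in (-(Real.pi/2))..(Real.pi/2),
        (Real.cos θ) ^ (1 - 2/p) / deriv h (hinv (sE * Real.sin θ)))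
      = ∫ θ in I, (Real.cos θ) ^ (1 - 2/p) / deriv h (hinv (sE * Real.sin θ)) := by
    rw [intervalIntegral.integral_of_le (by linarith [Real.pi_pos] : -(Real.pi/2) ≤ Real.pi/2),
      MeasureTheory.integral_Ioc_eq_integral_Ioo]
  simp only [hFdef] at key
  rw [hIoc1, key, hIoc2]
  ring
end

section
/- Let p > 2 and q = 2p, and let V(w) = w^q/q − w^p/p + 1/p − 1/q for w ≥ 0, with E* = 1/p − 1/q = 1/(2p). Then the minimal-period function E ↦ T(E) of the positive periodic solutions of (φ_p(w'))' + φ_q(w) − φ_p(w) = 0 is strictly increasing on (0, E*). -/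
open Set MeasureTheory intervalIntegral

set_option linter.unusedVariables false

lemma phi_intble {r : ℝ} (hr : -1 < r) (hr0 : r < 0) :
    IntervalIntegrable (fun s : ℝ => (1 - s^2) ^ r) volume (-1) 1 := by
  have base : IntervalIntegrable (fun x : ℝ => x ^ r) volume 0 2 :=
    intervalIntegrable_rpow' hr
  have h1 : IntervalIntegrable (fun s : ℝ => (1 + s) ^ r) volume (-1) 1 := by
    have := base.comp_add_right 1
    norm_num at this
    simpa [add_comm] using this
  have h2 : IntervalIntegrable (fun s : ℝ => (1 - s) ^ r) volume (-1) 1 := by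
    have := base.comp_sub_left 1
    norm_num at this
    exact this.symm
  have hsum := h1.add h2
  rw [intervalIntegrable_iff_integrableOn_Ioc_of_le (by norm_num)] at hsum ⊢
  rw [integrableOn_Ioc_iff_integrableOn_Ioo] at hsum ⊢
  apply hsum.mono' ?_ ?_
  · apply ContinuousOn.aestronglyMeasurable ?_ measurableSet_Ioo
    apply ContinuousOn.rpow_const (by fun_prop)
    rintro x ⟨hx1, hx2⟩
    left; nlinarith
  · rw [ae_restrict_iff' measurableSet_Ioo]
    filter_upwards with s hs
    obtain ⟨hs1, hs2⟩ := hs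
    have hs2 : s ≤ 1 := hs2.le
    have hm : (0:ℝ) ≤ 1 - s := by linarith
    have hpl : (0:ℝ) < 1 + s := by linarith
    have heq : (1 - s^2 : ℝ) = (1 - s) * (1 + s) := by ring
    rw [Real.norm_eq_abs, abs_of_nonneg (Real.rpow_nonneg (by nlinarith) r), heq,
      Real.mul_rpow hm hpl.le]
    rcases le_or_gt 0 s with h0 | h0
    · have : (1 + s) ^ r ≤ 1 :=
        Real.rpow_le_one_of_one_le_of_nonpos (by linarith) hr0.le
      have h1s : (0:ℝ) ≤ (1 - s) ^ r := Real.rpow_nonneg hm r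
      nlinarith [Real.rpow_nonneg hpl.le r]
    · have : (1 - s) ^ r ≤ 1 :=
        Real.rpow_le_one_of_one_le_of_nonpos (by linarith) hr0.le
      have h1s : (0:ℝ) ≤ (1 + s) ^ r := Real.rpow_nonneg hpl.le r
      nlinarith [Real.rpow_nonneg hm r]

lemma factor_intble {r c b : ℝ} (hr : -1 < r) (hr0 : r < 0) (hc : c < 0) (hb : |b| < 1) :
    IntervalIntegrable (fun s : ℝ => (1 + b*s) ^ c * (1 - s^2) ^ r) volume (-1) 1 := by
  have hphi := (phi_intble hr hr0).const_mul ((1 - |b|) ^ c)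
  rw [intervalIntegrable_iff_integrableOn_Ioc_of_le (by norm_num)] at hphi ⊢
  rw [integrableOn_Ioc_iff_integrableOn_Ioo] at hphi ⊢
  have hbase : ∀ s : ℝ, s ∈ Ioo (-1:ℝ) 1 → 0 < 1 - |b| ∧ 1 - |b| ≤ 1 + b*s := by
    intro s hs
    have h1 : |b*s| ≤ |b| := by
      rw [abs_mul]
      have : |s| ≤ 1 := by rw [abs_le]; exact ⟨hs.1.le, hs.2.le⟩
      nlinarith [abs_nonneg b]
    have := abs_le.1 h1
    constructor <;> linarith
  apply hphi.mono' ?_ ?_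
  · apply ContinuousOn.aestronglyMeasurable ?_ measurableSet_Ioo
    apply ContinuousOn.mul
    · apply ContinuousOn.rpow_const (by fun_prop)
      intro x hx
      have := hbase x hx
      left; linarith [this.1, this.2]
    · apply ContinuousOn.rpow_const (by fun_prop)
      rintro x ⟨hx1, hx2⟩
      left; nlinarith
  · rw [ae_restrict_iff' measurableSet_Ioo]
    filter_upwards with s hs
    obtain ⟨h0, h1⟩ := hbase s hs
    have hphi_nn : (0:ℝ) ≤ (1 - s^2) ^ r := Real.rpow_nonneg (by nlinarith [hs.1, hs.2]) r
    have hf_nn : (0:ℝ) ≤ (1 + b*s) ^ c := Real.rpow_nonneg (by linarith) c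
    rw [Real.norm_eq_abs, abs_of_nonneg (mul_nonneg hf_nn hphi_nn)]
    have : (1 + b*s) ^ c ≤ (1 - |b|) ^ c :=
      Real.rpow_le_rpow_of_nonpos h0 h1 hc.le
    exact mul_le_mul_of_nonneg_right this hphi_nn

lemma bracket_mono {c : ℝ} (hc : c < 0) :
    MonotoneOn (fun u : ℝ => (1+u)^c + (1-u)^c) (Ico (0:ℝ) 1) := by
  have hint : interior (Ico (0:ℝ) 1) = Ioo 0 1 := interior_Ico
  have hds : ∀ x ∈ Ioo (0:ℝ) 1, HasDerivAt (fun u : ℝ => (1+u)^c + (1-u)^c)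
      (1 * c * (1+x)^(c-1) + -1 * c * (1-x)^(c-1)) x := by
    rintro x ⟨hx0, hx1⟩
    have h1 : HasDerivAt (fun u : ℝ => 1 + u) 1 x := (hasDerivAt_id x).const_add 1
    have h2 : HasDerivAt (fun u : ℝ => 1 - u) (-1) x := (hasDerivAt_id x).const_sub 1
    exact (h1.rpow_const (Or.inl (by positivity))).add
      (h2.rpow_const (Or.inl (by intro h; rw [sub_eq_zero] at h; linarith)))
  apply monotoneOn_of_deriv_nonneg (convex_Ico 0 1)
  · apply ContinuousOn.add
    · apply ContinuousOn.rpow_const (by fun_prop)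
      rintro x ⟨hx0, hx1⟩; left; positivity
    · apply ContinuousOn.rpow_const (by fun_prop)
      rintro x ⟨hx0, hx1⟩; left; intro h; rw [sub_eq_zero] at h; linarith
  · rw [hint]
    intro x hx
    exact (hds x hx).differentiableAt.differentiableWithinAt
  · rw [hint]
    intro x hx
    rw [(hds x hx).deriv]
    obtain ⟨hx0, hx1⟩ := hx
    have key : (1+x)^(c-1) ≤ (1-x)^(c-1) :=
      Real.rpow_le_rpow_of_nonpos (by linarith) (by linarith) (by linarith)
    nlinarith

lemma bracket_abs (c x : ℝ) : (1+x)^c + (1-x)^c = (1+|x|)^c + (1-|x|)^c := by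
  rcases le_or_gt 0 x with h | h
  · rw [abs_of_nonneg h]
  · rw [abs_of_neg h]; ring_nf

lemma factor_intble' {r c b : ℝ} (hr : -1 < r) (hr0 : r < 0) (hc : c < 0) (hb : |b| < 1) :
    IntervalIntegrable (fun s : ℝ => (1 - b*s) ^ c * (1 - s^2) ^ r) volume (-1) 1 := by
  have := factor_intble hr hr0 hc (b := -b) (by simpa using hb)
  simp only [neg_mul, ← sub_eq_add_neg] at this
  exact this

lemma Jrefl {r c a : ℝ} :
    (∫ s in (-1:ℝ)..1, (1 - a*s) ^ c * (1 - s^2) ^ r)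
      = ∫ s in (-1:ℝ)..1, (1 + a*s) ^ c * (1 - s^2) ^ r := by
  have := intervalIntegral.integral_comp_neg (a := (-1:ℝ)) (b := 1)
    (fun s : ℝ => (1 + a*s) ^ c * (1 - s^2) ^ r)
  simp only [neg_neg] at this
  rw [← this]
  congr 1
  funext x
  simp only [mul_neg, ← sub_eq_add_neg, neg_sq]

lemma Jmono {r c a a' : ℝ} (hr : -1 < r) (hr0 : r < 0) (hc : c < 0)
    (ha : 0 ≤ a) (haa' : a ≤ a') (ha' : a' < 1) :
    (∫ s in (-1:ℝ)..1, (1 + a*s) ^ c * (1 - s^2) ^ r)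
      ≤ ∫ s in (-1:ℝ)..1, (1 + a'*s) ^ c * (1 - s^2) ^ r := by
  have hba : |a| < 1 := by rw [abs_of_nonneg ha]; linarith
  have hba' : |a'| < 1 := by rw [abs_of_nonneg (ha.trans haa')]; linarith
  have h1 := factor_intble hr hr0 hc hba
  have h1' := factor_intble hr hr0 hc hba'
  have h2 := factor_intble' hr hr0 hc hba
  have h2' := factor_intble' hr hr0 hc hba'
  have key : (∫ s in (-1:ℝ)..1, ((1 + a*s) ^ c + (1 - a*s) ^ c) * (1 - s^2) ^ r)
      ≤ ∫ s in (-1:ℝ)..1, ((1 + a'*s) ^ c + (1 - a'*s) ^ c) * (1 - s^2) ^ r := by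
    have e1 : ∀ b : ℝ, (fun s : ℝ => ((1 + b*s) ^ c + (1 - b*s) ^ c) * (1 - s^2) ^ r)
        = fun s : ℝ => (1 + b*s) ^ c * (1 - s^2) ^ r + (1 - b*s) ^ c * (1 - s^2) ^ r := by
      intro b; funext s; ring
    rw [e1, e1]
    apply intervalIntegral.integral_mono_on (by norm_num) (h1.add h2) (h1'.add h2')
    intro s hs
    by_cases hs2 : s^2 = (1:ℝ)
    · have : (1 - s^2 : ℝ) ^ r = 0 := by
        rw [hs2, sub_self, Real.zero_rpow hr0.ne]
      simp [this]
    · have hs1 : |s| < 1 := by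
        rw [abs_lt]
        rcases hs with ⟨hl, hu⟩
        constructor
        · rcases eq_or_lt_of_le hl with h | h
          · exfalso; apply hs2; rw [← h]; ring
          · exact h
        · rcases eq_or_lt_of_le hu with h | h
          · exfalso; apply hs2; rw [h]; ring
          · exact h
      have hφ : (0:ℝ) ≤ (1 - s^2) ^ r := Real.rpow_nonneg (by nlinarith [abs_nonneg s, sq_abs s]) r
      rw [← add_mul, ← add_mul]
      apply mul_le_mul_of_nonneg_right ?_ hφ
      rw [bracket_abs c (a*s), bracket_abs c (a'*s), abs_mul, abs_mul,
        abs_of_nonneg ha, abs_of_nonneg (ha.trans haa')]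
      apply bracket_mono hc
      · exact ⟨mul_nonneg ha (abs_nonneg s), by nlinarith [abs_nonneg s]⟩
      · exact ⟨mul_nonneg (ha.trans haa') (abs_nonneg s), by nlinarith [abs_nonneg s]⟩
      · nlinarith [abs_nonneg s]
    
  have hh : ∀ b : ℝ, |b| < 1 →
      (∫ s in (-1:ℝ)..1, ((1 + b*s) ^ c + (1 - b*s) ^ c) * (1 - s^2) ^ r)
        = 2 * ∫ s in (-1:ℝ)..1, (1 + b*s) ^ c * (1 - s^2) ^ r := by
    intro b hb
    have e1 : (fun s : ℝ => ((1 + b*s) ^ c + (1 - b*s) ^ c) * (1 - s^2) ^ r)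
        = fun s : ℝ => (1 + b*s) ^ c * (1 - s^2) ^ r + (1 - b*s) ^ c * (1 - s^2) ^ r := by
      funext s; ring
    rw [e1, intervalIntegral.integral_add (factor_intble hr hr0 hc hb) (factor_intble' hr hr0 hc hb),
      Jrefl]
    ring
  rw [hh a hba, hh a' hba'] at key
  linarith

lemma Jpos {r c a : ℝ} (hr : -1 < r) (hr0 : r < 0) (hc : c < 0)
    (ha : 0 ≤ a) (ha1 : a < 1) :
    0 < ∫ s in (-1:ℝ)..1, (1 + a*s) ^ c * (1 - s^2) ^ r := by
  apply intervalIntegral.intervalIntegral_pos_of_pos_on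
  · exact factor_intble hr hr0 hc (by rwa [abs_of_nonneg ha])
  · rintro s ⟨hs1, hs2⟩
    have h1 : (0:ℝ) < 1 + a*s := by nlinarith
    have h2 : (0:ℝ) < 1 - s^2 := by nlinarith
    exact mul_pos (Real.rpow_pos_of_pos h1 c) (Real.rpow_pos_of_pos h2 r)
  · norm_num

lemma cov (p E a : ℝ) (hp : 2 < p) (hE : 0 < E)
    (ha0 : 0 < a) (ha1 : a < 1) (ha2 : a^2 = 2*p*E) (V : ℝ → ℝ)
    (hVf : ∀ w : ℝ, 0 < w → V w = (w^p - 1)^2/(2*p)) :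
    ∫ w in ((1-a)^(1/p) : ℝ)..((1+a)^(1/p) : ℝ), (E - V w) ^ (-(1/p))
      = (a/p * E^(-(1/p))) *
        ∫ s in (-1:ℝ)..1, (1+a*s)^(1/p-1) * (1-s^2)^(-(1/p)) := by
  have hp0 : (0:ℝ) < p := by linarith
  have hinvp : (0:ℝ) < 1/p := by positivity
  have hrppow : ∀ t : ℝ, 0 ≤ t → (t^(1/p))^p = t := by
    intro t ht
    rw [← Real.rpow_mul ht, one_div_mul_cancel hp0.ne', Real.rpow_one]
  have hpow_rp : ∀ t : ℝ, 0 ≤ t → (t^p)^(1/p) = t := by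
    intro t ht
    rw [← Real.rpow_mul ht, mul_one_div_cancel hp0.ne', Real.rpow_one]
  set W1 : ℝ := (1-a)^(1/p) with hW1
  set W2 : ℝ := (1+a)^(1/p) with hW2
  set g : ℝ → ℝ := fun s => (1+a*s)^(1/p) with hg
  set gd : ℝ → ℝ := fun s => a * (1/p) * (1+a*s)^(1/p-1) with hgd
  have hmem : ∀ s : ℝ, s ∈ Ioo (-1:ℝ) 1 → 0 < 1 + a*s := by
    rintro s ⟨hs1, hs2⟩; nlinarith
  have hderiv : ∀ s ∈ Ioo (-1:ℝ) 1, HasDerivWithinAt g (gd s) (Ioo (-1:ℝ) 1) s := by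
    intro s hs
    have h1 : HasDerivAt (fun s : ℝ => 1 + a*s) a s := by
      simpa using ((hasDerivAt_id s).const_mul a).const_add 1
    exact ((h1.rpow_const (Or.inl (hmem s hs).ne')).hasDerivWithinAt)
  have hginj : InjOn g (Ioo (-1:ℝ) 1) := by
    intro x hx y hy hxy
    have h1 := congrArg (fun t : ℝ => t ^ p) hxy
    simp only [hg] at h1
    rw [hrppow _ (hmem x hx).le, hrppow _ (hmem y hy).le] at h1
    have := mul_left_cancel₀ ha0.ne' (by linarith : a*x = a*y)
    linarith [this]
  have hW1pos : 0 < W1 := Real.rpow_pos_of_pos (by linarith) _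
  have hW12 : W1 < W2 := Real.rpow_lt_rpow (by linarith) (by linarith) hinvp
  have himage : g '' Ioo (-1:ℝ) 1 = Ioo W1 W2 := by
    ext w
    constructor
    · rintro ⟨s, hs, rfl⟩
      obtain ⟨hs1, hs2⟩ := hs
      constructor
      · exact Real.rpow_lt_rpow (by linarith) (by nlinarith) hinvp
      · exact Real.rpow_lt_rpow (hmem s ⟨hs1, hs2⟩).le (by nlinarith) hinvp
    · rintro ⟨hw1, hw2⟩
      have hwpos : 0 < w := hW1pos.trans hw1
      have hl : 1 - a < w^p := by
        have := Real.rpow_lt_rpow hW1pos.le hw1 hp0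
        rwa [hW1, hrppow _ (by linarith : (0:ℝ) ≤ 1-a)] at this
      have hu : w^p < 1 + a := by
        have := Real.rpow_lt_rpow hwpos.le hw2 hp0
        rwa [hW2, hrppow _ (by linarith : (0:ℝ) ≤ 1+a)] at this
      refine ⟨(w^p - 1)/a, ⟨?_, ?_⟩, ?_⟩
      · rw [lt_div_iff₀ ha0]; linarith
      · rw [div_lt_iff₀ ha0]; linarith
      · show (1 + a * ((w^p - 1)/a))^(1/p) = w
        rw [mul_div_cancel₀ _ ha0.ne']
        have : (1 + (w^p - 1)) = w^p := by ring
        rw [this, hpow_rp _ hwpos.le]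
  have step1 : ∫ w in W1..W2, (E - V w) ^ (-(1/p))
      = ∫ w in Ioo W1 W2, (E - V w) ^ (-(1/p)) := by
    rw [intervalIntegral.integral_of_le hW12.le, MeasureTheory.integral_Ioc_eq_integral_Ioo]
  rw [step1, ← himage,
    MeasureTheory.integral_image_eq_integral_abs_deriv_smul measurableSet_Ioo hderiv hginj]
  have step2 : ∀ s ∈ Ioo (-1:ℝ) 1,
      |gd s| • (E - V (g s)) ^ (-(1/p))
        = (a/p * E^(-(1/p))) * ((1+a*s)^(1/p-1) * (1-s^2)^(-(1/p))) := by
    rintro s hs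
    obtain ⟨hs1, hs2⟩ := hs
    have hb : 0 < 1 + a*s := hmem s ⟨hs1, hs2⟩
    have hgpos : 0 < g s := Real.rpow_pos_of_pos hb _
    have hgp : (g s)^p = 1 + a*s := hrppow _ hb.le
    have hVgs : V (g s) = E * s^2 := by
      rw [hVf _ hgpos, hgp]
      have h3 : ((1 + a*s) - 1)^2/(2*p) = a^2 * s^2 / (2*p) := by ring
      rw [h3, ha2]
      field_simp
    have hEV : E - V (g s) = E * (1 - s^2) := by rw [hVgs]; ring
    have hgd_pos : 0 < gd s :=
      mul_pos (mul_pos ha0 hinvp) (Real.rpow_pos_of_pos hb _)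
    rw [abs_of_pos hgd_pos, smul_eq_mul, hEV,
      Real.mul_rpow hE.le (by nlinarith : (0:ℝ) ≤ 1 - s^2)]
    show a * (1/p) * (1+a*s)^(1/p-1) * (E^(-(1/p)) * (1-s^2)^(-(1/p))) = _
    ring
  rw [MeasureTheory.setIntegral_congr_fun measurableSet_Ioo step2,
    MeasureTheory.integral_const_mul]
  congr 1
  rw [intervalIntegral.integral_of_le (by norm_num : (-1:ℝ) ≤ 1),
    MeasureTheory.integral_Ioc_eq_integral_Ioo]


/-- Lemma 5.1, case `q = 2p`: for `p > 2` and `q = 2p`, the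
minimal-period function of the positive periodic solutions of
`(φ_p(w'))' + φ_q(w) − φ_p(w) = 0` is strictly increasing on `(0,E*)`. -/
theorem period_strictMono_q_eq_two_p
    (p q : ℝ) (hp : 2 < p) (hq : q = 2 * p)
    (V : ℝ → ℝ)
    (hV : ∀ w : ℝ, 0 ≤ w → V w = w ^ q / q - w ^ p / p + 1 / p - 1 / q)
    (Estar B : ℝ) (hEstar : Estar = 1 / p - 1 / q) (hB : B = (q / p) ^ (p / (q - p)))
    (w1 w2 : ℝ → ℝ)
    (hw1 : ∀ E ∈ Set.Ioo 0 Estar, w1 E ∈ Set.Ioo 0 1 ∧ V (w1 E) = E)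
    (hw2 : ∀ E ∈ Set.Ioo 0 Estar, w2 E ∈ Set.Ioo 1 B ∧ V (w2 E) = E)
    (T : ℝ → ℝ)
    (hT : ∀ E ∈ Set.Ioo 0 Estar,
      T E = 2 * (p / (p - 1)) ^ (-(1 / p)) *
        ∫ w in (w1 E)..(w2 E), (E - V w) ^ (-(1 / p))) :
    StrictMonoOn T (Set.Ioo 0 Estar) := by
  have hp0 : (0:ℝ) < p := by linarith
  have hpow_rp : ∀ t : ℝ, 0 ≤ t → (t^p)^(1/p : ℝ) = t := by
    intro t ht
    rw [← Real.rpow_mul ht, mul_one_div_cancel hp0.ne', Real.rpow_one]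
  have hEs : Estar = 1/(2*p) := by
    rw [hEstar, hq]; field_simp; ring
  have hVform : ∀ w : ℝ, 0 < w → V w = (w^p - 1)^2/(2*p) := by
    intro w hw
    rw [hV w hw.le, hq]
    have h2p : w^(2*p) = (w^p)^(2:ℕ) := by
      rw [show (2*p) = p + p by ring, Real.rpow_add hw, sq]
    rw [h2p]
    field_simp
    ring
  -- key formula for T
  have key : ∀ F ∈ Set.Ioo 0 Estar,
      T F = (2 * (p/(p-1))^(-(1/p)) * (Real.sqrt (2*p)/p)) *
        (F^((1:ℝ)/2 - 1/p) *
          ∫ s in (-1:ℝ)..1, (1+Real.sqrt (2*p*F)*s)^(1/p-1) * (1-s^2)^(-(1/p))) := by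
    intro F hF
    obtain ⟨hF0, hFs⟩ := hF
    have hFs' : 2*p*F < 1 := by
      rw [hEs] at hFs
      have : F * (2*p) < 1 := by
        rw [← lt_div_iff₀ (by positivity)]; exact hFs
      linarith
    set a := Real.sqrt (2*p*F) with ha_def
    have ha2 : a^2 = 2*p*F := Real.sq_sqrt (by positivity)
    have ha0 : 0 < a := Real.sqrt_pos.2 (by positivity)
    have ha1 : a < 1 := by nlinarith
    obtain ⟨hw1m, hw1V⟩ := hw1 F ⟨hF0, hFs⟩
    obtain ⟨hw2m, hw2V⟩ := hw2 F ⟨hF0, hFs⟩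
    -- identify w1 F
    have hx1 : w1 F ^ p < 1 := Real.rpow_lt_one hw1m.1.le hw1m.2 hp0
    have h5 : ((w1 F)^p - 1)^2 = 2*p*F := by
      have h := hw1V
      rw [hVform _ hw1m.1] at h
      field_simp at h
      linarith
    have h6 : 1 - (w1 F)^p = a := by
      have hsq : (1 - (w1 F)^p)^2 = a^2 := by rw [ha2]; linear_combination h5
      have := congrArg Real.sqrt hsq
      rwa [Real.sqrt_sq (by linarith), Real.sqrt_sq ha0.le] at this
    have hw1eq : w1 F = (1-a)^(1/p : ℝ) := by
      rw [show (1-a : ℝ) = (w1 F)^p by linarith]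
      exact (hpow_rp _ hw1m.1.le).symm
    -- identify w2 F
    have hw2pos : (0:ℝ) < w2 F := by linarith [hw2m.1]
    have hx2 : 1 < w2 F ^ p := by
      rw [Real.one_lt_rpow_iff_of_pos hw2pos]
      exact Or.inl ⟨hw2m.1, hp0⟩
    have h7 : ((w2 F)^p - 1)^2 = 2*p*F := by
      have h := hw2V
      rw [hVform _ hw2pos] at h
      field_simp at h
      linarith
    have h8 : (w2 F)^p - 1 = a := by
      have hsq : ((w2 F)^p - 1)^2 = a^2 := by rw [ha2]; exact h7
      have := congrArg Real.sqrt hsq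
      rwa [Real.sqrt_sq (by linarith), Real.sqrt_sq ha0.le] at this
    have hw2eq : w2 F = (1+a)^(1/p : ℝ) := by
      rw [show (1+a : ℝ) = (w2 F)^p by linarith]
      exact (hpow_rp _ hw2pos.le).symm
    rw [hT F ⟨hF0, hFs⟩, hw1eq, hw2eq,
      cov p F a hp hF0 ha0 ha1 ha2 V hVform]
    have hconst : a/p * F^(-(1/p)) = Real.sqrt (2*p)/p * F^((1:ℝ)/2 - 1/p) := by
      have hsplit : a = Real.sqrt (2*p) * F^((1:ℝ)/2) := by
        rw [ha_def, Real.sqrt_mul (by positivity) F, Real.sqrt_eq_rpow,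
          show Real.sqrt F = F^((1:ℝ)/2) from Real.sqrt_eq_rpow F]
      have hFmul : F^((1:ℝ)/2) * F^(-(1/p)) = F^((1:ℝ)/2 - 1/p) := by
        rw [← Real.rpow_add hF0]; ring_nf
      rw [hsplit, ← hFmul]
      ring
    rw [hconst]
    ring
  -- conclude
  intro E hE E' hE' hEE'
  have hE0 : 0 < E := hE.1
  have hE'0 : 0 < E' := hE'.1
  have hp1 : (0:ℝ) < p - 1 := by linarith
  rw [key E hE, key E' hE']
  have hC : 0 < 2 * (p/(p-1))^(-(1/p)) * (Real.sqrt (2*p)/p) := by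
    apply mul_pos (mul_pos two_pos (Real.rpow_pos_of_pos (div_pos hp0 hp1) _))
    exact div_pos (Real.sqrt_pos.2 (by positivity)) hp0
  apply mul_lt_mul_of_pos_left ?_ hC
  have hr : (-1:ℝ) < -(1/p) := by
    have : 1/p < 1 := by rw [div_lt_one hp0]; linarith
    linarith
  have hr0 : -(1/p : ℝ) < 0 := by
    have : (0:ℝ) < 1/p := by positivity
    linarith
  have hc : (1/p - 1 : ℝ) < 0 := by
    have : 1/p < 1 := by rw [div_lt_one hp0]; linarith
    linarith
  have haE'1 : Real.sqrt (2*p*E') < 1 := by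
    have h1 : 2*p*E' < 1 := by
      rw [hEs] at hE'
      have := hE'.2
      have : E' * (2*p) < 1 := by
        rw [← lt_div_iff₀ (by positivity)]; exact this
      linarith
    nlinarith [Real.sq_sqrt (by positivity : (0:ℝ) ≤ 2*p*E'), Real.sqrt_nonneg (2*p*E')]
  have hJm := Jmono hr hr0 hc (Real.sqrt_nonneg (2*p*E))
    (Real.sqrt_le_sqrt (by nlinarith [hE.1, hE'.1] : 2*p*E ≤ 2*p*E')) haE'1
  have hJp := Jpos hr hr0 hc (Real.sqrt_nonneg (2*p*E')) haE'1
  have hθ : (0:ℝ) < 1/2 - 1/p := by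
    have : 1/p < 1/2 := by rw [div_lt_div_iff₀ hp0 two_pos]; linarith
    linarith
  calc E^((1:ℝ)/2 - 1/p) *
        (∫ s in (-1:ℝ)..1, (1+Real.sqrt (2*p*E)*s)^(1/p-1) * (1-s^2)^(-(1/p)))
      ≤ E^((1:ℝ)/2 - 1/p) *
        (∫ s in (-1:ℝ)..1, (1+Real.sqrt (2*p*E')*s)^(1/p-1) * (1-s^2)^(-(1/p))) := by
        apply mul_le_mul_of_nonneg_left hJm (Real.rpow_nonneg hE.1.le _)
    _ < E'^((1:ℝ)/2 - 1/p) *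
        (∫ s in (-1:ℝ)..1, (1+Real.sqrt (2*p*E')*s)^(1/p-1) * (1-s^2)^(-(1/p))) := by
        exact mul_lt_mul_of_pos_right (Real.rpow_lt_rpow hE.1.le hEE' hθ) hJp
end

section
/- Let m > 2, W(y) = y^m − m·y + m − 1 and γ_m = m^{1/(m−1)}, and define h(y) = sign(y−1)·√(W(y)) for y ∈ (0, γ_m), with h(1) = 0. Then h is convex on (0, γ_m) and the function y ↦ 1/h'(y)² is convex on (0, γ_m). -/
open Set Real Filter Topology

namespace LemAux

/-- Local version of `hasDerivAt_of_hasDerivAt_of_ne`. -/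
theorem hasDerivAt_of_mem_of_ne {f g : ℝ → ℝ} {x : ℝ} {U : Set ℝ} (hU : U ∈ 𝓝 x)
    (f_diff : ∀ y ∈ U, y ≠ x → HasDerivAt f (g y) y)
    (hf : ContinuousAt f x) (hg : ContinuousAt g x) : HasDerivAt f (g x) x := by
  have A : HasDerivWithinAt f (g x) (Ici x) x := by
    have hU' : U ∩ Ioi x ∈ 𝓝[>] x :=
      inter_mem (nhdsWithin_le_nhds hU) self_mem_nhdsWithin
    have diff : DifferentiableOn ℝ f (U ∩ Ioi x) := fun y hy =>
      (f_diff y hy.1 (ne_of_gt hy.2)).differentiableAt.differentiableWithinAt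
    apply hasDerivWithinAt_Ici_of_tendsto_deriv diff hf.continuousWithinAt hU'
    have hgt : Tendsto g (𝓝[>] x) (𝓝 (g x)) := tendsto_nhdsWithin_of_tendsto_nhds hg
    apply hgt.congr'
    filter_upwards [hU'] with y hy
    exact ((f_diff y hy.1 (ne_of_gt hy.2)).deriv).symm
  have B : HasDerivWithinAt f (g x) (Iic x) x := by
    have hU' : U ∩ Iio x ∈ 𝓝[<] x :=
      inter_mem (nhdsWithin_le_nhds hU) self_mem_nhdsWithin
    have diff : DifferentiableOn ℝ f (U ∩ Iio x) := fun y hy =>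
      (f_diff y hy.1 (ne_of_lt hy.2)).differentiableAt.differentiableWithinAt
    apply hasDerivWithinAt_Iic_of_tendsto_deriv diff hf.continuousWithinAt hU'
    have hgt : Tendsto g (𝓝[<] x) (𝓝 (g x)) := tendsto_nhdsWithin_of_tendsto_nhds hg
    apply hgt.congr'
    filter_upwards [hU'] with y hy
    exact ((f_diff y hy.1 (ne_of_lt hy.2)).deriv).symm
  simpa using B.union A

theorem rpow_split {y : ℝ} (hy : 0 < y) (a : ℝ) {b : ℝ} (j k : ℕ) (h : b = a * j + k) :
    y ^ b = (y ^ a) ^ j * y ^ k := by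
  subst h
  rw [Real.rpow_add hy, Real.rpow_mul hy.le, Real.rpow_natCast, Real.rpow_natCast]

theorem hasDerivAt_rpow' {y : ℝ} (hy : 0 < y) (a : ℝ) {b : ℝ} (h : b = a - 1) :
    HasDerivAt (fun t : ℝ => t ^ a) (a * y ^ b) y := by
  subst h; exact Real.hasDerivAt_rpow_const (Or.inl hy.ne')

noncomputable def P (m y : ℝ) : ℝ := y ^ m - m * y + m - 1
noncomputable def P1 (m y : ℝ) : ℝ := m * y ^ (m - 1) - m
noncomputable def P2 (m y : ℝ) : ℝ := m * (m - 1) * y ^ (m - 2)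
noncomputable def P3 (m y : ℝ) : ℝ := m * (m - 1) * (m - 2) * y ^ (m - 3)
noncomputable def D2 (m y : ℝ) : ℝ :=
  (m - 2) * y ^ (2 * m - 2) - 2 * m * (m - 2) * y ^ (m - 1) + 2 * (m - 1) ^ 2 * y ^ (m - 2) - m
noncomputable def F2 (m y : ℝ) : ℝ :=
  (m - 2) * y ^ (2 * m - 1) - 2 * (2 * m - 1) * (m - 2) * y ^ m
    + 2 * (m - 1) * (2 * m - 1) * y ^ (m - 1) - m * (2 * m - 1) * y + 2 * (m - 1) * (m - 2)
noncomputable def F3 (m y : ℝ) : ℝ :=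
  (2 * m - 1) * (m - 2) * y ^ (2 * m - 2) - 2 * m * (2 * m - 1) * (m - 2) * y ^ (m - 1)
    + 2 * (m - 1) ^ 2 * (2 * m - 1) * y ^ (m - 2) - m * (2 * m - 1)

variable {m y : ℝ}

theorem P_one : P m 1 = 0 := by unfold P; rw [Real.one_rpow]; ring
theorem P1_one : P1 m 1 = 0 := by unfold P1; rw [Real.one_rpow]; ring
theorem P2_one : P2 m 1 = m * (m - 1) := by unfold P2; rw [Real.one_rpow]; ring
theorem P3_one : P3 m 1 = m * (m - 1) * (m - 2) := by unfold P3; rw [Real.one_rpow]; ring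
theorem D2_one : D2 m 1 = 0 := by unfold D2; rw [Real.one_rpow, Real.one_rpow, Real.one_rpow]; ring
theorem F2_one : F2 m 1 = 0 := by
  unfold F2; rw [Real.one_rpow, Real.one_rpow, Real.one_rpow]; ring
theorem F3_one : F3 m 1 = 0 := by
  unfold F3; rw [Real.one_rpow, Real.one_rpow, Real.one_rpow]; ring

theorem hasDerivAt_P (hy : 0 < y) : HasDerivAt (P m) (P1 m y) y := by
  unfold P P1
  simpa using
    (((hasDerivAt_rpow' hy m rfl).sub ((hasDerivAt_id y).const_mul m)).add_const m).sub_const 1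

theorem hasDerivAt_P1 (hy : 0 < y) : HasDerivAt (P1 m) (P2 m y) y := by
  unfold P1 P2
  simpa [mul_assoc] using
    ((hasDerivAt_rpow' hy (m - 1) (by ring : m - 2 = m - 1 - 1)).const_mul m).sub_const m

theorem hasDerivAt_P2 (hy : 0 < y) : HasDerivAt (P2 m) (P3 m y) y := by
  unfold P2 P3
  have := (hasDerivAt_rpow' hy (m - 2) (by ring : m - 3 = m - 2 - 1)).const_mul (m * (m - 1))
  refine this.congr_deriv (Eq.symm ?_)
  ring

theorem hasDerivAt_P3 (hy : 0 < y) :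
    HasDerivAt (P3 m) (m * (m - 1) * (m - 2) * (m - 3) * y ^ (m - 4)) y := by
  unfold P3
  have := (hasDerivAt_rpow' hy (m - 3) (by ring : m - 4 = m - 3 - 1)).const_mul (m * (m - 1) * (m - 2))
  refine this.congr_deriv (Eq.symm ?_)
  ring

theorem P_pos (hm : 1 < m) (hy : 0 ≤ y) (hne : y ≠ 1) : 0 < P m y := by
  have hs : -1 ≤ y - 1 := by linarith
  have hs' : y - 1 ≠ 0 := sub_ne_zero.mpr hne
  have key := one_add_mul_self_lt_rpow_one_add hs hs' hm
  rw [show (1 : ℝ) + (y - 1) = y by ring] at key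
  unfold P; linarith

theorem P_nonneg (hm : 1 < m) (hy : 0 ≤ y) : 0 ≤ P m y := by
  rcases eq_or_ne y 1 with rfl | hne
  · rw [P_one]
  · exact (P_pos hm hy hne).le

theorem P1_neg (hm : 1 < m) (hy0 : 0 < y) (hy1 : y < 1) : P1 m y < 0 := by
  have : y ^ (m - 1) < 1 := Real.rpow_lt_one hy0.le hy1 (by linarith)
  unfold P1; nlinarith

theorem P1_pos (hm : 1 < m) (hy1 : 1 < y) : 0 < P1 m y := by
  have : 1 < y ^ (m - 1) :=
    (Real.one_lt_rpow_iff_of_pos (by linarith)).mpr (Or.inl ⟨hy1, by linarith⟩)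
  unfold P1; nlinarith

theorem P1_ne (hm : 1 < m) (hy0 : 0 < y) (hne : y ≠ 1) : P1 m y ≠ 0 := by
  rcases hne.lt_or_gt with h | h
  · exact (P1_neg hm hy0 h).ne
  · exact (P1_pos hm h).ne'

theorem id_D2 (hy : 0 < y) :
    2 * P m y * P2 m y - (P1 m y) ^ 2 = m * D2 m y := by
  have e0 : y ^ m = (y ^ (m - 3)) ^ 1 * y ^ 3 := rpow_split hy (m - 3) 1 3 (by push_cast; ring)
  have e1 : y ^ (m - 1) = (y ^ (m - 3)) ^ 1 * y ^ 2 := rpow_split hy (m - 3) 1 2 (by push_cast; ring)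
  have e2 : y ^ (m - 2) = (y ^ (m - 3)) ^ 1 * y ^ 1 := rpow_split hy (m - 3) 1 1 (by push_cast; ring)
  have e3 : y ^ (2 * m - 2) = (y ^ (m - 3)) ^ 2 * y ^ 4 := rpow_split hy (m - 3) 2 4 (by push_cast; ring)
  unfold P P1 P2 D2
  rw [e0, e1, e2, e3]
  ring

theorem id_E (hy : 0 < y) :
    (-2 * P m y * P3 m y) * P1 m y - 3 * ((P1 m y) ^ 2 - 2 * P m y * P2 m y) * P2 m y
      = m ^ 2 * (m - 1) * y ^ (m - 3) * F2 m y := by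
  have e0 : y ^ m = (y ^ (m - 3)) ^ 1 * y ^ 3 := rpow_split hy (m - 3) 1 3 (by push_cast; ring)
  have e1 : y ^ (m - 1) = (y ^ (m - 3)) ^ 1 * y ^ 2 := rpow_split hy (m - 3) 1 2 (by push_cast; ring)
  have e2 : y ^ (m - 2) = (y ^ (m - 3)) ^ 1 * y ^ 1 := rpow_split hy (m - 3) 1 1 (by push_cast; ring)
  have e4 : y ^ (2 * m - 1) = (y ^ (m - 3)) ^ 2 * y ^ 5 := rpow_split hy (m - 3) 2 5 (by push_cast; ring)
  unfold P P1 P2 P3 F2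
  rw [e0, e1, e2, e4]
  ring

theorem hasDerivAt_D2 (hy : 0 < y) :
    HasDerivAt (D2 m) (2 * (m - 1) * (m - 2) * y ^ (m - 3) * P m y) y := by
  have r1 := (hasDerivAt_rpow' hy (2 * m - 2) (rfl : 2 * m - 2 - 1 = 2 * m - 2 - 1)).const_mul (m - 2)
  have r2 := (hasDerivAt_rpow' hy (m - 1) (rfl : m - 1 - 1 = m - 1 - 1)).const_mul (2 * m * (m - 2))
  have r3 := (hasDerivAt_rpow' hy (m - 2) (rfl : m - 2 - 1 = m - 2 - 1)).const_mul (2 * (m - 1) ^ 2)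
  have hD := ((r1.sub r2).add r3).sub_const m
  have e0 : y ^ m = (y ^ (m - 3)) ^ 1 * y ^ 3 := rpow_split hy (m - 3) 1 3 (by push_cast; ring)
  have e2 : y ^ (m - 2 - 1) = (y ^ (m - 3)) ^ 1 * y ^ 0 := rpow_split hy (m - 3) 1 0 (by push_cast; ring)
  have e1 : y ^ (m - 1 - 1) = (y ^ (m - 3)) ^ 1 * y ^ 1 := rpow_split hy (m - 3) 1 1 (by push_cast; ring)
  have e3 : y ^ (2 * m - 2 - 1) = (y ^ (m - 3)) ^ 2 * y ^ 3 := rpow_split hy (m - 3) 2 3 (by push_cast; ring)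
  unfold D2
  refine hD.congr_deriv (Eq.symm ?_)
  unfold P
  rw [e0, e1, e2, e3]
  ring

theorem hasDerivAt_F2 (hy : 0 < y) : HasDerivAt (F2 m) (F3 m y) y := by
  have r1 := (hasDerivAt_rpow' hy (2 * m - 1) (rfl : 2 * m - 1 - 1 = 2 * m - 1 - 1)).const_mul (m - 2)
  have r2 := (hasDerivAt_rpow' hy m (rfl : m - 1 = m - 1)).const_mul (2 * (2 * m - 1) * (m - 2))
  have r3 := (hasDerivAt_rpow' hy (m - 1) (rfl : m - 1 - 1 = m - 1 - 1)).const_mul (2 * (m - 1) * (2 * m - 1))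
  have r4 := (hasDerivAt_id y).const_mul (m * (2 * m - 1))
  have hD := (((r1.sub r2).add r3).sub r4).add_const (2 * (m - 1) * (m - 2))
  have e3 : y ^ (2 * m - 1 - 1) = y ^ (2 * m - 2) := by rw [show 2*m-1-1 = 2*m-2 by ring]
  have e1 : y ^ (m - 1 - 1) = y ^ (m - 2) := by rw [show m-1-1 = m-2 by ring]
  unfold F2
  refine hD.congr_deriv (Eq.symm ?_)
  unfold F3
  rw [e3, e1]
  ring

theorem hasDerivAt_F3 (hy : 0 < y) :
    HasDerivAt (F3 m) (2 * (2 * m - 1) * (m - 1) * (m - 2) * y ^ (m - 3) * P m y) y := by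
  have r1 := (hasDerivAt_rpow' hy (2 * m - 2) (rfl : 2 * m - 2 - 1 = 2 * m - 2 - 1)).const_mul ((2 * m - 1) * (m - 2))
  have r2 := (hasDerivAt_rpow' hy (m - 1) (rfl : m - 1 - 1 = m - 1 - 1)).const_mul (2 * m * (2 * m - 1) * (m - 2))
  have r3 := (hasDerivAt_rpow' hy (m - 2) (rfl : m - 2 - 1 = m - 2 - 1)).const_mul (2 * (m - 1) ^ 2 * (2 * m - 1))
  have hD := ((r1.sub r2).add r3).sub_const (m * (2 * m - 1))
  have e0 : y ^ m = (y ^ (m - 3)) ^ 1 * y ^ 3 := rpow_split hy (m - 3) 1 3 (by push_cast; ring)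
  have e2 : y ^ (m - 2 - 1) = (y ^ (m - 3)) ^ 1 * y ^ 0 := rpow_split hy (m - 3) 1 0 (by push_cast; ring)
  have e1 : y ^ (m - 1 - 1) = (y ^ (m - 3)) ^ 1 * y ^ 1 := rpow_split hy (m - 3) 1 1 (by push_cast; ring)
  have e3 : y ^ (2 * m - 2 - 1) = (y ^ (m - 3)) ^ 2 * y ^ 3 := rpow_split hy (m - 3) 2 3 (by push_cast; ring)
  unfold F3
  refine hD.congr_deriv (Eq.symm ?_)
  unfold P
  rw [e0, e1, e2, e3]
  ring

/-- monotone helper: a function on `(0,∞)` with nonnegative derivative there -/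
theorem monoAux {J J' : ℝ → ℝ} (hd : ∀ y, 0 < y → HasDerivAt J (J' y) y)
    (hn : ∀ y, 0 < y → 0 ≤ J' y) : MonotoneOn J (Ioi (0 : ℝ)) := by
  apply monotoneOn_of_deriv_nonneg (convex_Ioi 0)
  · exact fun y hy => ((hd y hy).continuousAt).continuousWithinAt
  · rw [interior_Ioi]
    exact fun y hy => ((hd y hy).differentiableAt).differentiableWithinAt
  · rw [interior_Ioi]
    intro y hy
    rw [(hd y hy).deriv]
    exact hn y hy

theorem D2_mono (hm : 2 < m) : MonotoneOn (D2 m) (Ioi (0 : ℝ)) := by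
  apply monoAux (fun y hy => hasDerivAt_D2 hy)
  intro y hy
  have h1 : (0:ℝ) ≤ 2 * (m - 1) * (m - 2) := by nlinarith
  have h2 : 0 < y ^ (m - 3) := Real.rpow_pos_of_pos hy _
  have h3 := P_nonneg (by linarith : 1 < m) hy.le
  positivity

theorem D2_nonpos (hm : 2 < m) (hy0 : 0 < y) (hy1 : y ≤ 1) : D2 m y ≤ 0 := by
  have := D2_mono hm (mem_Ioi.mpr hy0) (mem_Ioi.mpr one_pos) hy1
  rwa [D2_one] at this

theorem D2_nonneg (hm : 2 < m) (hy1 : 1 ≤ y) : 0 ≤ D2 m y := by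
  have := D2_mono hm (mem_Ioi.mpr one_pos) (mem_Ioi.mpr (lt_of_lt_of_le one_pos hy1)) hy1
  rwa [D2_one] at this

theorem F3_mono (hm : 2 < m) : MonotoneOn (F3 m) (Ioi (0 : ℝ)) := by
  apply monoAux (fun y hy => hasDerivAt_F3 hy)
  intro y hy
  have h1 : (0:ℝ) ≤ 2 * (2 * m - 1) * (m - 1) * (m - 2) := by nlinarith [mul_pos (mul_pos (show (0:ℝ) < 2*m-1 by linarith) (show (0:ℝ) < m-1 by linarith)) (show (0:ℝ) < m-2 by linarith)]
  have h2 : 0 < y ^ (m - 3) := Real.rpow_pos_of_pos hy _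
  have h3 := P_nonneg (by linarith : 1 < m) hy.le
  positivity

theorem F2_nonneg (hm : 2 < m) (hy : 0 < y) : 0 ≤ F2 m y := by
  rcases le_total y 1 with h | h
  · -- F2 antitone on Ioc 0 1
    have anti : AntitoneOn (F2 m) (Ioc (0:ℝ) 1) := by
      apply antitoneOn_of_deriv_nonpos (convex_Ioc 0 1)
      · exact fun t ht => ((hasDerivAt_F2 ht.1).continuousAt).continuousWithinAt
      · rw [interior_Ioc]
        exact fun t ht => ((hasDerivAt_F2 ht.1).differentiableAt).differentiableWithinAt
      · rw [interior_Ioc]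
        intro t ht
        rw [(hasDerivAt_F2 ht.1).deriv]
        have := F3_mono hm (mem_Ioi.mpr ht.1) (mem_Ioi.mpr one_pos) ht.2.le
        rwa [F3_one] at this
    have := anti (mem_Ioc.mpr ⟨hy, h⟩) (mem_Ioc.mpr ⟨one_pos, le_refl 1⟩) h
    rwa [F2_one] at this
  · have mono : MonotoneOn (F2 m) (Ici (1:ℝ)) := by
      apply monotoneOn_of_deriv_nonneg (convex_Ici 1)
      · exact fun t ht => ((hasDerivAt_F2 (lt_of_lt_of_le one_pos ht)).continuousAt).continuousWithinAt
      · rw [interior_Ici]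
        exact fun t ht =>
          ((hasDerivAt_F2 (lt_trans one_pos ht)).differentiableAt).differentiableWithinAt
      · rw [interior_Ici]
        intro t ht
        rw [(hasDerivAt_F2 (lt_trans one_pos ht)).deriv]
        have := F3_mono hm (mem_Ioi.mpr one_pos) (mem_Ioi.mpr (lt_trans one_pos ht)) ht.le
        rwa [F3_one] at this
    have := mono (mem_Ici.mpr (le_refl 1)) (mem_Ici.mpr h) h
    rwa [F2_one] at this

noncomputable def cst (m : ℝ) : ℝ := Real.sqrt (m * (m - 1) / 2)
noncomputable def phi (m y : ℝ) : ℝ :=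
  if y = 1 then cst m else Real.sign (y - 1) * P1 m y / (2 * Real.sqrt (P m y))
noncomputable def Gf (m y : ℝ) : ℝ :=
  if y = 1 then 2 / (m * (m - 1)) else 4 * P m y / (P1 m y) ^ 2
noncomputable def psi (m y : ℝ) : ℝ :=
  if y = 1 then -(4 * (m - 2)) / (3 * (m * (m - 1)))
  else 4 * ((P1 m y) ^ 2 - 2 * P m y * P2 m y) / (P1 m y) ^ 3

theorem tendsto_A (hm : 2 < m) :
    Tendsto (fun y => P1 m y / (y - 1)) (𝓝[≠] (1 : ℝ)) (𝓝 (m * (m - 1))) := by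
  have hd : HasDerivAt (fun t : ℝ => t ^ (m - 1)) ((m - 1) * (1:ℝ) ^ (m - 2)) 1 :=
    hasDerivAt_rpow' one_pos (m - 1) (by ring)
  rw [Real.one_rpow, mul_one] at hd
  have hs := hasDerivAt_iff_tendsto_slope.mp hd
  have := hs.const_mul m
  apply this.congr'
  filter_upwards [self_mem_nhdsWithin] with y hy
  have hy1 : y - 1 ≠ 0 := sub_ne_zero.mpr hy
  rw [slope_def_field, Real.one_rpow]
  unfold P1
  field_simp

theorem tendsto_B (hm : 2 < m) :
    Tendsto (fun y => P m y / (y - 1) ^ 2) (𝓝[≠] (1 : ℝ)) (𝓝 (m * (m - 1) / 2)) := by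
  have hIoi : Ioi (0:ℝ) ∈ 𝓝[≠] (1:ℝ) := nhdsWithin_le_nhds (Ioi_mem_nhds one_pos)
  apply HasDerivAt.lhopital_zero_nhdsNE (f' := P1 m) (g' := fun y => 2 * (y - 1))
  · filter_upwards [hIoi] with y hy
    exact hasDerivAt_P hy
  · apply Filter.Eventually.of_forall
    intro y
    have := ((hasDerivAt_id y).sub_const 1).fun_pow 2
    simpa using this
  · filter_upwards [self_mem_nhdsWithin] with y hy
    have : y - 1 ≠ 0 := sub_ne_zero.mpr hy
    intro hcon
    apply this
    linarith [hcon]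
  · have : Tendsto (P m) (𝓝 1) (𝓝 (P m 1)) := (hasDerivAt_P one_pos).continuousAt
    rw [P_one] at this
    exact this.mono_left nhdsWithin_le_nhds
  · have hc : Continuous fun y : ℝ => (y - 1) ^ 2 := by continuity
    have := hc.tendsto 1
    norm_num at this
    exact this.mono_left nhdsWithin_le_nhds
  · have := (tendsto_A hm).div_const 2
    apply this.congr'
    filter_upwards [self_mem_nhdsWithin] with y hy
    rw [div_div, mul_comm]

theorem phi_eq_ne (hm : 2 < m) (hy : 0 < y) (hne : y ≠ 1) :
    phi m y = (P1 m y / (y - 1)) / (2 * Real.sqrt (P m y / (y - 1) ^ 2)) := by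
  have hP := P_pos (show (1:ℝ) < m by linarith) hy.le hne
  have hsub : y - 1 ≠ 0 := sub_ne_zero.mpr hne
  have hs : 0 < Real.sqrt (P m y) := Real.sqrt_pos.mpr hP
  unfold phi
  rw [if_neg hne, Real.sqrt_div hP.le, Real.sqrt_sq_eq_abs]
  rcases hne.lt_or_gt with h | h
  · have h1 : y - 1 < 0 := by linarith
    rw [abs_of_neg h1, Real.sign_of_neg h1]
    field_simp
  · have h1 : 0 < y - 1 := by linarith
    rw [abs_of_pos h1, Real.sign_of_pos h1]
    field_simp

theorem q_pos (hm : 2 < m) : 0 < m * (m - 1) / 2 := by nlinarith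

theorem continuousAt_phi (hm : 2 < m) : ContinuousAt (phi m) 1 := by
  have hq := q_pos hm
  have hsq : 0 < Real.sqrt (m * (m - 1) / 2) := Real.sqrt_pos.mpr hq
  rw [ContinuousAt, show phi m 1 = cst m from if_pos rfl]
  rw [← nhdsNE_sup_pure (1 : ℝ), tendsto_sup]
  constructor
  · have hsqt : Tendsto (fun y => 2 * Real.sqrt (P m y / (y - 1) ^ 2)) (𝓝[≠] (1:ℝ))
        (𝓝 (2 * Real.sqrt (m * (m - 1) / 2))) := ((tendsto_B hm).sqrt).const_mul 2
    have hlim := (tendsto_A hm).div hsqt (by positivity)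
    have hval : m * (m - 1) / (2 * Real.sqrt (m * (m - 1) / 2)) = cst m := by
      have h1 : Real.sqrt (m * (m - 1) / 2) * Real.sqrt (m * (m - 1) / 2) = m * (m - 1) / 2 :=
        Real.mul_self_sqrt hq.le
      rw [cst, div_eq_iff (by positivity)]
      nlinarith [h1]
    rw [hval] at hlim
    apply hlim.congr'
    have hIoi : Ioi (0:ℝ) ∈ 𝓝[≠] (1:ℝ) := nhdsWithin_le_nhds (Ioi_mem_nhds one_pos)
    filter_upwards [hIoi, self_mem_nhdsWithin] with y hy0 hy1
    exact (phi_eq_ne hm hy0 hy1).symm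
  · rw [show cst m = phi m 1 from (if_pos rfl).symm]
    exact tendsto_pure_nhds _ _

theorem continuousAt_Gf (hm : 2 < m) : ContinuousAt (Gf m) 1 := by
  have hq := q_pos hm
  have hmm : m * (m - 1) ≠ 0 := by nlinarith
  rw [ContinuousAt, show Gf m 1 = 2 / (m * (m-1)) from if_pos rfl]
  rw [← nhdsNE_sup_pure (1 : 
ℝ), tendsto_sup]
  constructor
  · have hden : Tendsto (fun y => (P1 m y / (y - 1)) ^ 2) (𝓝[≠] (1:ℝ))
        (𝓝 ((m * (m - 1)) ^ 2)) := (tendsto_A hm).pow 2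
    have hlim := (((tendsto_B hm).const_mul 4).div hden (by positivity))
    have hval : 4 * (m * (m - 1) / 2) / (m * (m - 1)) ^ 2 = 2 / (m * (m - 1)) := by
      field_simp
      ring
    rw [hval] at hlim
    apply hlim.congr'
    have hIoi : Ioi (0:ℝ) ∈ 𝓝[≠] (1:ℝ) := nhdsWithin_le_nhds (Ioi_mem_nhds one_pos)
    filter_upwards [hIoi, self_mem_nhdsWithin] with y hy0 hy1
    have hsub : y - 1 ≠ 0 := sub_ne_zero.mpr hy1
    have hP1 : P1 m y ≠ 0 := P1_ne (show (1:ℝ) < m by linarith) hy0 hy1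
    have hy1' : y ≠ 1 := hy1
    simp only [Pi.div_apply, Gf]
    rw [if_neg hy1']
    field_simp
  · rw [show (2:ℝ) / (m * (m-1)) = Gf m 1 from (if_pos rfl).symm]
    exact tendsto_pure_nhds _ _

theorem continuousAt_psi (hm : 2 < m) : ContinuousAt (psi m) 1 := by
  have hq := q_pos hm
  have hmm : (0:ℝ) < m * (m - 1) := by nlinarith
  rw [ContinuousAt, show psi m 1 = -(4 * (m - 2)) / (3 * (m * (m - 1))) from if_pos rfl]
  rw [← nhdsNE_sup_pure (1 : ℝ), tendsto_sup]
  constructor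
  · have hIoi : Ioi (0:ℝ) ∈ 𝓝[≠] (1:ℝ) := nhdsWithin_le_nhds (Ioi_mem_nhds one_pos)
    -- limit of N/(y-1)^3 via l'Hopital
    have hNd : ∀ t : ℝ, 0 < t → HasDerivAt (fun s => (P1 m s) ^ 2 - 2 * P m s * P2 m s)
        (-2 * P m t * P3 m t) t := by
      intro t ht
      have h1 := (hasDerivAt_P1 (m := m) ht).pow 2
      have h2 := (((hasDerivAt_P (m := m) ht).const_mul 2).mul (hasDerivAt_P2 (m := m) ht))
      have h3 := h1.sub h2
      refine h3.congr_deriv (Eq.symm ?_)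
      push_cast
      ring
    have hNlim : Tendsto (fun y => ((P1 m y) ^ 2 - 2 * P m y * P2 m y) / (y - 1) ^ 3)
        (𝓝[≠] (1:ℝ)) (𝓝 (-(m ^ 2 * (m - 1) ^ 2 * (m - 2)) / 3)) := by
      apply HasDerivAt.lhopital_zero_nhdsNE
        (f' := fun t => -2 * P m t * P3 m t) (g' := fun t => 3 * (t - 1) ^ 2)
      · filter_upwards [hIoi] with t ht
        exact hNd t ht
      · apply Filter.Eventually.of_forall
        intro t
        have := ((hasDerivAt_id t).sub_const 1).fun_pow 3
        simpa using this
      · filter_upwards [self_mem_nhdsWithin] with t ht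
        have h1 : t - 1 ≠ 0 := sub_ne_zero.mpr ht
        positivity
      · have hc : ContinuousAt (fun s => (P1 m s) ^ 2 - 2 * P m s * P2 m s) 1 :=
          (hNd 1 one_pos).continuousAt
        have := hc.tendsto
        rw [show (P1 m 1) ^ 2 - 2 * P m 1 * P2 m 1 = 0 by rw [P1_one, P_one]; ring] at this
        exact this.mono_left nhdsWithin_le_nhds
      · have hc : Continuous fun y : ℝ => (y - 1) ^ 3 := by continuity
        have := hc.tendsto 1
        norm_num at this
        exact this.mono_left nhdsWithin_le_nhds
      · -- (-2*P*P3)/(3*(y-1)^2) → -2/3 * P3(1) * q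
        have hP3 : Tendsto (P3 m) (𝓝[≠] (1:ℝ)) (𝓝 (m * (m - 1) * (m - 2))) := by
          have := (hasDerivAt_P3 (m := m) one_pos).continuousAt.tendsto
          rw [P3_one] at this
          exact this.mono_left nhdsWithin_le_nhds
        have hmul := (hP3.const_mul (-2/3 : ℝ)).mul (tendsto_B hm)
        have hval : -2 / 3 * (m * (m - 1) * (m - 2)) * (m * (m - 1) / 2)
            = -(m ^ 2 * (m - 1) ^ 2 * (m - 2)) / 3 := by ring
        rw [hval] at hmul
        apply hmul.congr'
        filter_upwards [self_mem_nhdsWithin] with t ht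
        have h1 : t - 1 ≠ 0 := sub_ne_zero.mpr ht
        field_simp
    have hden : Tendsto (fun y => (P1 m y / (y - 1)) ^ 3) (𝓝[≠] (1:ℝ))
        (𝓝 ((m * (m - 1)) ^ 3)) := (tendsto_A hm).pow 3
    have hlim := (hNlim.const_mul 4).div hden (by positivity)
    have hval : 4 * (-(m ^ 2 * (m - 1) ^ 2 * (m - 2)) / 3) / (m * (m - 1)) ^ 3
        = -(4 * (m - 2)) / (3 * (m * (m - 1))) := by
      rw [div_eq_div_iff (by positivity) (by positivity)]
      ring
    rw [hval] at hlim
    apply hlim.congr'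
    filter_upwards [hIoi, self_mem_nhdsWithin] with y hy0 hy1
    have hsub : y - 1 ≠ 0 := sub_ne_zero.mpr hy1
    have hP1 : P1 m y ≠ 0 := P1_ne (show (1:ℝ) < m by linarith) hy0 hy1
    have hy1' : y ≠ 1 := hy1
    simp only [psi, Pi.div_apply]
    rw [if_neg hy1']
    field_simp
  · rw [show -(4 * (m - 2)) / (3 * (m * (m - 1))) = psi m 1 from (if_pos rfl).symm]
    exact tendsto_pure_nhds _ _

theorem hasDerivAt_N (hy : 0 < y) :
    HasDerivAt (fun s => (P1 m s) ^ 2 - 2 * P m s * P2 m s) (-2 * P m y * P3 m y) y := by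
  have h1 := (hasDerivAt_P1 (m := m) hy).pow 2
  have h2 := (((hasDerivAt_P (m := m) hy).const_mul 2).mul (hasDerivAt_P2 (m := m) hy))
  have h3 := h1.sub h2
  refine h3.congr_deriv (Eq.symm ?_)
  push_cast
  ring

end LemAux

open LemAux in
/-- Lemma 5.2: for `m > 2`, with `W(y) = y^m − my + m − 1`,
`γ_m = m^{1/(m−1)}` and `h(y) = sign(y−1)√(W(y))`, both `h` and `y ↦ 1/h'(y)²`
are convex on `(0, γ_m)`. -/
theorem h_and_inv_sq_deriv_convex
    (m : ℝ) (hm : 2 < m)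
    (W h : ℝ → ℝ)
    (hW : ∀ y : ℝ, 0 ≤ y → W y = y ^ m - m * y + m - 1)
    (hh : ∀ y ∈ Set.Ioo (0 : ℝ) (m ^ (1 / (m - 1))),
      h y = Real.sign (y - 1) * Real.sqrt (W y))
    (hh1 : h 1 = 0) :
    ConvexOn ℝ (Set.Ioo (0 : ℝ) (m ^ (1 / (m - 1)))) h ∧
    ConvexOn ℝ (Set.Ioo (0 : ℝ) (m ^ (1 / (m - 1)))) (fun y => 1 / (deriv h y) ^ 2) := by
  have hm1 : (1:ℝ) < m := by linarith
  set γ : ℝ := m ^ (1 / (m - 1)) with hγdef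
  have hγ : 1 < γ := (Real.one_lt_rpow_iff_of_pos (show (0:ℝ) < m by linarith)).mpr
    (Or.inl ⟨hm1, div_pos one_pos (by linarith)⟩)
  have h1S : (1:ℝ) ∈ Set.Ioo (0:ℝ) γ := ⟨one_pos, hγ⟩
  have hSopen : IsOpen (Set.Ioo (0:ℝ) γ) := isOpen_Ioo
  have hWP : ∀ y ∈ Set.Ioo (0:ℝ) γ, W y = P m y := fun y hy => hW y hy.1.le
  -- derivative of h away from 1
  have hd_ne : ∀ y ∈ Set.Ioo (0:ℝ) γ, y ≠ 1 → HasDerivAt h (phi m y) y := by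
    intro y hyS hne
    have hy0 : 0 < y := hyS.1
    have hP := P_pos hm1 hy0.le hne
    have hsd : HasDerivAt (fun t => Real.sqrt (P m t)) (P1 m y / (2 * Real.sqrt (P m y))) y :=
      (hasDerivAt_P hy0).sqrt hP.ne'
    rcases hne.lt_or_gt with hlt | hgt
    · have hmem : y ∈ Set.Ioo (0:ℝ) 1 := ⟨hy0, hlt⟩
      have hsub : Set.Ioo (0:ℝ) 1 ⊆ Set.Ioo (0:ℝ) γ := Set.Ioo_subset_Ioo_right hγ.le
      have hev : h =ᶠ[nhds y] fun t => -Real.sqrt (P m t) := by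
        filter_upwards [isOpen_Ioo.mem_nhds hmem] with t ht
        rw [hh t (hsub ht), hWP t (hsub ht),
          Real.sign_of_neg (show t - 1 < 0 by linarith [ht.2])]
        ring
      have hval : phi m y = -(P1 m y / (2 * Real.sqrt (P m y))) := by
        rw [show phi m y = Real.sign (y-1) * P1 m y / (2 * Real.sqrt (P m y)) from if_neg hne,
          Real.sign_of_neg (show y - 1 < 0 by linarith)]
        ring
      rw [hval]
      exact (hsd.neg).congr_of_eventuallyEq hev
    · have hmem : y ∈ Set.Ioo (1:ℝ) γ := ⟨hgt, hyS.2⟩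
      have hsub : Set.Ioo (1:ℝ) γ ⊆ Set.Ioo (0:ℝ) γ := Set.Ioo_subset_Ioo_left one_pos.le
      have hev : h =ᶠ[nhds y] fun t => Real.sqrt (P m t) := by
        filter_upwards [isOpen_Ioo.mem_nhds hmem] with t ht
        rw [hh t (hsub ht), hWP t (hsub ht),
          Real.sign_of_pos (show 0 < t - 1 by linarith [ht.1])]
        ring
      have hval : phi m y = P1 m y / (2 * Real.sqrt (P m y)) := by
        rw [show phi m y = Real.sign (y-1) * P1 m y / (2 * Real.sqrt (P m y)) from if_neg hne,
          Real.sign_of_pos (show 0 < y - 1 by linarith)]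
        ring
      rw [hval]
      exact hsd.congr_of_eventuallyEq hev
  have hcont_h : ContinuousAt h 1 := by
    rw [ContinuousAt, hh1]
    have hsq : Filter.Tendsto (fun t => Real.sqrt (P m t)) (nhds 1) (nhds 0) := by
      have hc : ContinuousAt (fun t => Real.sqrt (P m t)) 1 :=
        ((hasDerivAt_P (m := m) one_pos).continuousAt).sqrt
      have := hc.tendsto
      rwa [P_one, Real.sqrt_zero] at this
    apply squeeze_zero_norm' ?_ hsq
    filter_upwards [hSopen.mem_nhds h1S] with t ht
    rw [hh t ht, hWP t ht, Real.norm_eq_abs, abs_mul,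
      abs_of_nonneg (Real.sqrt_nonneg _)]
    have hb : |Real.sign (t - 1)| ≤ 1 := by
      rcases lt_trichotomy (t - 1) 0 with hc | hc | hc
      · rw [Real.sign_of_neg hc]; norm_num
      · rw [hc, Real.sign_zero]; norm_num
      · rw [Real.sign_of_pos hc]; norm_num
    calc |Real.sign (t-1)| * Real.sqrt (P m t) ≤ 1 * Real.sqrt (P m t) :=
        mul_le_mul_of_nonneg_right hb (Real.sqrt_nonneg _)
      _ = Real.sqrt (P m t) := one_mul _
  have hd : ∀ y ∈ Set.Ioo (0:ℝ) γ, HasDerivAt h (phi m y) y := by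
    intro y hyS
    rcases eq_or_ne y 1 with rfl | hne
    · exact hasDerivAt_of_mem_of_ne (hSopen.mem_nhds h1S) hd_ne hcont_h (continuousAt_phi hm)
    · exact hd_ne y hyS hne
  -- derivative of phi away from 1
  have hφd : ∀ y ∈ Set.Ioo (0:ℝ) γ, y ≠ 1 → HasDerivAt (phi m)
      (Real.sign (y - 1) * (m * D2 m y) / (4 * Real.sqrt (P m y) ^ 3)) y := by
    intro y hyS hne
    have hy0 : 0 < y := hyS.1
    have hP := P_pos hm1 hy0.le hne
    have hs : 0 < Real.sqrt (P m y) := Real.sqrt_pos.mpr hP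
    have hs2 : Real.sqrt (P m y) ^ 2 = P m y := Real.sq_sqrt hP.le
    have key := id_D2 (m := m) (y := y) hy0
    have hnum := hasDerivAt_P1 (m := m) hy0
    have hden : HasDerivAt (fun t => 2 * Real.sqrt (P m t))
        (2 * (P1 m y / (2 * Real.sqrt (P m y)))) y :=
      ((hasDerivAt_P hy0).sqrt hP.ne').const_mul 2
    have hdiv := hnum.div hden (by positivity)
    rcases hne.lt_or_gt with hlt | hgt
    · have hev : phi m =ᶠ[nhds y] (fun t => -(P1 m t / (2 * Real.sqrt (P m t)))) := by
        filter_upwards [isOpen_Ioo.mem_nhds (⟨hy0, hlt⟩ : y ∈ Set.Ioo (0:ℝ) 1)] with t ht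
        have ht1 : t ≠ 1 := ne_of_lt ht.2
        rw [show phi m t = Real.sign (t-1) * P1 m t / (2 * Real.sqrt (P m t)) from if_neg ht1,
          Real.sign_of_neg (show t - 1 < 0 by linarith [ht.2])]
        ring
      have hD := (hdiv.neg).congr_of_eventuallyEq hev
      refine hD.congr_deriv (Eq.symm ?_)
      rw [Real.sign_of_neg (show y - 1 < 0 by linarith)]
      field_simp
      linear_combination (4:ℝ) * key + ((8:ℝ) * P2 m y) * hs2
    · have hev : phi m =ᶠ[nhds y] (fun t => P1 m t / (2 * Real.sqrt (P m t))) := by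
        filter_upwards [isOpen_Ioo.mem_nhds (⟨hgt, hyS.2⟩ : y ∈ Set.Ioo (1:ℝ) γ)] with t ht
        have ht1 : t ≠ 1 := ne_of_gt ht.1
        rw [show phi m t = Real.sign (t-1) * P1 m t / (2 * Real.sqrt (P m t)) from if_neg ht1,
          Real.sign_of_pos (show 0 < t - 1 by linarith [ht.1])]
        ring
      have hD := hdiv.congr_of_eventuallyEq hev
      refine hD.congr_deriv (Eq.symm ?_)
      rw [Real.sign_of_pos (show 0 < y - 1 by linarith)]
      field_simp
      linear_combination (-(4:ℝ)) * key + (-(8:ℝ) * P2 m y) * hs2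
  have hφnonneg : ∀ y ∈ Set.Ioo (0:ℝ) γ, y ≠ 1 →
      0 ≤ Real.sign (y - 1) * (m * D2 m y) / (4 * Real.sqrt (P m y) ^ 3) := by
    intro y hyS hne
    have hy0 : 0 < y := hyS.1
    have hP := P_pos hm1 hy0.le hne
    have hs : 0 < Real.sqrt (P m y) := Real.sqrt_pos.mpr hP
    apply div_nonneg _ (by positivity)
    rcases hne.lt_or_gt with hlt | hgt
    · rw [Real.sign_of_neg (show y - 1 < 0 by linarith)]
      have hD2 := D2_nonpos hm hy0 hlt.le
      nlinarith
    · rw [Real.sign_of_pos (show 0 < y - 1 by linarith)]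
      have hD2 := D2_nonneg hm hgt.le
      nlinarith
  have hφcont : ∀ y ∈ Set.Ioo (0:ℝ) γ, ContinuousAt (phi m) y := by
    intro y hyS
    rcases eq_or_ne y 1 with rfl | hne
    · exact continuousAt_phi hm
    · exact (hφd y hyS hne).continuousAt
  have mono_right : MonotoneOn (phi m) (Set.Ico 1 γ) := by
    apply monotoneOn_of_deriv_nonneg (convex_Ico 1 γ)
    · intro t ht
      exact (hφcont t ⟨lt_of_lt_of_le one_pos ht.1, ht.2⟩).continuousWithinAt
    · rw [interior_Ico]
      intro t ht
      exact (hφd t ⟨lt_trans one_pos ht.1, ht.2⟩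
        (ne_of_gt ht.1)).differentiableAt.differentiableWithinAt
    · rw [interior_Ico]
      intro t ht
      have hS : t ∈ Set.Ioo (0:ℝ) γ := ⟨lt_trans one_pos ht.1, ht.2⟩
      rw [(hφd t hS (ne_of_gt ht.1)).deriv]
      exact hφnonneg t hS (ne_of_gt ht.1)
  have mono_left : MonotoneOn (phi m) (Set.Ioc 0 1) := by
    apply monotoneOn_of_deriv_nonneg (convex_Ioc 0 1)
    · intro t ht
      exact (hφcont t ⟨ht.1, lt_of_le_of_lt ht.2 hγ⟩).continuousWithinAt
    · rw [interior_Ioc]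
      intro t ht
      exact (hφd t ⟨ht.1, lt_trans ht.2 hγ⟩
        (ne_of_lt ht.2)).differentiableAt.differentiableWithinAt
    · rw [interior_Ioc]
      intro t ht
      have hS : t ∈ Set.Ioo (0:ℝ) γ := ⟨ht.1, lt_trans ht.2 hγ⟩
      rw [(hφd t hS (ne_of_lt ht.2)).deriv]
      exact hφnonneg t hS (ne_of_lt ht.2)
  have mono_phi : MonotoneOn (phi m) (Set.Ioo (0:ℝ) γ) := by
    intro x hx y hy hxy
    rcases le_total y 1 with hy1 | hy1
    · exact mono_left ⟨hx.1, le_trans hxy hy1⟩ ⟨hy.1, hy1⟩ hxy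
    · rcases le_total x 1 with hx1 | hx1
      · calc phi m x ≤ phi m 1 := mono_left ⟨hx.1, hx1⟩ ⟨one_pos, le_refl 1⟩ hx1
          _ ≤ phi m y := mono_right ⟨le_refl 1, hγ⟩ ⟨hy1, hy.2⟩ hy1
      · exact mono_right ⟨hx1, hx.2⟩ ⟨hy1, hy.2⟩ hxy
  have derivh : ∀ y ∈ Set.Ioo (0:ℝ) γ, deriv h y = phi m y := fun y hy => (hd y hy).deriv
  have conv_h : ConvexOn ℝ (Set.Ioo (0:ℝ) γ) h := by
    have hmono : MonotoneOn (deriv h) (interior (Set.Ioo (0:ℝ) γ)) := by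
      rw [interior_Ioo]
      intro x hx y hy hxy
      rw [derivh x hx, derivh y hy]
      exact mono_phi hx hy hxy
    exact hmono.convexOn_of_deriv (convex_Ioo 0 γ)
      (fun y hy => (hd y hy).continuousAt.continuousWithinAt)
      (by rw [interior_Ioo]
          exact fun y hy => (hd y hy).differentiableAt.differentiableWithinAt)
  -- Part 2
  have hGf_eq : ∀ y ∈ Set.Ioo (0:ℝ) γ, 1 / (deriv h y) ^ 2 = Gf m y := by
    intro y hy
    rw [derivh y hy]
    rcases eq_or_ne y 1 with rfl | hne
    · rw [show phi m 1 = cst m from if_pos rfl, show Gf m 1 = 2/(m*(m-1)) from if_pos rfl]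
      rw [show cst m = Real.sqrt (m * (m-1)/2) from rfl, Real.sq_sqrt (q_pos hm).le, one_div_div]
    · have hy0 : 0 < y := hy.1
      have hP := P_pos hm1 hy0.le hne
      have hP1 : P1 m y ≠ 0 := P1_ne hm1 hy0 hne
      have hs2 : Real.sqrt (P m y) ^ 2 = P m y := Real.sq_sqrt hP.le
      have hspos : 0 < Real.sqrt (P m y) := Real.sqrt_pos.mpr hP
      rw [show phi m y = Real.sign (y-1) * P1 m y / (2 * Real.sqrt (P m y)) from if_neg hne,
        show Gf m y = 4 * P m y / (P1 m y)^2 from if_neg hne]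
      have hsgn : Real.sign (y-1) ^ 2 = 1 := by
        rcases hne.lt_or_gt with hc | hc
        · rw [Real.sign_of_neg (show y - 1 < 0 by linarith)]; norm_num
        · rw [Real.sign_of_pos (show 0 < y - 1 by linarith)]; norm_num
      rw [div_pow, mul_pow, hsgn, one_mul, mul_pow, hs2, one_div_div]
      norm_num
  have hGd_ne : ∀ y ∈ Set.Ioo (0:ℝ) γ, y ≠ 1 → HasDerivAt (Gf m) (psi m y) y := by
    intro y hyS hne
    have hy0 : 0 < y := hyS.1
    have hP1 : P1 m y ≠ 0 := P1_ne hm1 hy0 hne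
    have hnum : HasDerivAt (fun t => 4 * P m t) (4 * P1 m y) y := (hasDerivAt_P hy0).const_mul 4
    have hden := (hasDerivAt_P1 (m := m) hy0).fun_pow 2
    have hdiv := hnum.div hden (pow_ne_zero 2 hP1)
    have hev : Gf m =ᶠ[nhds y] (fun t => 4 * P m t / (P1 m t)^2) := by
      filter_upwards [isOpen_ne.mem_nhds hne] with t ht
      exact if_neg ht
    have hD := hdiv.congr_of_eventuallyEq hev
    refine hD.congr_deriv (Eq.symm ?_)
    rw [show psi m y = 4 * ((P1 m y)^2 - 2 * P m y * P2 m y)/(P1 m y)^3 from if_neg hne]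
    field_simp
    ring
  have hψd : ∀ y ∈ Set.Ioo (0:ℝ) γ, y ≠ 1 → HasDerivAt (psi m)
      (4 * (m^2 * (m-1) * y ^ (m-3) * F2 m y) / (P1 m y)^4) y := by
    intro y hyS hne
    have hy0 : 0 < y := hyS.1
    have hP1 : P1 m y ≠ 0 := P1_ne hm1 hy0 hne
    have key := id_E (m := m) (y := y) hy0
    have hnum : HasDerivAt (fun t => 4 * ((P1 m t)^2 - 2 * P m t * P2 m t))
        (4 * (-2 * P m y * P3 m y)) y := (hasDerivAt_N hy0).const_mul 4
    have hden := (hasDerivAt_P1 (m := m) hy0).fun_pow 3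
    have hdiv := hnum.div hden (pow_ne_zero 3 hP1)
    have hev : psi m =ᶠ[nhds y] (fun t => 4 * ((P1 m t)^2 - 2 * P m t * P2 m t)/(P1 m t)^3) := by
      filter_upwards [isOpen_ne.mem_nhds hne] with t ht
      exact if_neg ht
    have hD := hdiv.congr_of_eventuallyEq hev
    refine hD.congr_deriv (Eq.symm ?_)
    field_simp
    linear_combination (-(1:ℝ) * P1 m y ^ 2) * key
  have hψnonneg : ∀ y ∈ Set.Ioo (0:ℝ) γ, y ≠ 1 →
      0 ≤ 4 * (m^2 * (m-1) * y ^ (m-3) * F2 m y) / (P1 m y)^4 := by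
    intro y hyS hne
    have hy0 : 0 < y := hyS.1
    have h2 : 0 < y ^ (m-3) := Real.rpow_pos_of_pos hy0 _
    have h3 := F2_nonneg hm hy0
    have h4 : (0:ℝ) < m^2 * (m-1) := by nlinarith
    apply div_nonneg _ (by positivity)
    positivity
  have hψcont : ∀ y ∈ Set.Ioo (0:ℝ) γ, ContinuousAt (psi m) y := by
    intro y hyS
    rcases eq_or_ne y 1 with rfl | hne
    · exact continuousAt_psi hm
    · exact (hψd y hyS hne).continuousAt
  have monoG_right : MonotoneOn (psi m) (Set.Ico 1 γ) := by
    apply monotoneOn_of_deriv_nonneg (convex_Ico 1 γ)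
    · intro t ht
      exact (hψcont t ⟨lt_of_lt_of_le one_pos ht.1, ht.2⟩).continuousWithinAt
    · rw [interior_Ico]
      intro t ht
      exact (hψd t ⟨lt_trans one_pos ht.1, ht.2⟩
        (ne_of_gt ht.1)).differentiableAt.differentiableWithinAt
    · rw [interior_Ico]
      intro t ht
      have hS : t ∈ Set.Ioo (0:ℝ) γ := ⟨lt_trans one_pos ht.1, ht.2⟩
      rw [(hψd t hS (ne_of_gt ht.1)).deriv]
      exact hψnonneg t hS (ne_of_gt ht.1)
  have monoG_left : MonotoneOn (psi m) (Set.Ioc 0 1) := by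
    apply monotoneOn_of_deriv_nonneg (convex_Ioc 0 1)
    · intro t ht
      exact (hψcont t ⟨ht.1, lt_of_le_of_lt ht.2 hγ⟩).continuousWithinAt
    · rw [interior_Ioc]
      intro t ht
      exact (hψd t ⟨ht.1, lt_trans ht.2 hγ⟩
        (ne_of_lt ht.2)).differentiableAt.differentiableWithinAt
    · rw [interior_Ioc]
      intro t ht
      have hS : t ∈ Set.Ioo (0:ℝ) γ := ⟨ht.1, lt_trans ht.2 hγ⟩
      rw [(hψd t hS (ne_of_lt ht.2)).deriv]
      exact hψnonneg t hS (ne_of_lt ht.2)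
  have mono_psi : MonotoneOn (psi m) (Set.Ioo (0:ℝ) γ) := by
    intro x hx y hy hxy
    rcases le_total y 1 with hy1 | hy1
    · exact monoG_left ⟨hx.1, le_trans hxy hy1⟩ ⟨hy.1, hy1⟩ hxy
    · rcases le_total x 1 with hx1 | hx1
      · calc psi m x ≤ psi m 1 := monoG_left ⟨hx.1, hx1⟩ ⟨one_pos, le_refl 1⟩ hx1
          _ ≤ psi m y := monoG_right ⟨le_refl 1, hγ⟩ ⟨hy1, hy.2⟩ hy1
      · exact monoG_right ⟨hx1, hx.2⟩ ⟨hy1, hy.2⟩ hxy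
  have hGd : ∀ y ∈ Set.Ioo (0:ℝ) γ, HasDerivAt (Gf m) (psi m y) y := by
    intro y hyS
    rcases eq_or_ne y 1 with rfl | hne
    · exact hasDerivAt_of_mem_of_ne (hSopen.mem_nhds h1S) hGd_ne (continuousAt_Gf hm)
        (continuousAt_psi hm)
    · exact hGd_ne y hyS hne
  have conv_G : ConvexOn ℝ (Set.Ioo (0:ℝ) γ) (Gf m) := by
    have hmono : MonotoneOn (deriv (Gf m)) (interior (Set.Ioo (0:ℝ) γ)) := by
      rw [interior_Ioo]
      intro x hx y hy hxy
      rw [(hGd x hx).deriv, (hGd y hy).deriv]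
      exact mono_psi hx hy hxy
    exact hmono.convexOn_of_deriv (convex_Ioo 0 γ)
      (fun y hy => (hGd y hy).continuousAt.continuousWithinAt)
      (by rw [interior_Ioo]
          exact fun y hy => (hGd y hy).differentiableAt.differentiableWithinAt)
  refine ⟨conv_h, ⟨convex_Ioo 0 γ, ?_⟩⟩
  intro x hx y hy a b ha hb hab
  have hxy : a • x + b • y ∈ Set.Ioo (0:ℝ) γ := (convex_Ioo 0 γ) hx hy ha hb hab
  have e1 := hGf_eq _ hxy
  have e2 := hGf_eq _ hx
  have e3 := hGf_eq _ hy
  dsimp only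
  rw [e1, e2, e3]
  exact conv_G.2 hx hy ha hb hab
end

section
/- Let m > 2 and γ_m = m^{1/(m−1)}, and define F(y) = −m² + 2m(m−1)²·y^{m−2} − 2m²(m−2)·y^{m−1} + m(m−2)·y^{2m−2}. Then F(y) ≥ 0 for all y ∈ [1, γ_m] and F(y) ≤ 0 for all y ∈ [0, 1]. Moreover, with W(y) = y^m − m·y + m − 1, the expression 2·W(y)·W''(y) − W'(y)² equals F(y) for all y > 0. -/
open Set Real

/-- for `m > 2`, `γ_m = m^{1/(m−1)}` and
`F(y) = −m² + 2m(m−1)² y^{m−2} − 2m²(m−2) y^{m−1} + m(m−2) y^{2m−2}`,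
one has `F ≥ 0` on `[1, γ_m]`, `F ≤ 0` on `[0, 1]`, and
`2 W W'' − (W')² = F` on `(0,∞)` where `W(y) = y^m − my + m − 1`. -/
theorem F_sign_and_identity
    (m : ℝ) (hm : 2 < m)
    (W F : ℝ → ℝ)
    (hW : ∀ y : ℝ, 0 ≤ y → W y = y ^ m - m * y + m - 1)
    (hF : ∀ y : ℝ, 0 ≤ y →
      F y = -m ^ 2 + 2 * m * (m - 1) ^ 2 * y ^ (m - 2)
        - 2 * m ^ 2 * (m - 2) * y ^ (m - 1) + m * (m - 2) * y ^ (2 * m - 2)) :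
    (∀ y ∈ Set.Icc (1 : ℝ) (m ^ (1 / (m - 1))), 0 ≤ F y) ∧
    (∀ y ∈ Set.Icc (0 : ℝ) 1, F y ≤ 0) ∧
    (∀ y : ℝ, 0 < y → 2 * W y * deriv (deriv W) y - (deriv W y) ^ 2 = F y) := by
  have hm0 : (0:ℝ) < m := by linarith
  set h : ℝ → ℝ := fun y => (m-2)*y^m - 2*m*(m-2)*y + 2*(m-1)^2 - m*y^(2-m) with hh
  -- derivative of h
  have hderiv : ∀ y : ℝ, 0 < y →
      HasDerivAt h (m*(m-2)*(y^(m-1) + y^(1-m) - 2)) y := by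
    intro y hy
    have h1 : HasDerivAt (fun x:ℝ => x ^ m) (m * y^(m-1)) y :=
      Real.hasDerivAt_rpow_const (Or.inl hy.ne')
    have h2 : HasDerivAt (fun x:ℝ => x ^ (2-m)) ((2-m) * y^(2-m-1)) y :=
      Real.hasDerivAt_rpow_const (Or.inl hy.ne')
    have e : (2:ℝ)-m-1 = 1-m := by ring
    rw [e] at h2
    have := (((h1.const_mul (m-2)).sub ((hasDerivAt_id y).const_mul (2*m*(m-2)))).add_const
      (2*(m-1)^2)).sub (h2.const_mul m)
    refine this.congr_deriv ?_
    ring_nf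
  -- monotonicity of h on (0, ∞)
  have hmono : MonotoneOn h (Ioi (0:ℝ)) := by
    apply monotoneOn_of_deriv_nonneg (convex_Ioi 0)
    · exact fun y hy => ((hderiv y hy).continuousAt).continuousWithinAt
    · intro y hy
      rw [interior_Ioi] at hy
      exact ((hderiv y hy).differentiableAt).differentiableWithinAt
    · intro y hy
      rw [interior_Ioi] at hy
      rw [(hderiv y hy).deriv]
      have ht : (0:ℝ) < y^(m-1) := Real.rpow_pos_of_pos hy _
      have hinv : y^(1-m) = (y^(m-1))⁻¹ := by
        rw [show (1:ℝ)-m = -(m-1) by ring, Real.rpow_neg hy.le]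
      have key : y^(m-1) + y^(1-m) - 2 = (y^(m-1)-1)^2 / (y^(m-1)) := by
        rw [hinv]; field_simp; ring
      have : 0 ≤ y^(m-1) + y^(1-m) - 2 := by rw [key]; positivity
      have hmm : 0 ≤ m*(m-2) := by nlinarith
      nlinarith
  have h1eq : h 1 = 0 := by
    simp only [hh, Real.one_rpow]
    ring
  -- factoring of F
  have hfact : ∀ y : ℝ, 0 < y → F y = m * y^(m-2) * h y := by
    intro y hy
    have hadd : ∀ p q : ℝ, y ^ (p+q) = y^p * y^q := fun p q => Real.rpow_add hy p q
    have e1 : y ^ (m-1) = y ^ (m-2) * y := by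
      rw [show m-1 = (m-2)+1 by ring, hadd, Real.rpow_one]
    have e2 : y ^ m = y ^ (m-2) * y * y := by
      rw [show m = (m-2)+1+1 by ring, hadd, hadd, Real.rpow_one]; ring
    have e3 : y ^ (2*m-2) = y^(m-2) * y^(m-2) * y * y := by
      rw [show 2*m-2 = ((m-2)+(m-2))+1+1 by ring, hadd, hadd, hadd, Real.rpow_one]
    have e4 : y ^ (2-m) * y ^ (m-2) = 1 := by
      rw [← Real.rpow_add hy, show (2-m)+(m-2) = 0 by ring, Real.rpow_zero]
    rw [hF y hy.le, hh]
    simp only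
    rw [e1, e2, e3]
    linear_combination (m^2 : ℝ) * e4
  refine ⟨?_, ?_, ?_⟩
  · intro y hy
    have hy1 : (1:ℝ) ≤ y := hy.1
    have hy0 : (0:ℝ) < y := by linarith
    have hhy : 0 ≤ h y := by
      rw [← h1eq]
      exact hmono (by norm_num) hy0 hy1
    rw [hfact y hy0]
    have : (0:ℝ) ≤ y^(m-2) := Real.rpow_nonneg hy0.le _
    exact mul_nonneg (mul_nonneg hm0.le this) hhy
  · intro y hy
    rcases eq_or_lt_of_le hy.1 with h0 | h0
    · rw [hF y hy.1, ← h0]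
      rw [Real.zero_rpow (by linarith : m-2 ≠ 0), Real.zero_rpow (by linarith : m-1 ≠ 0),
        Real.zero_rpow (by nlinarith : 2*m-2 ≠ 0)]
      nlinarith
    · have hhy : h y ≤ 0 := by
        rw [← h1eq]
        exact hmono h0 (by norm_num) hy.2
      rw [hfact y h0]
      have : (0:ℝ) ≤ y^(m-2) := Real.rpow_nonneg h0.le _
      nlinarith [mul_nonneg (mul_nonneg hm0.le this) (neg_nonneg.mpr hhy)]
  · intro y hy
    -- first derivative of W on (0,∞)
    have hg : ∀ z:ℝ, 0 < z →
        HasDerivAt (fun x:ℝ => x ^ m - m*x + m - 1) (m*z^(m-1) - m) z := by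
      intro z hz
      have h1 : HasDerivAt (fun x:ℝ => x ^ m) (m * z^(m-1)) z :=
        Real.hasDerivAt_rpow_const (Or.inl hz.ne')
      have := (((h1.sub ((hasDerivAt_id z).const_mul m)).add_const m).sub_const 1)
      refine this.congr_deriv ?_
      ring
    have hWd : ∀ z:ℝ, 0 < z → deriv W z = m * z^(m-1) - m := by
      intro z hz
      have hWeq : W =ᶠ[nhds z] fun x => x^m - m*x + m - 1 := by
        filter_upwards [Ioi_mem_nhds hz] with x hx using hW x (le_of_lt hx)
      rw [hWeq.deriv_eq, (hg z hz).deriv]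
    -- second derivative
    have hWd2 : deriv (deriv W) y = m * ((m-1) * y^(m-2)) := by
      have hWeq : deriv W =ᶠ[nhds y] fun z => m * z^(m-1) - m := by
        filter_upwards [Ioi_mem_nhds hy] with z hz using hWd z hz
      rw [hWeq.deriv_eq]
      have h1 : HasDerivAt (fun z:ℝ => z ^ (m-1)) ((m-1) * y^(m-1-1)) y :=
        Real.hasDerivAt_rpow_const (Or.inl hy.ne')
      rw [show m-1-1 = m-2 by ring] at h1
      exact ((h1.const_mul m).sub_const m).deriv
    rw [hWd y hy, hWd2, hW y hy.le, hF y hy.le]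
    have hadd : ∀ p q : ℝ, y ^ (p+q) = y^p * y^q := fun p q => Real.rpow_add hy p q
    have e1 : y ^ (m-1) = y ^ (m-2) * y := by
      rw [show m-1 = (m-2)+1 by ring, hadd, Real.rpow_one]
    have e2 : y ^ m = y ^ (m-2) * y * y := by
      rw [show m = (m-2)+1+1 by ring, hadd, hadd, Real.rpow_one]; ring
    have e3 : y ^ (2*m-2) = y^(m-2) * y^(m-2) * y * y := by
      rw [show 2*m-2 = ((m-2)+(m-2))+1+1 by ring, hadd, hadd, hadd, Real.rpow_one]
    rw [e1, e2, e3]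
    ring
end
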